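/- arXiv:math/0701890 — 5 statements merged into one kernel-verified Lean document; each statement's English description precedes it below -/
import Mathlib

section
/- Let N ≥ 1 with N ≡ 1 (mod 3), and let K > F_{N+1}, where F denotes the Fibonacci numbers with F_0 = F_1 = 1. Then for every pair of sets C, D of vertices, the alternating number Z_𝓟(K,N;C,D) of independent sets of the parallelogram 𝓟(K,N) whose intersection with the top row equals C and whose intersection with the bottom row equals D is zero. -/
/-- Two vertices of the grid `ℤ²` are adjacent iff they are at distance 1. -/
def GridAdj (p q : ℤ × ℤ) : Prop := |p.1 - q.1| + |p.2 - q.2| = 1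

instance : DecidableRel GridAdj := fun p q => by unfold GridAdj; infer_instance

/-- The parallelogram `𝓟(K,N)`: points `(x,y)` with `0 ≤ y ≤ K-1` and
`-y ≤ x ≤ -y+N-1` (cut out of a bounding box that contains all such points). -/
noncomputable def paralP (K N : ℕ) : Finset (ℤ × ℤ) :=
  ((Finset.Icc (-(K + N : ℤ)) (K + N)) ×ˢ (Finset.Icc (-(K + N : ℤ)) (K + N))).filter
    (fun p => 0 ≤ p.2 ∧ p.2 ≤ K - 1 ∧ -p.2 ≤ p.1 ∧ p.1 ≤ -p.2 + N - 1)

/-- The Fibonacci numbers with the convention `F 0 = F 1 = 1`. -/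
def F (n : ℕ) : ℕ := Nat.fib (n + 1)

/-- The alternating number `Z_𝓟(K,N;C,D)` of independent sets of `𝓟(K,N)` whose
intersection with the top row `y = K-1` is `C` and whose intersection with the
bottom row `y = 0` is `D`. -/
noncomputable def altZBorderP (K N : ℕ) (C D : Finset (ℤ × ℤ)) : ℤ :=
  ∑ I ∈ (paralP K N).powerset.filter
      (fun I => (∀ p ∈ I, ∀ q ∈ I, ¬ GridAdj p q)
        ∧ I.filter (fun p => p.2 = (K : ℤ) - 1) = C
        ∧ I.filter (fun p => p.2 = 0) = D),
    (-1 : ℤ) ^ I.card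

open Finset

section Aux
variable {α : Type*} [DecidableEq α]

variable {α : Type*} [DecidableEq α]

/-- Sum over subsets of a disjoint union splits into a double sum. -/
lemma sum_powerset_union_disj {A B : Finset α} (h : Disjoint A B) (f : Finset α → ℤ) :
    ∑ I ∈ (A ∪ B).powerset, f I
      = ∑ J ∈ A.powerset, ∑ L ∈ B.powerset, f (J ∪ L) := by
  have key : ∀ I ∈ (A ∪ B).powerset, (I ∩ A) ∪ (I ∩ B) = I := by
    intro I hI
    simp only [Finset.mem_powerset] at hI
    rw [← Finset.inter_union_distrib_left]
    exact Finset.inter_eq_left.mpr hI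
  rw [← Finset.sum_product']
  apply Finset.sum_nbij' (fun I => (I ∩ A, I ∩ B)) (fun p => p.1 ∪ p.2)
  · intro I hI
    simp only [Finset.mem_product, Finset.mem_powerset]
    exact ⟨inter_subset_right, inter_subset_right⟩
  · intro p hp
    simp only [Finset.mem_product, Finset.mem_powerset] at *
    exact Finset.union_subset_union hp.1 hp.2
  · exact key
  · intro p hp
    simp only [Finset.mem_product, Finset.mem_powerset] at hp
    have h1 : (p.1 ∪ p.2) ∩ A = p.1 := by
      ext a
      simp only [Finset.mem_inter, Finset.mem_union]
      constructor
      · rintro ⟨h1 | h1, h2⟩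
        · exact h1
        · exact absurd h2 (Finset.disjoint_right.mp h (hp.2 h1))
      · intro ha; exact ⟨Or.inl ha, hp.1 ha⟩
    have h2 : (p.1 ∪ p.2) ∩ B = p.2 := by
      ext a
      simp only [Finset.mem_inter, Finset.mem_union]
      constructor
      · rintro ⟨h1 | h1, h2⟩
        · exact absurd h2 (Finset.disjoint_left.mp h (hp.1 h1))
        · exact h1
      · intro ha; exact ⟨Or.inr ha, hp.2 ha⟩
    simp [h1, h2]
  · intro I hI
    rw [key I hI]

/-- Sum over subsets of an image under an injective map. -/
lemma sum_powerset_image_inj {β : Type*} [DecidableEq β] {A : Finset α} {g : α → β}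
    (hg : Function.Injective g) (f : Finset β → ℤ) :
    ∑ I ∈ (A.image g).powerset, f I = ∑ S ∈ A.powerset, f (S.image g) := by
  have key : ∀ I ∈ (A.image g).powerset, (A.filter (fun a => g a ∈ I)).image g = I := by
    intro I hI
    simp only [Finset.mem_powerset] at hI
    ext b
    simp only [Finset.mem_image, Finset.mem_filter]
    constructor
    · rintro ⟨a, ⟨_, hga⟩, rfl⟩; exact hga
    · intro hb
      obtain ⟨a, ha, rfl⟩ := Finset.mem_image.mp (hI hb)
      exact ⟨a, ⟨ha, hb⟩, rfl⟩
  apply Finset.sum_nbij' (fun I => A.filter (fun a => g a ∈ I)) (fun S => S.image g)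
  · intro I hI
    simp only [Finset.mem_powerset]
    exact Finset.filter_subset _ _
  · intro S hS
    simp only [Finset.mem_powerset] at *
    exact Finset.image_subset_image hS
  · exact key
  · intro S hS
    simp only [Finset.mem_powerset] at hS
    ext a
    simp only [Finset.mem_filter, Finset.mem_image]
    constructor
    · rintro ⟨ha, b, hb, hba⟩; rwa [← hg hba]
    · intro ha; exact ⟨hS ha, a, ha, rfl⟩
  · intro I hI
    rw [key I hI]

end Aux

namespace AltZ

noncomputable def boxI (K : ℕ) : Finset ℤ := Finset.Icc 0 ((K : ℤ) - 1)

/-- Shift a finite set of integers up by one. -/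
def shiftS (S : Finset ℤ) : Finset ℤ := S.image (· + 1)

@[simp] lemma mem_shiftS {S : Finset ℤ} {i : ℤ} : i ∈ shiftS S ↔ i - 1 ∈ S := by
  simp only [shiftS, Finset.mem_image]
  constructor
  · rintro ⟨a, ha, rfl⟩; simpa using ha
  · intro h; exact ⟨i - 1, h, by ring⟩

/-- Compatibility of consecutive columns: a cell at height `i` in the right column
forbids cells at heights `i` and `i-1` in the left column. -/
def Compat (S S' : Finset ℤ) : Prop := ∀ i ∈ S', i ∉ S ∧ i - 1 ∉ S

instance (S S' : Finset ℤ) : Decidable (Compat S S') := by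
  unfold Compat; infer_instance

lemma compat_union {S A B : Finset ℤ} :
    Compat S (A ∪ B) ↔ Compat S A ∧ Compat S B := by
  unfold Compat
  constructor
  · intro h
    exact ⟨fun i hi => h i (Finset.mem_union_left _ hi),
           fun i hi => h i (Finset.mem_union_right _ hi)⟩
  · rintro ⟨h1, h2⟩ i hi
    rcases Finset.mem_union.mp hi with h | h
    · exact h1 i h
    · exact h2 i h

/-- The admissible contents of column `u`, given the content `S` of column `u-1`:
subsets of the box, compatible with `S`, and with prescribed membership of the
bottom cell `0` and the top cell `K-1`. -/
noncomputable def colFam (K : ℕ) (bits : ℕ → Bool × Bool) (u : ℕ) (S : Finset ℤ) : Finset (Finset ℤ) :=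
  (boxI K).powerset.filter
    (fun S' => Compat S S' ∧ ((0 : ℤ) ∈ S' ↔ (bits u).1 = true)
      ∧ (((K : ℤ) - 1) ∈ S' ↔ (bits u).2 = true))

/-- The alternating sum over admissible contents of columns `u, u+1, ..., u+m-1`,
given that column `u-1` has content `S`. -/
noncomputable def V (K : ℕ) (bits : ℕ → Bool × Bool) : ℕ → ℕ → Finset ℤ → ℤ
  | 0, _, _ => 1
  | m + 1, u, S => ∑ S' ∈ colFam K bits u S, (-1) ^ S'.card * V K bits m (u + 1) S'


variable {K : ℕ} {bits : ℕ → Bool × Bool} {w : ℤ}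

/-- If the element heights of `S'` all lie in `[w-1, K-1]`, compatibility with `S`
only depends on `S ∩ [w-2, K-1]`. -/
lemma compat_window {S S' : Finset ℤ} (hS : S ⊆ boxI K) (hS' : S' ⊆ boxI K)
    (hlow : S' ∩ Finset.Icc 0 (w - 2) = ∅) :
    Compat S S' ↔ Compat (S ∩ Finset.Icc (w - 2) ((K : ℤ) - 1)) S' := by
  unfold Compat
  apply forall₂_congr
  intro i hi
  have hib : i ∈ boxI K := hS' hi
  simp only [boxI, Finset.mem_Icc] at hib
  have hiw : ¬ (0 ≤ i ∧ i ≤ w - 2) := by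
    intro hcon
    have : i ∈ S' ∩ Finset.Icc 0 (w - 2) := by
      simp only [Finset.mem_inter, Finset.mem_Icc]; exact ⟨hi, hcon⟩
    rw [hlow] at this
    exact absurd this (Finset.notMem_empty _)
  have hiw' : w - 1 ≤ i := by omega
  constructor
  · rintro ⟨h1, h2⟩
    constructor
    · intro hc; exact h1 (Finset.mem_inter.mp hc).1
    · intro hc; exact h2 (Finset.mem_inter.mp hc).1
  · rintro ⟨h1, h2⟩
    constructor
    · intro hc
      apply h1
      have := hS hc
      simp only [boxI, Finset.mem_Icc] at this
      simp only [Finset.mem_inter, Finset.mem_Icc]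
      exact ⟨hc, by omega, by omega⟩
    · intro hc
      apply h2
      have := hS hc
      simp only [boxI, Finset.mem_Icc] at this
      simp only [Finset.mem_inter, Finset.mem_Icc]
      exact ⟨hc, by omega, by omega⟩

/-- Step A → C. -/
lemma stepAC (m u : ℕ) (ψ₂ : Finset ℤ → ℤ)
    (H : ∀ S ⊆ boxI K, V K bits m (u + 1) S =
      if S ∩ Finset.Icc 0 (w - 2) = ∅ then ψ₂ (S ∩ Finset.Icc (w - 2) ((K : ℤ) - 1)) else 0) :
    ∃ ψ₃ : Finset ℤ → ℤ, ∀ S ⊆ boxI K, V K bits (m + 1) u S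
      = ψ₃ (S ∩ Finset.Icc (w - 2) ((K : ℤ) - 1)) := by
  refine ⟨fun X => ∑ S' ∈ colFam K bits u X,
    (-1) ^ S'.card *
      (if S' ∩ Finset.Icc 0 (w - 2) = ∅ then ψ₂ (S' ∩ Finset.Icc (w - 2) ((K : ℤ) - 1)) else 0),
    ?_⟩
  intro S hS
  show (∑ S' ∈ colFam K bits u S, (-1) ^ S'.card * V K bits m (u + 1) S') = _
  simp only [colFam, Finset.sum_filter]
  apply Finset.sum_congr rfl
  intro S' hS'
  rw [Finset.mem_powerset] at hS'
  rw [H S' hS']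
  by_cases hlow : S' ∩ Finset.Icc 0 (w - 2) = ∅
  · simp only [compat_window hS hS' hlow]
  · simp only [hlow, if_false, mul_zero, ite_self]

/-- Step B → A. -/
lemma stepBA (hw : 2 ≤ w) (m u : ℕ) (ψ₁ : Finset ℤ → ℤ)
    (H : ∀ S ⊆ boxI K, V K bits m (u + 1) S =
      if Finset.Icc (1 : ℤ) (w - 1) ⊆ S ∪ shiftS S ∧ ((bits (u + 1)).1 = true → (0 : ℤ) ∉ S)
      then ψ₁ (S ∩ Finset.Icc (w - 1) ((K : ℤ) - 1)) else 0) :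
    ∃ ψ₂ : Finset ℤ → ℤ, ∀ S ⊆ boxI K, V K bits (m + 1) u S =
      if S ∩ Finset.Icc 0 (w - 2) = ∅ then ψ₂ (S ∩ Finset.Icc (w - 2) ((K : ℤ) - 1)) else 0 := by
  refine ⟨fun X => ∑ S' ∈ colFam K bits u X,
    (-1) ^ S'.card *
      (if Finset.Icc (1 : ℤ) (w - 1) ⊆ S' ∪ shiftS S' ∧ ((bits (u + 1)).1 = true → (0 : ℤ) ∉ S')
       then ψ₁ (S' ∩ Finset.Icc (w - 1) ((K : ℤ) - 1)) else 0), ?_⟩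
  intro S hS
  show (∑ S' ∈ colFam K bits u S, (-1) ^ S'.card * V K bits m (u + 1) S') = _
  by_cases hlow : S ∩ Finset.Icc 0 (w - 2) = ∅
  · rw [if_pos hlow]
    have hSeq : S ∩ Finset.Icc (w - 2) ((K : ℤ) - 1) = S := by
      apply Finset.inter_eq_left.mpr
      intro a ha
      have hab := hS ha
      simp only [boxI, Finset.mem_Icc] at hab
      have : ¬ (0 ≤ a ∧ a ≤ w - 2) := by
        intro hcon
        have : a ∈ S ∩ Finset.Icc 0 (w - 2) := by
          simp only [Finset.mem_inter, Finset.mem_Icc]; exact ⟨ha, hcon⟩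
        rw [hlow] at this
        exact absurd this (Finset.notMem_empty _)
      simp only [Finset.mem_Icc]
      omega
    rw [hSeq]
    apply Finset.sum_congr rfl
    intro S' hS'
    have hS'b : S' ⊆ boxI K := by
      simp only [colFam, Finset.mem_filter, Finset.mem_powerset] at hS'
      exact hS'.1
    rw [H S' hS'b]
  · rw [if_neg hlow]
    apply Finset.sum_eq_zero
    intro S' hS'
    simp only [colFam, Finset.mem_filter, Finset.mem_powerset] at hS'
    obtain ⟨hS'b, hcompat, _, _⟩ := hS'
    rw [H S' hS'b]
    obtain ⟨a, ha⟩ := Finset.nonempty_iff_ne_empty.mpr hlow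
    simp only [Finset.mem_inter, Finset.mem_Icc] at ha
    obtain ⟨haS, ha0, haw⟩ := ha
    rw [if_neg, mul_zero]
    rintro ⟨hsub, -⟩
    have : a + 1 ∈ S' ∪ shiftS S' := by
      apply hsub
      simp only [Finset.mem_Icc]
      omega
    rcases Finset.mem_union.mp this with h | h
    · obtain ⟨h1, h2⟩ := hcompat _ h
      simp only [add_sub_cancel_right] at h2
      exact h2 haS
    · rw [mem_shiftS] at h
      simp only [add_sub_cancel_right] at h
      exact (hcompat _ h).1 haS


/-- Compatibility with sets supported in `[w, K-1]` only depends on `S ∩ [w-1,K-1]`. -/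
lemma compat_window' {S U : Finset ℤ} (hU : U ⊆ Finset.Icc w ((K : ℤ) - 1)) :
    Compat S U ↔ Compat (S ∩ Finset.Icc (w - 1) ((K : ℤ) - 1)) U := by
  unfold Compat
  apply forall₂_congr
  intro i hi
  have hib := hU hi
  simp only [Finset.mem_Icc] at hib
  constructor
  · rintro ⟨h1, h2⟩
    exact ⟨fun hc => h1 (Finset.mem_inter.mp hc).1, fun hc => h2 (Finset.mem_inter.mp hc).1⟩
  · rintro ⟨h1, h2⟩
    constructor
    · intro hc
      exact h1 (Finset.mem_inter.mpr ⟨hc, Finset.mem_Icc.mpr ⟨by omega, by omega⟩⟩)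
    · intro hc
      exact h2 (Finset.mem_inter.mpr ⟨hc, Finset.mem_Icc.mpr ⟨by omega, by omega⟩⟩)

set_option maxHeartbeats 2000000 in
/-- Step C → B : the key cancellation. -/
lemma stepCB (hK : 3 ≤ K) (hw : 2 ≤ w) (hwK : w ≤ (K : ℤ) - 1) (m u : ℕ) (ψ : Finset ℤ → ℤ)
    (H : ∀ S ⊆ boxI K, V K bits m (u + 1) S = ψ (S ∩ Finset.Icc w ((K : ℤ) - 1))) :
    ∃ ψ₁ : Finset ℤ → ℤ, ∀ S ⊆ boxI K, V K bits (m + 1) u S =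
      if Finset.Icc (1 : ℤ) (w - 1) ⊆ S ∪ shiftS S ∧ ((bits u).1 = true → (0 : ℤ) ∉ S)
      then ψ₁ (S ∩ Finset.Icc (w - 1) ((K : ℤ) - 1)) else 0 := by
  set b := (bits u).1 with hbdef
  set t := (bits u).2 with htdef
  set A2 : Finset ℤ := Finset.Icc w ((K : ℤ) - 1) with hA2
  refine ⟨fun X => (if b = true then -1 else 1) *
    ∑ U ∈ A2.powerset,
      (if Compat X U ∧ (((K : ℤ) - 1 ∈ U) ↔ t = true) then (-1) ^ U.card * ψ U else 0), ?_⟩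
  intro S hS
  set A0 : Finset ℤ := {(0 : ℤ)} with hA0
  set A1 : Finset ℤ := Finset.Icc 1 (w - 1) with hA1
  -- unfold one step of V and rewrite the tail via H
  have step1 : V K bits (m + 1) u S
      = ∑ S' ∈ (boxI K).powerset,
          (if Compat S S' ∧ ((0 : ℤ) ∈ S' ↔ b = true) ∧ (((K : ℤ) - 1) ∈ S' ↔ t = true)
           then (-1) ^ S'.card * ψ (S' ∩ A2) else 0) := by
    show (∑ S' ∈ colFam K bits u S, (-1) ^ S'.card * V K bits m (u + 1) S') = _
    simp only [colFam, Finset.sum_filter, ← hbdef, ← htdef]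
    apply Finset.sum_congr rfl
    intro S' hS'
    rw [Finset.mem_powerset] at hS'
    rw [H S' hS']
  rw [step1]
  -- split the box into three zones
  have hbox : boxI K = A0 ∪ (A1 ∪ A2) := by
    ext i
    simp only [boxI, hA0, hA1, hA2, Finset.mem_Icc, Finset.mem_union, Finset.mem_singleton]
    omega
  have hd2 : Disjoint A1 A2 := by
    simp only [hA1, hA2, Finset.disjoint_left, Finset.mem_Icc]
    intro a h1 h2
    omega
  have hd1 : Disjoint A0 (A1 ∪ A2) := by
    simp only [hA0, hA1, hA2, Finset.disjoint_left, Finset.mem_union, Finset.mem_Icc,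
      Finset.mem_singleton]
    rintro a rfl h
    omega
  rw [hbox, sum_powerset_union_disj hd1]
  have step2 : ∀ J ∈ A0.powerset,
      (∑ L ∈ (A1 ∪ A2).powerset,
        (if Compat S (J ∪ L) ∧ ((0 : ℤ) ∈ J ∪ L ↔ b = true) ∧ (((K : ℤ) - 1) ∈ J ∪ L ↔ t = true)
         then (-1) ^ (J ∪ L).card * ψ ((J ∪ L) ∩ A2) else 0))
      = ∑ F ∈ A1.powerset, ∑ U ∈ A2.powerset,
          (if Compat S (J ∪ (F ∪ U)) ∧ ((0 : ℤ) ∈ J ∪ (F ∪ U) ↔ b = true)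
              ∧ (((K : ℤ) - 1) ∈ J ∪ (F ∪ U) ↔ t = true)
           then (-1) ^ (J ∪ (F ∪ U)).card * ψ ((J ∪ (F ∪ U)) ∩ A2) else 0) := by
    intro J _
    exact sum_powerset_union_disj hd2 _
  rw [Finset.sum_congr rfl step2]
  -- termwise factorization
  have term : ∀ J ∈ A0.powerset, ∀ F ∈ A1.powerset, ∀ U ∈ A2.powerset,
      (if Compat S (J ∪ (F ∪ U)) ∧ ((0 : ℤ) ∈ J ∪ (F ∪ U) ↔ b = true)
          ∧ (((K : ℤ) - 1) ∈ J ∪ (F ∪ U) ↔ t = true)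
       then (-1) ^ (J ∪ (F ∪ U)).card * ψ ((J ∪ (F ∪ U)) ∩ A2) else 0)
      = (if ((0 : ℤ) ∈ J ↔ b = true) ∧ Compat S J then (-1) ^ J.card else 0)
        * ((if Compat S F then (-1) ^ F.card else 0)
          * (if Compat S U ∧ (((K : ℤ) - 1) ∈ U ↔ t = true) then (-1) ^ U.card * ψ U else 0)) := by
    intro J hJ F hF U hU
    rw [Finset.mem_powerset] at hJ hF hU
    have hJ0 : ∀ i ∈ J, i = 0 := by
      intro i hi; have := hJ hi; simpa [hA0] using this
    have hF1 : ∀ i ∈ F, 1 ≤ i ∧ i ≤ w - 1 := by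
      intro i hi; have := hF hi; simpa [hA1, Finset.mem_Icc] using this
    have hU1 : ∀ i ∈ U, w ≤ i ∧ i ≤ (K : ℤ) - 1 := by
      intro i hi; have := hU hi; simpa [hA2, Finset.mem_Icc] using this
    have hdJF : Disjoint J (F ∪ U) := by
      simp only [Finset.disjoint_left, Finset.mem_union]
      intro a haJ hc
      have := hJ0 a haJ
      rcases hc with h | h
      · have := hF1 a h; omega
      · have := hU1 a h; omega
    have hdFU : Disjoint F U := by
      simp only [Finset.disjoint_left]
      intro a haF haU
      have h1 := hF1 a haF
      have h2 := hU1 a haU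
      omega
    have hmem0 : ((0 : ℤ) ∈ J ∪ (F ∪ U)) ↔ (0 : ℤ) ∈ J := by
      simp only [Finset.mem_union]
      constructor
      · rintro (h | h | h)
        · exact h
        · have := hF1 _ h; omega
        · have := hU1 _ h; omega
      · exact fun h => Or.inl h
    have hmemK : (((K : ℤ) - 1) ∈ J ∪ (F ∪ U)) ↔ ((K : ℤ) - 1) ∈ U := by
      simp only [Finset.mem_union]
      constructor
      · rintro (h | h | h)
        · have := hJ0 _ h; omega
        · have := hF1 _ h; omega
        · exact h
      · exact fun h => Or.inr (Or.inr h)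
    have hinter : (J ∪ (F ∪ U)) ∩ A2 = U := by
      ext i
      simp only [Finset.mem_inter, Finset.mem_union, hA2, Finset.mem_Icc]
      constructor
      · rintro ⟨h | h | h, hic⟩
        · have := hJ0 _ h; omega
        · have := hF1 _ h; omega
        · exact h
      · intro h
        exact ⟨Or.inr (Or.inr h), hU1 _ h⟩
    have hcard : (J ∪ (F ∪ U)).card = J.card + (F.card + U.card) := by
      rw [Finset.card_union_of_disjoint hdJF, Finset.card_union_of_disjoint hdFU]
    have hcond : (Compat S (J ∪ (F ∪ U)) ∧ ((0 : ℤ) ∈ J ∪ (F ∪ U) ↔ b = true)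
          ∧ (((K : ℤ) - 1) ∈ J ∪ (F ∪ U) ↔ t = true))
        ↔ (((0 : ℤ) ∈ J ↔ b = true) ∧ Compat S J) ∧ Compat S F
            ∧ (Compat S U ∧ (((K : ℤ) - 1) ∈ U ↔ t = true)) := by
      rw [compat_union, compat_union, hmem0, hmemK]
      tauto
    by_cases h1 : ((0 : ℤ) ∈ J ↔ b = true) ∧ Compat S J
    · by_cases h2 : Compat S F
      · by_cases h3 : Compat S U ∧ (((K : ℤ) - 1) ∈ U ↔ t = true)
        · rw [if_pos (hcond.mpr ⟨h1, h2, h3⟩), if_pos h1, if_pos h2, if_pos h3,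
            hinter, hcard]
          ring
        · rw [if_neg (fun hc => h3 (hcond.mp hc).2.2), if_neg h3, mul_zero, mul_zero]
      · rw [if_neg (fun hc => h2 (hcond.mp hc).2.1), if_neg h2, zero_mul, mul_zero]
    · rw [if_neg (fun hc => h1 (hcond.mp hc).1), if_neg h1, zero_mul]
  set aJ : Finset ℤ → ℤ :=
    fun J => if ((0 : ℤ) ∈ J ↔ b = true) ∧ Compat S J then (-1) ^ J.card else 0 with haJ
  set bF : Finset ℤ → ℤ := fun F => if Compat S F then (-1) ^ F.card else 0 with hbF
  set cU : Finset ℤ → ℤ :=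
    fun U => if Compat S U ∧ (((K : ℤ) - 1) ∈ U ↔ t = true) then (-1) ^ U.card * ψ U else 0
    with hcU
  have step3 : (∑ J ∈ A0.powerset, ∑ F ∈ A1.powerset, ∑ U ∈ A2.powerset,
      (if Compat S (J ∪ (F ∪ U)) ∧ ((0 : ℤ) ∈ J ∪ (F ∪ U) ↔ b = true)
          ∧ (((K : ℤ) - 1) ∈ J ∪ (F ∪ U) ↔ t = true)
       then (-1) ^ (J ∪ (F ∪ U)).card * ψ ((J ∪ (F ∪ U)) ∩ A2) else 0))
      = (∑ J ∈ A0.powerset, aJ J)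
        * ((∑ F ∈ A1.powerset, bF F) * (∑ U ∈ A2.powerset, cU U)) := by
    rw [Finset.sum_mul]
    apply Finset.sum_congr rfl
    intro J hJ
    rw [Finset.sum_mul_sum, Finset.mul_sum]
    apply Finset.sum_congr rfl
    intro F hF
    rw [Finset.mul_sum]
    apply Finset.sum_congr rfl
    intro U hU
    rw [term J hJ F hF U hU, haJ, hbF, hcU]
  rw [step3]
  -- evaluate the three factors
  have hSJ : (∑ J ∈ A0.powerset, aJ J)
      = if (b = true → (0 : ℤ) ∉ S) then (if b = true then -1 else 1) else 0 := by
    have hps : A0.powerset = {(∅ : Finset ℤ), {(0 : ℤ)}} := by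
      ext J
      simp [hA0, Finset.subset_singleton_iff]
    have hne : (∅ : Finset ℤ) ≠ {(0 : ℤ)} := by
      intro h
      exact absurd (h ▸ Finset.mem_singleton_self (0 : ℤ)) (Finset.notMem_empty _)
    rw [hps, Finset.sum_pair hne, haJ]
    have hm1 : ((0 : ℤ) - 1) ∉ S := by
      intro hc
      have := hS hc
      simp only [boxI, Finset.mem_Icc] at this
      omega
    have hcomp0 : Compat S {(0 : ℤ)} ↔ (0 : ℤ) ∉ S := by
      unfold Compat
      simp only [Finset.mem_singleton, forall_eq]
      exact ⟨fun h => h.1, fun h => ⟨h, hm1⟩⟩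
    have hcompe : Compat S (∅ : Finset ℤ) :=
      fun i hi => absurd hi (Finset.notMem_empty _)
    cases hb : b with
    | false =>
      simp [hcompe]
    | true =>
      by_cases h0 : (0 : ℤ) ∈ S
      · simp [h0, hcomp0]
      · simp [h0, hcomp0]
  have hSF : (∑ F ∈ A1.powerset, bF F)
      = if A1 ⊆ S ∪ shiftS S then 1 else 0 := by
    rw [hbF]
    have heq : (∑ F ∈ A1.powerset, if Compat S F then ((-1 : ℤ)) ^ F.card else 0)
        = ∑ F ∈ (A1 \ (S ∪ shiftS S)).powerset, ((-1 : ℤ)) ^ F.card := by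
      rw [← Finset.sum_filter]
      apply Finset.sum_congr
      · ext F
        simp only [Finset.mem_filter, Finset.mem_powerset, Finset.subset_sdiff]
        unfold Compat
        constructor
        · rintro ⟨h1, h2⟩
          refine ⟨h1, ?_⟩
          simp only [Finset.disjoint_left]
          intro a ha hc
          rcases Finset.mem_union.mp hc with hc | hc
          · exact (h2 a ha).1 hc
          · rw [mem_shiftS] at hc
            exact (h2 a ha).2 hc
        · rintro ⟨h1, hdisj⟩
          refine ⟨h1, fun i hi => ?_⟩
          simp only [Finset.disjoint_left] at hdisj
          have := hdisj hi
          simp only [Finset.mem_union, mem_shiftS, not_or] at this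
          exact this
      · intros; rfl
    rw [heq, Finset.sum_powerset_neg_one_pow_card]
    congr 1
    rw [Finset.sdiff_eq_empty_iff_subset]
  have hSU : (∑ U ∈ A2.powerset, cU U)
      = ∑ U ∈ A2.powerset,
          (if Compat (S ∩ Finset.Icc (w - 1) ((K : ℤ) - 1)) U ∧ (((K : ℤ) - 1) ∈ U ↔ t = true)
           then (-1) ^ U.card * ψ U else 0) := by
    rw [hcU]
    apply Finset.sum_congr rfl
    intro U hU
    rw [Finset.mem_powerset] at hU
    exact if_congr (and_congr_left' (compat_window' (hA2 ▸ hU))) rfl rfl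
  rw [hSJ, hSF, hSU]
  by_cases h1 : A1 ⊆ S ∪ shiftS S <;> by_cases h2 : (b = true → (0 : ℤ) ∉ S) <;>
    simp [h1, h2]


/-- `Nat.fib (n+2) ≥ n+1`. -/
lemma fib_lower (n : ℕ) : n + 1 ≤ Nat.fib (n + 2) := by
  induction n with
  | zero => decide
  | succ k ih =>
    have h1 : 0 < Nat.fib (k + 1) := Nat.fib_pos.mpr (Nat.succ_pos k)
    have h2 : Nat.fib (k + 1 + 2) = Nat.fib (k + 1) + Nat.fib (k + 1 + 1) := Nat.fib_add_two
    have h3 : Nat.fib (k + 1 + 1) = Nat.fib (k + 2) := rfl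
    omega

/-- The master cancellation: for `N ≡ 1 (mod 3)` and `K` large enough, the
column-transfer sum over the whole strip vanishes. -/
lemma V_eq_zero (N : ℕ) (hN3 : N % 3 = 1) (hK3 : 3 ≤ K)
    (hKN : 2 * (N / 3) + 3 ≤ K) : V K bits N 0 ∅ = 0 := by
  set r := N / 3 with hr
  have hN : N = 3 * r + 1 := by omega
  have chain : ∀ j : ℕ, j ≤ r → ∃ ψ : Finset ℤ → ℤ, ∀ S ⊆ boxI K,
      V K bits (3 * j) (N - 3 * j) S
        = ψ (S ∩ Finset.Icc ((K : ℤ) - 1 - 2 * (j : ℤ)) ((K : ℤ) - 1)) := by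
    intro j
    induction j with
    | zero =>
      intro _
      exact ⟨fun _ => 1, fun S _ => by simp [V]⟩
    | succ j ih =>
      intro hj1
      obtain ⟨ψ, hψ⟩ := ih (by omega)
      set w : ℤ := (K : ℤ) - 1 - 2 * (j : ℤ) with hwdef
      have hw2 : 2 ≤ w := by
        have hjc : (j : ℤ) + 1 ≤ (r : ℤ) := by exact_mod_cast hj1
        have hKc : 2 * (r : ℤ) + 3 ≤ (K : ℤ) := by exact_mod_cast hKN
        omega
      have hwK : w ≤ (K : ℤ) - 1 := by
        have : (0 : ℤ) ≤ 2 * (j : ℤ) := by positivity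
        omega
      set u := N - 3 * (j + 1) with hu
      have hidx : N - 3 * j = u + 3 := by omega
      have hC : ∀ S ⊆ boxI K, V K bits (3 * j) ((u + 2) + 1) S
          = ψ (S ∩ Finset.Icc w ((K : ℤ) - 1)) := by
        intro S hS
        have := hψ S hS
        rwa [hidx] at this
      obtain ⟨ψ₁, h1⟩ := stepCB hK3 hw2 hwK (3 * j) (u + 2) ψ hC
      have h1' : ∀ S ⊆ boxI K, V K bits ((3 * j + 1)) ((u + 1) + 1) S =
          if Finset.Icc (1 : ℤ) (w - 1) ⊆ S ∪ shiftS S ∧ ((bits ((u + 1) + 1)).1 = true → (0 : ℤ) ∉ S)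
          then ψ₁ (S ∩ Finset.Icc (w - 1) ((K : ℤ) - 1)) else 0 := by
        intro S hS
        exact h1 S hS
      obtain ⟨ψ₂, h2⟩ := stepBA hw2 (3 * j + 1) (u + 1) ψ₁ h1'
      have h2' : ∀ S ⊆ boxI K, V K bits ((3 * j + 2)) (u + 1) S =
          if S ∩ Finset.Icc 0 (w - 2) = ∅ then ψ₂ (S ∩ Finset.Icc (w - 2) ((K : ℤ) - 1)) else 0 := by
        intro S hS
        exact h2 S hS
      obtain ⟨ψ₃, h3⟩ := stepAC (3 * j + 2) u ψ₂ h2'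
      refine ⟨ψ₃, ?_⟩
      intro S hS
      have hm : 3 * (j + 1) = (3 * j + 2) + 1 := by omega
      have hwin : w - 2 = (K : ℤ) - 1 - 2 * ((j + 1 : ℕ) : ℤ) := by
        push_cast
        ring
      rw [hm]
      rw [← hwin]
      exact h3 S hS
  obtain ⟨ψ, hψ⟩ := chain r le_rfl
  set w : ℤ := (K : ℤ) - 1 - 2 * (r : ℤ) with hwdef
  have hw2 : 2 ≤ w := by
    have hKc : 2 * (r : ℤ) + 3 ≤ (K : ℤ) := by exact_mod_cast hKN
    omega
  have hwK : w ≤ (K : ℤ) - 1 := by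
    have : (0 : ℤ) ≤ 2 * (r : ℤ) := by positivity
    omega
  have hC : ∀ S ⊆ boxI K, V K bits (3 * r) (0 + 1) S
      = ψ (S ∩ Finset.Icc w ((K : ℤ) - 1)) := by
    intro S hS
    have := hψ S hS
    rwa [show N - 3 * r = 1 by omega] at this
  obtain ⟨ψ₁, h1⟩ := stepCB hK3 hw2 hwK (3 * r) 0 ψ hC
  have := h1 ∅ (Finset.empty_subset _)
  rw [if_neg] at this
  · rw [hN]
    exact this
  · rintro ⟨hsub, -⟩
    have h1w : (1 : ℤ) ∈ Finset.Icc (1 : ℤ) (w - 1) := Finset.mem_Icc.mpr ⟨le_refl _, by omega⟩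
    have := hsub h1w
    simp only [Finset.empty_union, mem_shiftS] at this
    · exact absurd this (by simp)


lemma mem_paralP {K N : ℕ} {p : ℤ × ℤ} :
    p ∈ paralP K N ↔ 0 ≤ p.2 ∧ p.2 ≤ (K : ℤ) - 1 ∧ -p.2 ≤ p.1 ∧ p.1 ≤ -p.2 + (N : ℤ) - 1 := by
  have hK0 : (0 : ℤ) ≤ (K : ℤ) := Int.natCast_nonneg K
  have hN0 : (0 : ℤ) ≤ (N : ℤ) := Int.natCast_nonneg N
  unfold paralP
  simp only [Finset.mem_filter, Finset.mem_product, Finset.mem_Icc]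
  constructor
  · rintro ⟨-, h⟩; exact h
  · intro h
    refine ⟨⟨⟨?_, ?_⟩, ?_, ?_⟩, h⟩ <;> omega

/-- The cells of the `u`-th column (diagonal `x + y = u`) of the parallelogram. -/
noncomputable def colCells (K : ℕ) (u : ℕ) : Finset (ℤ × ℤ) := (boxI K).image (fun i => ((u : ℤ) - i, i))

lemma mem_colCells {K u : ℕ} {p : ℤ × ℤ} :
    p ∈ colCells K u ↔ 0 ≤ p.2 ∧ p.2 ≤ (K : ℤ) - 1 ∧ p.1 + p.2 = (u : ℤ) := by
  unfold colCells
  simp only [Finset.mem_image, boxI, Finset.mem_Icc]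
  constructor
  · rintro ⟨i, hi, rfl⟩
    simp only
    refine ⟨hi.1, hi.2, by ring⟩
  · rintro ⟨h1, h2, h3⟩
    exact ⟨p.2, ⟨h1, h2⟩, by ext <;> simp <;> omega⟩

/-- The part of the parallelogram consisting of columns `u, u+1, ...`. -/
noncomputable def region (K N : ℕ) (u : ℕ) : Finset (ℤ × ℤ) :=
  (paralP K N).filter (fun p => (u : ℤ) ≤ p.1 + p.2)

lemma mem_region {K N u : ℕ} {p : ℤ × ℤ} :
    p ∈ region K N u ↔ p ∈ paralP K N ∧ (u : ℤ) ≤ p.1 + p.2 := Finset.mem_filter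

lemma region_zero {K N : ℕ} : region K N 0 = paralP K N := by
  unfold region
  apply Finset.filter_true_of_mem
  intro p hp
  have := mem_paralP.mp hp
  simp only [Nat.cast_zero]
  omega

lemma region_top {K N : ℕ} : region K N N = ∅ := by
  ext p
  simp only [mem_region, Finset.notMem_empty, iff_false]
  rintro ⟨hp, hs⟩
  have := mem_paralP.mp hp
  omega

lemma region_succ {K N u : ℕ} (hu : u < N) :
    region K N u = colCells K u ∪ region K N (u + 1) := by
  ext p
  simp only [mem_region, Finset.mem_union, mem_colCells]
  have huN : (u : ℤ) < (N : ℤ) := by exact_mod_cast hu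
  constructor
  · rintro ⟨hp, hs⟩
    have hP := mem_paralP.mp hp
    by_cases h : p.1 + p.2 = (u : ℤ)
    · exact Or.inl ⟨hP.1, hP.2.1, h⟩
    · refine Or.inr ⟨hp, ?_⟩
      push_cast
      omega
  · rintro (⟨h1, h2, h3⟩ | ⟨hp, hs⟩)
    · refine ⟨mem_paralP.mpr ⟨h1, h2, by omega, by omega⟩, le_of_eq h3.symm⟩
    · refine ⟨hp, ?_⟩
      have : ((u : ℤ) + 1) ≤ p.1 + p.2 := by exact_mod_cast hs
      omega

lemma disjoint_col_region {K N u : ℕ} :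
    Disjoint (colCells K u) (region K N (u + 1)) := by
  simp only [Finset.disjoint_left]
  intro p hp hq
  have h1 := mem_colCells.mp hp
  have h2 := (mem_region.mp hq).2
  push_cast at h2
  omega


/-! ### Part B : from the parallelogram to the column model -/

def Indep (I : Finset (ℤ × ℤ)) : Prop := ∀ p ∈ I, ∀ q ∈ I, ¬ GridAdj p q

instance (I : Finset (ℤ × ℤ)) : Decidable (Indep I) := by unfold Indep; infer_instance

def TopOK (K N : ℕ) (C : Finset (ℤ × ℤ)) (u : ℕ) (I : Finset (ℤ × ℤ)) : Prop :=
  ∀ p ∈ region K N u, p.2 = (K : ℤ) - 1 → (p ∈ I ↔ p ∈ C)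

noncomputable instance (K N : ℕ) (C : Finset (ℤ × ℤ)) (u : ℕ) (I : Finset (ℤ × ℤ)) :
    Decidable (TopOK K N C u I) := by unfold TopOK; infer_instance

def BotOK (K N : ℕ) (D : Finset (ℤ × ℤ)) (u : ℕ) (I : Finset (ℤ × ℤ)) : Prop :=
  ∀ p ∈ region K N u, p.2 = 0 → (p ∈ I ↔ p ∈ D)

noncomputable instance (K N : ℕ) (D : Finset (ℤ × ℤ)) (u : ℕ) (I : Finset (ℤ × ℤ)) :
    Decidable (BotOK K N D u I) := by unfold BotOK; infer_instance

def CrossOK (K u : ℕ) (S : Finset ℤ) (I : Finset (ℤ × ℤ)) : Prop :=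
  ∀ i ∈ boxI K, ((u : ℤ) - i, i) ∈ I → i ∉ S ∧ i - 1 ∉ S

noncomputable instance (K u : ℕ) (S : Finset ℤ) (I : Finset (ℤ × ℤ)) :
    Decidable (CrossOK K u S I) := by unfold CrossOK; infer_instance

noncomputable def Zreg (K N : ℕ) (C D : Finset (ℤ × ℤ)) (u : ℕ) (S : Finset ℤ) : ℤ :=
  ∑ I ∈ (region K N u).powerset.filter
      (fun I => Indep I ∧ TopOK K N C u I ∧ BotOK K N D u I ∧ CrossOK K u S I),
    (-1 : ℤ) ^ I.card

def bitsCD (K : ℕ) (C D : Finset (ℤ × ℤ)) : ℕ → Bool × Bool := fun u =>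
  (decide (((u : ℤ), 0) ∈ D), decide ((((u : ℤ) - ((K : ℤ) - 1)), (K : ℤ) - 1) ∈ C))

lemma gridadj_symm {p q : ℤ × ℤ} (h : GridAdj p q) : GridAdj q p := by
  unfold GridAdj at *
  rw [abs_sub_comm q.1, abs_sub_comm q.2]
  exact h

lemma emb_inj (u : ℕ) : Function.Injective (fun i : ℤ => ((u : ℤ) - i, i)) := by
  intro a b h
  simpa using congrArg Prod.snd h

lemma region_antitone {K N u : ℕ} : region K N (u + 1) ⊆ region K N u := by
  intro p hp
  rw [mem_region] at *
  refine ⟨hp.1, ?_⟩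
  have := hp.2
  push_cast at this ⊢
  omega

set_option maxHeartbeats 2000000 in
lemma cond_decomp {K N : ℕ} {C D : Finset (ℤ × ℤ)} {u : ℕ} (hu : u < N) (hK1 : 1 ≤ K)
    {S T : Finset ℤ} (hT : T ⊆ boxI K) {I' : Finset (ℤ × ℤ)} (hI' : I' ⊆ region K N (u + 1)) :
    (Indep (T.image (fun i => ((u : ℤ) - i, i)) ∪ I')
      ∧ TopOK K N C u (T.image (fun i => ((u : ℤ) - i, i)) ∪ I')
      ∧ BotOK K N D u (T.image (fun i => ((u : ℤ) - i, i)) ∪ I')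
      ∧ CrossOK K u S (T.image (fun i => ((u : ℤ) - i, i)) ∪ I'))
    ↔ ((Compat S T ∧ ((0 : ℤ) ∈ T ↔ (bitsCD K C D u).1 = true)
          ∧ (((K : ℤ) - 1) ∈ T ↔ (bitsCD K C D u).2 = true))
        ∧ (Indep I' ∧ TopOK K N C (u + 1) I' ∧ BotOK K N D (u + 1) I'
            ∧ CrossOK K (u + 1) T I')) := by
  have hK1' : (1 : ℤ) ≤ (K : ℤ) := by omega
  have huN : (u : ℤ) ≤ (N : ℤ) - 1 := by omega
  have hu0 : (0 : ℤ) ≤ (u : ℤ) := Int.natCast_nonneg u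
  set Sc := T.image (fun i => ((u : ℤ) - i, i)) with hSc
  have hmemSc : ∀ i : ℤ, (((u : ℤ) - i, i) ∈ Sc) ↔ i ∈ T := by
    intro i
    simp only [hSc, Finset.mem_image, Prod.mk.injEq]
    constructor
    · rintro ⟨a, ha, h1, h2⟩
      rwa [← h2]
    · intro h; exact ⟨i, h, rfl, rfl⟩
  have hScmem : ∀ p ∈ Sc, ∃ i ∈ T, p = ((u : ℤ) - i, i) := by
    intro p hp
    simp only [hSc, Finset.mem_image] at hp
    obtain ⟨i, hi, h⟩ := hp
    exact ⟨i, hi, h.symm⟩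
  have hScsum : ∀ p ∈ Sc, p.1 + p.2 = (u : ℤ) := by
    intro p hp
    obtain ⟨i, hi, rfl⟩ := hScmem p hp
    show (u : ℤ) - i + i = (u : ℤ)
    ring
  have hI'sum : ∀ p ∈ I', (u : ℤ) + 1 ≤ p.1 + p.2 := by
    intro p hp
    have := (mem_region.mp (hI' hp)).2
    push_cast at this
    omega
  have hI'p : ∀ p ∈ I', p ∈ paralP K N := fun p hp => (mem_region.mp (hI' hp)).1
  have hcellI' : ∀ i : ℤ, (((u : ℤ) - i, i) ∉ I') := by
    intro i hc
    have := hI'sum _ hc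
    simp only at this
    omega
  have hmemU : ∀ i : ℤ, (((u : ℤ) - i, i) ∈ Sc ∪ I') ↔ i ∈ T := by
    intro i
    rw [Finset.mem_union]
    constructor
    · rintro (h | h)
      · exact (hmemSc i).mp h
      · exact absurd h (hcellI' i)
    · intro h; exact Or.inl ((hmemSc i).mpr h)
  have hScnot : ∀ p ∈ region K N (u + 1), p ∉ Sc := by
    intro p hp hc
    have h1 := hScsum p hc
    have h2 := (mem_region.mp hp).2
    push_cast at h2
    omega
  have hT' : ∀ i ∈ T, 0 ≤ i ∧ i ≤ (K : ℤ) - 1 := by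
    intro i hi
    have := hT hi
    simpa [boxI, Finset.mem_Icc] using this
  -- CrossOK decomposition
  have hcross : CrossOK K u S (Sc ∪ I') ↔ Compat S T := by
    unfold CrossOK Compat
    constructor
    · intro h i hi
      refine h i ?_ ((hmemU i).mpr hi)
      simp only [boxI, Finset.mem_Icc]
      exact hT' i hi
    · intro h i _ hmem
      exact h i ((hmemU i).mp hmem)
  -- Indep decomposition
  have hindep : Indep (Sc ∪ I') ↔ (Indep I' ∧ CrossOK K (u + 1) T I') := by
    constructor
    · intro h
      constructor
      · intro p hp q hq
        exact h p (Finset.mem_union_right _ hp) q (Finset.mem_union_right _ hq)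
      · intro i hi hq
        simp only [boxI, Finset.mem_Icc] at hi
        constructor
        · intro hiT
          apply h _ (Finset.mem_union_left _ ((hmemSc i).mpr hiT)) _
            (Finset.mem_union_right _ hq)
          unfold GridAdj
          have e1 : ((u : ℤ) - i) - ((((u + 1 : ℕ)) : ℤ) - i) = -1 := by push_cast; ring
          show |((u : ℤ) - i) - ((((u + 1 : ℕ)) : ℤ) - i)| + |i - i| = 1
          rw [e1]
          simp
        · intro hiT
          apply h _ (Finset.mem_union_left _ ((hmemSc (i - 1)).mpr hiT)) _
            (Finset.mem_union_right _ hq)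
          unfold GridAdj
          have e1 : ((u : ℤ) - (i - 1)) - ((((u + 1 : ℕ)) : ℤ) - i) = 0 := by push_cast; ring
          show |((u : ℤ) - (i - 1)) - ((((u + 1 : ℕ)) : ℤ) - i)| + |(i - 1) - i| = 1
          rw [e1]
          have e2 : (i - 1) - i = -1 := by ring
          rw [e2]
          simp
    · rintro ⟨hI'i, hcr⟩
      have main : ∀ p ∈ Sc, ∀ q ∈ I', ¬ GridAdj p q := by
        intro p hp q hq hadj
        obtain ⟨a, haT, rfl⟩ := hScmem p hp
        have hsq := hI'sum q hq
        have hqp := mem_paralP.mp (hI'p q hq)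
        unfold GridAdj at hadj
        have hadj' : |((u : ℤ) - a) - q.1| + |a - q.2| = 1 := hadj
        have h2 : q.1 + q.2 = (u : ℤ) + 1 ∧ (q.2 = a ∨ q.2 = a + 1) := by
          rcases abs_cases (((u : ℤ) - a) - q.1) with ⟨e1, e2⟩ | ⟨e1, e2⟩ <;>
            rcases abs_cases (a - q.2) with ⟨f1, f2⟩ | ⟨f1, f2⟩ <;>
              rw [e1, f1] at hadj' <;> omega
        have hq2box : q.2 ∈ boxI K := by
          simp only [boxI, Finset.mem_Icc]
          exact ⟨hqp.1, hqp.2.1⟩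
        have hcell : (((((u + 1 : ℕ)) : ℤ) - q.2), q.2) ∈ I' := by
          have hqe : q = (((((u + 1 : ℕ)) : ℤ) - q.2), q.2) := by
            have : q.1 = (((u + 1 : ℕ)) : ℤ) - q.2 := by push_cast; omega
            exact Prod.ext this rfl
          rwa [← hqe]
        have hfin := hcr q.2 hq2box hcell
        rcases h2.2 with h | h
        · exact hfin.1 (h ▸ haT)
        · apply hfin.2
          rw [h]
          simpa using haT
      intro p hp q hq
      rcases Finset.mem_union.mp hp with hp1 | hp1 <;> rcases Finset.mem_union.mp hq with hq1 | hq1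
      · obtain ⟨a, haT, rfl⟩ := hScmem p hp1
        obtain ⟨b, hbT, rfl⟩ := hScmem q hq1
        unfold GridAdj
        intro hadj
        have hadj' : |((u : ℤ) - a) - ((u : ℤ) - b)| + |a - b| = 1 := hadj
        rcases abs_cases (((u : ℤ) - a) - ((u : ℤ) - b)) with ⟨e1, e2⟩ | ⟨e1, e2⟩ <;>
          rcases abs_cases (a - b) with ⟨f1, f2⟩ | ⟨f1, f2⟩ <;>
            rw [e1, f1] at hadj' <;> omega
      · exact main p hp1 q hq1
      · intro hadj
        exact main q hq1 p hp1 (gridadj_symm hadj)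
      · exact hI'i p hp1 q hq1
  -- TopOK decomposition
  have hptop_mem : (((u : ℤ) - ((K : ℤ) - 1), (K : ℤ) - 1)) ∈ region K N u := by
    rw [mem_region]
    constructor
    · rw [mem_paralP]
      refine ⟨by omega, by omega, by simp only; omega, by simp only; omega⟩
    · simp only
      omega
  have htop : TopOK K N C u (Sc ∪ I')
      ↔ ((((K : ℤ) - 1) ∈ T ↔ (bitsCD K C D u).2 = true) ∧ TopOK K N C (u + 1) I') := by
    have hbit : (bitsCD K C D u).2 = true
        ↔ (((u : ℤ) - ((K : ℤ) - 1), (K : ℤ) - 1)) ∈ C := by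
      simp [bitsCD]
    rw [hbit]
    constructor
    · intro h
      constructor
      · rw [← h _ hptop_mem rfl, hmemU ((K : ℤ) - 1)]
      · intro p hp htp
        rw [← h p (region_antitone hp) htp]
        constructor
        · exact fun hc => Finset.mem_union_right _ hc
        · intro hc
          rcases Finset.mem_union.mp hc with hc1 | hc1
          · exact absurd hc1 (hScnot p hp)
          · exact hc1
    · rintro ⟨h1, h2⟩ p hp htp
      rw [region_succ hu, Finset.mem_union] at hp
      rcases hp with hp | hp
      · have hpc := mem_colCells.mp hp
        have hpe : p = (((u : ℤ) - ((K : ℤ) - 1), (K : ℤ) - 1)) := by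
          have hx : p.1 = (u : ℤ) - ((K : ℤ) - 1) := by omega
          exact Prod.ext hx htp
        rw [hpe, hmemU ((K : ℤ) - 1)]
        exact h1
      · constructor
        · intro hc
          rcases Finset.mem_union.mp hc with hc1 | hc1
          · exact absurd hc1 (hScnot p hp)
          · exact (h2 p hp htp).mp hc1
        · intro hc
          exact Finset.mem_union_right _ ((h2 p hp htp).mpr hc)
  -- BotOK decomposition
  have hpbot_mem : (((u : ℤ), 0) : ℤ × ℤ) ∈ region K N u := by
    rw [mem_region]
    constructor
    · rw [mem_paralP]
      refine ⟨by simp only; omega, by simp only; omega, by simp only; omega, by simp only; omega⟩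
    · simp only
      omega
  have hcell0 : (((u : ℤ), 0) : ℤ × ℤ) = (((u : ℤ) - (0 : ℤ), (0 : ℤ))) := by
    simp
  have hbot : BotOK K N D u (Sc ∪ I')
      ↔ (((0 : ℤ) ∈ T ↔ (bitsCD K C D u).1 = true) ∧ BotOK K N D (u + 1) I') := by
    have hbit : (bitsCD K C D u).1 = true ↔ (((u : ℤ), 0) : ℤ × ℤ) ∈ D := by
      simp [bitsCD]
    rw [hbit]
    constructor
    · intro h
      constructor
      · rw [← h _ hpbot_mem rfl, hcell0, hmemU (0 : ℤ)]
      · intro p hp htp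
        rw [← h p (region_antitone hp) htp]
        constructor
        · exact fun hc => Finset.mem_union_right _ hc
        · intro hc
          rcases Finset.mem_union.mp hc with hc1 | hc1
          · exact absurd hc1 (hScnot p hp)
          · exact hc1
    · rintro ⟨h1, h2⟩ p hp htp
      rw [region_succ hu, Finset.mem_union] at hp
      rcases hp with hp | hp
      · have hpc := mem_colCells.mp hp
        have hpe : p = (((u : ℤ), 0) : ℤ × ℤ) := by
          have hx : p.1 = (u : ℤ) := by omega
          exact Prod.ext hx htp
        rw [hpe, hcell0, hmemU (0 : ℤ), ← hcell0]
        exact h1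
      · constructor
        · intro hc
          rcases Finset.mem_union.mp hc with hc1 | hc1
          · exact absurd hc1 (hScnot p hp)
          · exact (h2 p hp htp).mp hc1
        · intro hc
          exact Finset.mem_union_right _ ((h2 p hp htp).mpr hc)
  rw [hcross, htop, hbot, hindep]
  constructor
  · rintro ⟨⟨hi, hcr⟩, ⟨hk, ht⟩, ⟨h0, hb⟩, hcp⟩
    exact ⟨⟨hcp, h0, hk⟩, hi, ht, hb, hcr⟩
  · rintro ⟨⟨hcp, h0, hk⟩, hi, ht, hb, hcr⟩
    exact ⟨⟨hi, hcr⟩, ⟨hk, ht⟩, ⟨h0, hb⟩, hcp⟩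

set_option maxHeartbeats 2000000 in
/-- The region sum equals the column-transfer sum. -/
lemma Zreg_V {K N : ℕ} (C D : Finset (ℤ × ℤ)) (hK1 : 1 ≤ K) :
    ∀ m u (S : Finset ℤ), u + m = N →
      Zreg K N C D u S = V K (bitsCD K C D) m u S := by
  intro m
  induction m with
  | zero =>
    intro u S hu
    have hu' : u = N := by omega
    subst hu'
    unfold Zreg
    rw [region_top, Finset.powerset_empty, Finset.filter_singleton]
    have hcond : Indep (∅ : Finset (ℤ × ℤ)) ∧ TopOK K u C u ∅ ∧ BotOK K u D u ∅
        ∧ CrossOK K u S ∅ := by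
      refine ⟨?_, ?_, ?_, ?_⟩
      · intro p hp
        exact absurd hp (Finset.notMem_empty _)
      · intro p hp
        rw [region_top] at hp
        exact absurd hp (Finset.notMem_empty _)
      · intro p hp
        rw [region_top] at hp
        exact absurd hp (Finset.notMem_empty _)
      · intro i _ hc
        exact absurd hc (Finset.notMem_empty _)
    rw [if_pos hcond, Finset.sum_singleton]
    simp [V]
  | succ m ih =>
    intro u S hu
    have huN : u < N := by omega
    unfold Zreg
    rw [Finset.sum_filter, region_succ huN]
    unfold colCells
    rw [sum_powerset_union_disj
      (by rw [show (boxI K).image (fun i => ((u : ℤ) - i, i)) = colCells K u from rfl]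
          exact disjoint_col_region)]
    rw [sum_powerset_image_inj (emb_inj u)]
    show _ = ∑ S' ∈ colFam K (bitsCD K C D) u S, (-1) ^ S'.card * V K (bitsCD K C D) m (u + 1) S'
    rw [colFam, Finset.sum_filter]
    apply Finset.sum_congr rfl
    intro T hT
    rw [Finset.mem_powerset] at hT
    have key : ∀ I' ∈ (region K N (u + 1)).powerset,
        (if Indep (T.image (fun i => ((u : ℤ) - i, i)) ∪ I')
            ∧ TopOK K N C u (T.image (fun i => ((u : ℤ) - i, i)) ∪ I')
            ∧ BotOK K N D u (T.image (fun i => ((u : ℤ) - i, i)) ∪ I')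
            ∧ CrossOK K u S (T.image (fun i => ((u : ℤ) - i, i)) ∪ I')
         then ((-1 : ℤ)) ^ (T.image (fun i => ((u : ℤ) - i, i)) ∪ I').card else 0)
        = (if Compat S T ∧ ((0 : ℤ) ∈ T ↔ (bitsCD K C D u).1 = true)
              ∧ (((K : ℤ) - 1) ∈ T ↔ (bitsCD K C D u).2 = true)
           then ((-1 : ℤ)) ^ T.card else 0)
          * (if Indep I' ∧ TopOK K N C (u + 1) I' ∧ BotOK K N D (u + 1) I'
                ∧ CrossOK K (u + 1) T I'
             then ((-1 : ℤ)) ^ I'.card else 0) := by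
      intro I' hI'
      rw [Finset.mem_powerset] at hI'
      have hdecomp := cond_decomp (C := C) (D := D) (S := S) huN hK1 hT hI'
      have hdisj : Disjoint (T.image (fun i => ((u : ℤ) - i, i))) I' := by
        apply Finset.disjoint_of_subset_left _ (Finset.disjoint_of_subset_right hI'
          (disjoint_col_region (N := N)))
        intro p hp
        simp only [Finset.mem_image] at hp
        obtain ⟨i, hi, rfl⟩ := hp
        rw [mem_colCells]
        have := hT hi
        simp only [boxI, Finset.mem_Icc] at this
        refine ⟨this.1, this.2, by ring⟩
      have hcard : (T.image (fun i => ((u : ℤ) - i, i)) ∪ I').card = T.card + I'.card := by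
        rw [Finset.card_union_of_disjoint hdisj,
          Finset.card_image_of_injective _ (emb_inj u)]
      by_cases h1 : Compat S T ∧ ((0 : ℤ) ∈ T ↔ (bitsCD K C D u).1 = true)
          ∧ (((K : ℤ) - 1) ∈ T ↔ (bitsCD K C D u).2 = true)
      · by_cases h2 : Indep I' ∧ TopOK K N C (u + 1) I' ∧ BotOK K N D (u + 1) I'
            ∧ CrossOK K (u + 1) T I'
        · rw [if_pos (hdecomp.mpr ⟨h1, h2⟩), if_pos h1, if_pos h2, hcard, pow_add]
        · rw [if_neg (fun hc => h2 (hdecomp.mp hc).2), if_neg h2, mul_zero]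
      · rw [if_neg (fun hc => h1 (hdecomp.mp hc).1), if_neg h1, zero_mul]
    rw [Finset.sum_congr rfl key, ← Finset.mul_sum]
    have hinner : (∑ I' ∈ (region K N (u + 1)).powerset,
        (if Indep I' ∧ TopOK K N C (u + 1) I' ∧ BotOK K N D (u + 1) I'
            ∧ CrossOK K (u + 1) T I'
         then ((-1 : ℤ)) ^ I'.card else 0)) = Zreg K N C D (u + 1) T := by
      rw [Zreg, Finset.sum_filter]
    rw [hinner, ih (u + 1) T (by omega)]
    by_cases h1 : Compat S T ∧ ((0 : ℤ) ∈ T ↔ (bitsCD K C D u).1 = true)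
        ∧ (((K : ℤ) - 1) ∈ T ↔ (bitsCD K C D u).2 = true)
    · rw [if_pos h1, if_pos h1]
    · rw [if_neg h1, if_neg h1, zero_mul]

lemma crossOK_zero {K : ℕ} (I : Finset (ℤ × ℤ)) : CrossOK K 0 ∅ I := by
  intro i _ _
  exact ⟨Finset.notMem_empty _, Finset.notMem_empty _⟩

lemma topok_iff {K N : ℕ} {C : Finset (ℤ × ℤ)}
    (hC : C ⊆ (paralP K N).filter (fun p => p.2 = (K : ℤ) - 1))
    {I : Finset (ℤ × ℤ)} (hI : I ⊆ paralP K N) :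
    I.filter (fun p => p.2 = (K : ℤ) - 1) = C ↔ TopOK K N C 0 I := by
  constructor
  · intro h p hp htop
    constructor
    · intro hpI
      rw [← h]
      exact Finset.mem_filter.mpr ⟨hpI, htop⟩
    · intro hpC
      rw [← h] at hpC
      exact (Finset.mem_filter.mp hpC).1
  · intro h
    ext p
    rw [Finset.mem_filter]
    constructor
    · rintro ⟨hpI, htop⟩
      have hpp : p ∈ region K N 0 := by
        rw [region_zero]
        exact hI hpI
      exact (h p hpp htop).mp hpI
    · intro hpC
      have h2 := hC hpC
      rw [Finset.mem_filter] at h2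
      have hpp : p ∈ region K N 0 := by
        rw [region_zero]
        exact h2.1
      exact ⟨(h p hpp h2.2).mpr hpC, h2.2⟩

lemma botok_iff {K N : ℕ} {D : Finset (ℤ × ℤ)}
    (hD : D ⊆ (paralP K N).filter (fun p => p.2 = 0))
    {I : Finset (ℤ × ℤ)} (hI : I ⊆ paralP K N) :
    I.filter (fun p => p.2 = 0) = D ↔ BotOK K N D 0 I := by
  constructor
  · intro h p hp htop
    constructor
    · intro hpI
      rw [← h]
      exact Finset.mem_filter.mpr ⟨hpI, htop⟩
    · intro hpD
      rw [← h] at hpD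
      exact (Finset.mem_filter.mp hpD).1
  · intro h
    ext p
    rw [Finset.mem_filter]
    constructor
    · rintro ⟨hpI, htop⟩
      have hpp : p ∈ region K N 0 := by
        rw [region_zero]
        exact hI hpI
      exact (h p hpp htop).mp hpI
    · intro hpD
      have h2 := hD hpD
      rw [Finset.mem_filter] at h2
      have hpp : p ∈ region K N 0 := by
        rw [region_zero]
        exact h2.1
      exact ⟨(h p hpp h2.2).mpr hpD, h2.2⟩

lemma altZ_eq_Zreg {K N : ℕ} (C D : Finset (ℤ × ℤ))
    (hC : C ⊆ (paralP K N).filter (fun p => p.2 = (K : ℤ) - 1))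
    (hD : D ⊆ (paralP K N).filter (fun p => p.2 = 0)) :
    altZBorderP K N C D = Zreg K N C D 0 ∅ := by
  unfold altZBorderP Zreg
  rw [region_zero]
  apply Finset.sum_congr _ (fun _ _ => rfl)
  apply Finset.filter_congr
  intro I hI
  rw [Finset.mem_powerset] at hI
  constructor
  · rintro ⟨h1, h2, h3⟩
    exact ⟨h1, (topok_iff hC hI).mp h2, (botok_iff hD hI).mp h3, crossOK_zero I⟩
  · rintro ⟨h1, h2, h3, -⟩
    exact ⟨h1, (topok_iff hC hI).mpr h2, (botok_iff hD hI).mpr h3⟩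

lemma altZ_degenerate {K N : ℕ} {C D : Finset (ℤ × ℤ)}
    (h : ¬ C ⊆ (paralP K N).filter (fun p => p.2 = (K : ℤ) - 1)
      ∨ ¬ D ⊆ (paralP K N).filter (fun p => p.2 = 0)) :
    altZBorderP K N C D = 0 := by
  unfold altZBorderP
  convert Finset.sum_empty
  rw [Finset.filter_eq_empty_iff]
  intro I hI
  rw [Finset.mem_powerset] at hI
  rintro ⟨-, hCeq, hDeq⟩
  rcases h with h | h
  · apply h
    rw [← hCeq]
    intro p hp
    rw [Finset.mem_filter] at *
    exact ⟨hI hp.1, hp.2⟩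
  · apply h
    rw [← hDeq]
    intro p hp
    rw [Finset.mem_filter] at *
    exact ⟨hI hp.1, hp.2⟩

end AltZ

/-- For `N ≡ 1 (mod 3)` and `K > F_{N+1}`, the alternating number of independent
sets of `𝓟(K,N)` with prescribed borders `C` and `D` on the top and bottom rows
vanishes, for all `C` and `D`. -/
theorem altZBorderP_eq_zero (K N : ℕ) (hN : 1 ≤ N) (hN3 : N % 3 = 1)
    (hK : F (N + 1) < K) (C D : Finset (ℤ × ℤ)) :
    altZBorderP K N C D = 0 := by
  have hfib : N + 1 ≤ Nat.fib (N + 2) := AltZ.fib_lower N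
  have hK' : Nat.fib (N + 2) < K := hK
  have hKN : 2 * (N / 3) + 3 ≤ K := by omega
  have hK3 : 3 ≤ K := by omega
  by_cases hC : C ⊆ (paralP K N).filter (fun p => p.2 = (K : ℤ) - 1)
  · by_cases hD : D ⊆ (paralP K N).filter (fun p => p.2 = 0)
    · rw [AltZ.altZ_eq_Zreg C D hC hD,
        AltZ.Zreg_V C D (by omega) N 0 ∅ (by omega)]
      exact AltZ.V_eq_zero (bits := AltZ.bitsCD K C D) N hN3 hK3 hKN
    · exact AltZ.altZ_degenerate (Or.inr hD)
  · exact AltZ.altZ_degenerate (Or.inl hC)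
end

section
/- Let K ≥ 1 with K ≡ 1 (mod 3). Then e^{iπ/3} and e^{−iπ/3} are eigenvalues of the complex transfer matrix 𝕆_K. -/
/-- The index set of the transfer matrix: subsets of `{1,…,K}` containing no two
consecutive integers (independent sets of a path with `K` vertices), encoded as
subsets `C` of `Fin K`, where `k : Fin K` represents the integer `k + 1`. -/
abbrev PathIndep (K : ℕ) :=
  {C : Finset (Fin K) // ∀ c ∈ C, ∀ d ∈ C, (c : ℕ) ≠ (d : ℕ) + 1}

/-- The transfer matrix `𝕆_K`, of size `F_{K+1}`, with rows and columns indexed by the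
subsets of `{1,…,K}` with no two consecutive elements: the entry in row `C` and column
`D` is `i^(|C|+|D|)` if `C ∩ D = ∅`, and `0` otherwise. -/
def Omat (K : ℕ) : Matrix (PathIndep K) (PathIndep K) ℂ :=
  fun C D => if C.1 ∩ D.1 = ∅ then Complex.I ^ (C.1.card + D.1.card) else 0

/-- `μ` is an eigenvalue of the square complex matrix `A`: there is a nonzero
vector `v` with `A v = μ v`. -/
def IsEigenvalue {n : Type*} [Fintype n] (A : Matrix n n ℂ) (μ : ℂ) : Prop :=
  ∃ v : n → ℂ, v ≠ 0 ∧ A.mulVec v = μ • v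

namespace OmatAux
open Finset

def Ind {K : ℕ} (D : Finset (Fin K)) : Prop := ∀ c ∈ D, ∀ d ∈ D, (c : ℕ) ≠ (d : ℕ) + 1

instance {K : ℕ} : DecidablePred (Ind (K := K)) := fun D => by unfold Ind; exact inferInstance

lemma ind_mono {K : ℕ} {D E : Finset (Fin K)} (h : D ⊆ E) (hE : Ind E) : Ind D :=
  fun c hc d hd => hE c (h hc) d (h hd)

lemma ind_empty {K : ℕ} : Ind (∅ : Finset (Fin K)) := by simp [Ind]

def Sset (K : ℕ) : Finset (Fin K) := univ.filter (fun k => (k : ℕ) % 3 = 0)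
def Mset (K : ℕ) : Finset (Fin K) := univ.filter (fun k => ¬ (k : ℕ) % 3 = 0)

lemma mem_Sset {K : ℕ} {k : Fin K} : k ∈ Sset K ↔ (k : ℕ) % 3 = 0 := by simp [Sset]
lemma mem_Mset {K : ℕ} {k : Fin K} : k ∈ Mset K ↔ ¬ (k : ℕ) % 3 = 0 := by simp [Mset]

lemma ind_of_subset_Sset {K : ℕ} {D : Finset (Fin K)} (h : D ⊆ Sset K) : Ind D := by
  intro c hc d hd hcd
  have h1 := mem_Sset.1 (h hc); have h2 := mem_Sset.1 (h hd); omega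

lemma Sset_nonempty {K : ℕ} (hK : 1 ≤ K) : (Sset K).Nonempty :=
  ⟨⟨0, hK⟩, mem_Sset.2 (by simp)⟩

lemma card_Sset {K : ℕ} (hK3 : K % 3 = 1) : (Sset K).card = K / 3 + 1 := by
  have hKp : K = 3 * (K / 3) + 1 := by omega
  set p := K / 3 with hp
  have he : ∀ j : Fin (p + 1), 3 * (j : ℕ) < K := fun j => by have := j.isLt; omega
  have himg : Sset K = Finset.univ.image (fun j : Fin (p+1) => (⟨3 * j, he j⟩ : Fin K)) := by
    ext k
    simp only [mem_Sset, Finset.mem_image, Finset.mem_univ, true_and]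
    constructor
    · intro hk
      have hk3 : (k : ℕ) / 3 < p + 1 := by have := k.isLt; omega
      exact ⟨⟨(k : ℕ) / 3, hk3⟩, by apply Fin.ext; simp; omega⟩
    · rintro ⟨j, rfl⟩; simp [Nat.mul_mod_right]
  rw [himg, Finset.card_image_of_injective _ (fun a b hab => by
    have h : 3 * (a : ℕ) = 3 * (b : ℕ) := congrArg Fin.val hab
    exact Fin.ext (by omega))]
  simp

lemma card_Mset {K : ℕ} (hK3 : K % 3 = 1) : (Mset K).card = 2 * (K / 3) := by
  have h := Finset.card_filter_add_card_filter_not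
    (s := (Finset.univ : Finset (Fin K))) (p := fun k => (k : ℕ) % 3 = 0)
  have hs := card_Sset hK3
  simp only [Finset.card_univ, Fintype.card_fin] at h
  have : (Sset K).card + (Mset K).card = K := h
  omega


lemma pairsum {K : ℕ} (hK3 : K % 3 = 1) :
    ∀ n (T : Finset (Fin K)), T.card = n →
    (∀ t ∈ T, (t : ℕ) % 3 ≠ 0) →
    (∀ t ∈ T, ∀ u : Fin K, ((u : ℕ) = (t : ℕ) + 1 ∨ (u : ℕ) + 1 = (t : ℕ)) →
      (u : ℕ) % 3 ≠ 0 → u ∈ T) →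
    ∃ q : ℕ, T.card = 2 * q ∧
      ∑ D ∈ T.powerset.filter Ind, (-1 : ℂ) ^ D.card = (-1) ^ q := by
  intro n
  induction n using Nat.strong_induction_on with
  | _ n ih =>
    intro T hTn hT1 hT2
    rcases T.eq_empty_or_nonempty with rfl | ⟨t, ht⟩
    · refine ⟨0, by simp, ?_⟩
      rw [Finset.powerset_empty, Finset.filter_singleton]
      simp [ind_empty]
    · -- find x ∈ T with x % 3 = 1
      have hx : ∃ x ∈ T, (x : ℕ) % 3 = 1 := by
        have h1 := hT1 t ht
        by_cases h : (t : ℕ) % 3 = 1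
        · exact ⟨t, ht, h⟩
        · have h2 : (t : ℕ) % 3 = 2 := by omega
          have hlt : (t : ℕ) - 1 < K := by have := t.isLt; omega
          refine ⟨⟨(t : ℕ) - 1, hlt⟩, hT2 t ht _ (Or.inr (by simp; omega)) (by simp; omega),
            by simp; omega⟩
      obtain ⟨x, hxT, hx1⟩ := hx
      have hxK : (x : ℕ) + 1 < K := by have := x.isLt; omega
      set y : Fin K := ⟨(x : ℕ) + 1, hxK⟩ with hy
      have hyval : (y : ℕ) = (x : ℕ) + 1 := rfl
      have hyT : y ∈ T := hT2 x hxT y (Or.inl hyval) (by omega)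
      have hxy : x ≠ y := fun h => by have := congrArg Fin.val h; omega
      have hyx : y ∈ T.erase x := Finset.mem_erase.2 ⟨Ne.symm hxy, hyT⟩
      set T' : Finset (Fin K) := (T.erase x).erase y with hT'
      have hsubT' : T' ⊆ T := (Finset.erase_subset _ _).trans (Finset.erase_subset _ _)
      have hxT' : x ∉ T' := fun h => (Finset.mem_erase.1 ((Finset.mem_erase.1 h).2)).1 rfl
      have hyT' : y ∉ T' := fun h => (Finset.mem_erase.1 h).1 rfl
      have hcard' : T'.card + 2 = n := by
        have h1 : (T.erase x).card + 1 = T.card := Finset.card_erase_add_one hxT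
        have h2 : T'.card + 1 = (T.erase x).card := Finset.card_erase_add_one hyx
        omega
      have hT1' : ∀ s ∈ T', (s : ℕ) % 3 ≠ 0 := fun s hs => hT1 s (hsubT' hs)
      have hT2' : ∀ s ∈ T', ∀ u : Fin K, ((u : ℕ) = (s : ℕ) + 1 ∨ (u : ℕ) + 1 = (s : ℕ)) →
          (u : ℕ) % 3 ≠ 0 → u ∈ T' := by
        intro s hs u hrel hu
        have hsT := hsubT' hs
        have hsmod := hT1 s hsT
        have huT : u ∈ T := hT2 s hsT u hrel hu
        have hux : u ≠ x := by
          intro h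
          have hval : (u : ℕ) = (x : ℕ) := congrArg Fin.val h
          rcases hrel with h' | h'
          · exact hsmod (by omega)
          · have : s = y := Fin.ext (by omega)
            exact hyT' (this ▸ hs)
        have huy : u ≠ y := by
          intro h
          have hval : (u : ℕ) = (y : ℕ) := congrArg Fin.val h
          rcases hrel with h' | h'
          · have : s = x := Fin.ext (by omega)
            exact hxT' (this ▸ hs)
          · exact hsmod (by omega)
        exact Finset.mem_erase.2 ⟨huy, Finset.mem_erase.2 ⟨hux, huT⟩⟩
      obtain ⟨q', hq1, hq2⟩ := ih (n - 2) (by omega) T' (by omega) hT1' hT2'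
      have hindx : ∀ E ⊆ T', Ind E → Ind (insert x E) := by
        intro E hE hIE c hc d hd hcon
        rcases Finset.mem_insert.1 hc with hcx | hcE <;> rcases Finset.mem_insert.1 hd with hdx | hdE
        · have h1 : (c : ℕ) = (x : ℕ) := congrArg Fin.val hcx
          have h2 : (d : ℕ) = (x : ℕ) := congrArg Fin.val hdx
          omega
        · have h1 : (c : ℕ) = (x : ℕ) := congrArg Fin.val hcx
          have := hT1' d (hE hdE); omega
        · have h2 : (d : ℕ) = (x : ℕ) := congrArg Fin.val hdx
          have : c = y := Fin.ext (by omega)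
          exact hyT' (hE (this ▸ hcE))
        · exact hIE c hcE d hdE hcon
      have hindy : ∀ E ⊆ T', Ind E → Ind (insert y E) := by
        intro E hE hIE c hc d hd hcon
        rcases Finset.mem_insert.1 hc with hcy | hcE <;> rcases Finset.mem_insert.1 hd with hdy | hdE
        · have h1 : (c : ℕ) = (y : ℕ) := congrArg Fin.val hcy
          have h2 : (d : ℕ) = (y : ℕ) := congrArg Fin.val hdy
          omega
        · have h1 : (c : ℕ) = (y : ℕ) := congrArg Fin.val hcy
          have : d = x := Fin.ext (by omega)
          exact hxT' (hE (this ▸ hdE))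
        · have h2 : (d : ℕ) = (y : ℕ) := congrArg Fin.val hdy
          have := hT1' c (hE hcE); omega
        · exact hIE c hcE d hdE hcon
      set A := T'.powerset.filter (Ind (K := K)) with hA
      set f : Finset (Fin K) → ℂ := fun D => (-1 : ℂ) ^ D.card with hf
      set St := T.powerset.filter (Ind (K := K)) with hSt
      have key1 : ∀ D : Finset (Fin K), x ∈ D → f D = - f (D.erase x) := by
        intro D hxD
        have hc : D.card ≠ 0 := Finset.card_ne_zero_of_mem hxD
        simp only [hf, Finset.card_erase_of_mem hxD]
        have h2 : D.card - 1 + 1 = D.card := by omega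
        conv_lhs => rw [← h2]
        rw [pow_succ]; ring
      have key1y : ∀ D : Finset (Fin K), y ∈ D → f D = - f (D.erase y) := by
        intro D hyD
        have hc : D.card ≠ 0 := Finset.card_ne_zero_of_mem hyD
        simp only [hf, Finset.card_erase_of_mem hyD]
        have h2 : D.card - 1 + 1 = D.card := by omega
        conv_lhs => rw [← h2]
        rw [pow_succ]; ring
      have hsum1 : ∑ D ∈ St.filter (fun D => x ∈ D), f D = ∑ E ∈ A, (- f E) := by
        refine Finset.sum_bij' (fun D _ => D.erase x) (fun E _ => insert x E) ?_ ?_ ?_ ?_ ?_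
        · intro D hD
          rw [Finset.mem_filter] at hD
          obtain ⟨hD', hxD⟩ := hD
          rw [hSt, Finset.mem_filter, Finset.mem_powerset] at hD'
          obtain ⟨hDT, hDI⟩ := hD'
          have hyD : y ∉ D := fun hyD => hDI y hyD x hxD hyval
          rw [hA, Finset.mem_filter, Finset.mem_powerset]
          refine ⟨?_, ind_mono (Finset.erase_subset _ _) hDI⟩
          rw [hT', Finset.subset_erase]
          exact ⟨Finset.erase_subset_erase x hDT,
            fun h => hyD (Finset.mem_of_mem_erase h)⟩
        · intro E hE
          rw [hA, Finset.mem_filter, Finset.mem_powerset] at hE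
          obtain ⟨hET, hEI⟩ := hE
          rw [Finset.mem_filter, hSt, Finset.mem_filter, Finset.mem_powerset]
          exact ⟨⟨Finset.insert_subset hxT (hET.trans hsubT'), hindx E hET hEI⟩,
            Finset.mem_insert_self x E⟩
        · intro D hD
          rw [Finset.mem_filter] at hD
          exact Finset.insert_erase hD.2
        · intro E hE
          rw [hA, Finset.mem_filter, Finset.mem_powerset] at hE
          exact Finset.erase_insert (fun h => hxT' (hE.1 h))
        · intro D hD
          rw [Finset.mem_filter] at hD
          rw [key1 D hD.2]
      have hsum2 : ∑ D ∈ (St.filter (fun D => x ∉ D)).filter (fun D => y ∈ D), f D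
          = ∑ E ∈ A, (- f E) := by
        refine Finset.sum_bij' (fun D _ => D.erase y) (fun E _ => insert y E) ?_ ?_ ?_ ?_ ?_
        · intro D hD
          rw [Finset.mem_filter] at hD
          obtain ⟨hD', hyD⟩ := hD
          rw [Finset.mem_filter] at hD'
          obtain ⟨hD'', hxD⟩ := hD'
          rw [hSt, Finset.mem_filter, Finset.mem_powerset] at hD''
          obtain ⟨hDT, hDI⟩ := hD''
          rw [hA, Finset.mem_filter, Finset.mem_powerset]
          refine ⟨?_, ind_mono (Finset.erase_subset _ _) hDI⟩
          rw [hT', Finset.subset_erase]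
          refine ⟨?_, Finset.notMem_erase _ _⟩
          rw [Finset.subset_erase]
          exact ⟨(Finset.erase_subset _ _).trans hDT,
            fun h => hxD (Finset.mem_of_mem_erase h)⟩
        · intro E hE
          rw [hA, Finset.mem_filter, Finset.mem_powerset] at hE
          obtain ⟨hET, hEI⟩ := hE
          rw [Finset.mem_filter, Finset.mem_filter, hSt, Finset.mem_filter, Finset.mem_powerset]
          refine ⟨⟨⟨Finset.insert_subset hyT (hET.trans hsubT'), hindy E hET hEI⟩, ?_⟩,
            Finset.mem_insert_self y E⟩
          rw [Finset.mem_insert]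
          rintro (h | h)
          · exact hxy h
          · exact hxT' (hET h)
        · intro D hD
          rw [Finset.mem_filter] at hD
          exact Finset.insert_erase hD.2
        · intro E hE
          rw [hA, Finset.mem_filter, Finset.mem_powerset] at hE
          exact Finset.erase_insert (fun h => hyT' (hE.1 h))
        · intro D hD
          rw [Finset.mem_filter] at hD
          rw [key1y D hD.2]
      have hsum3 : (St.filter (fun D => x ∉ D)).filter (fun D => y ∉ D) = A := by
        ext D
        rw [Finset.mem_filter, Finset.mem_filter, hSt, Finset.mem_filter, Finset.mem_powerset,
          hA, Finset.mem_filter, Finset.mem_powerset, hT', Finset.subset_erase,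
          Finset.subset_erase]
        tauto
      have htot : ∑ D ∈ St, f D = - ∑ E ∈ A, f E := by
        rw [← Finset.sum_filter_add_sum_filter_not St (fun D => x ∈ D) f,
          ← Finset.sum_filter_add_sum_filter_not (St.filter (fun D => x ∉ D))
            (fun D => y ∈ D) f,
          hsum1, hsum2, hsum3, Finset.sum_neg_distrib]
        ring
      refine ⟨q' + 1, by omega, ?_⟩
      rw [hSt] at htot
      rw [htot, hq2, pow_succ]
      ring

lemma sum_pow_card_C {K : ℕ} (T : Finset (Fin K)) :
    ∑ D ∈ T.powerset, (-1 : ℂ) ^ D.card = if T = ∅ then 1 else 0 := by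
  have h := Finset.sum_powerset_neg_one_pow_card (x := T)
  have h2 : ((∑ D ∈ T.powerset, (-1 : ℤ) ^ D.card : ℤ) : ℂ)
      = ∑ D ∈ T.powerset, (-1 : ℂ) ^ D.card := by push_cast; rfl
  rw [← h2, h]
  split_ifs <;> simp

lemma MS_val {K : ℕ} (hK3 : K % 3 = 1) (C : Finset (Fin K)) (hC : Ind C) :
    ∑ D ∈ (Mset K \ C).powerset.filter Ind, (-1 : ℂ) ^ D.card
      = if C ∩ Mset K = ∅ then (-1) ^ (K / 3) else 0 := by
  by_cases h : C ∩ Mset K = ∅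
  · rw [if_pos h]
    have hMC : Mset K \ C = Mset K := by
      ext k
      simp only [Finset.mem_sdiff, and_iff_left_iff_imp]
      intro hk hkC
      exact absurd (Finset.mem_inter.2 ⟨hkC, hk⟩) (by rw [h]; exact Finset.notMem_empty k)
    rw [hMC]
    obtain ⟨q, hq1, hq2⟩ := pairsum hK3 (Mset K).card (Mset K) rfl
      (fun t ht => mem_Mset.1 ht) (fun t ht u hrel hu => mem_Mset.2 hu)
    have hcard := card_Mset (K := K) hK3
    have : q = K / 3 := by omega
    rw [hq2, this]
  · rw [if_neg h]
    obtain ⟨μ, hμ⟩ := Finset.nonempty_iff_ne_empty.2 h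
    rw [Finset.mem_inter] at hμ
    obtain ⟨hμC, hμM⟩ := hμ
    have hμ3 : (μ : ℕ) % 3 ≠ 0 := mem_Mset.1 hμM
    have hμK : (μ : ℕ) < K := μ.isLt
    -- the partner ν of μ
    have hνlt : (if (μ : ℕ) % 3 = 1 then (μ : ℕ) + 1 else (μ : ℕ) - 1) < K := by
      split_ifs with h1 <;> omega
    set ν : Fin K := ⟨if (μ : ℕ) % 3 = 1 then (μ : ℕ) + 1 else (μ : ℕ) - 1, hνlt⟩ with hν
    have hνval : (ν : ℕ) = if (μ : ℕ) % 3 = 1 then (μ : ℕ) + 1 else (μ : ℕ) - 1 := rfl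
    have hνrel : ((μ : ℕ) % 3 = 1 ∧ (ν : ℕ) = (μ : ℕ) + 1) ∨
        ((μ : ℕ) % 3 = 2 ∧ (ν : ℕ) + 1 = (μ : ℕ)) := by
      rw [hνval]; split_ifs with h1
      · exact Or.inl ⟨h1, rfl⟩
      · exact Or.inr ⟨by omega, by omega⟩
    have hν3 : (ν : ℕ) % 3 ≠ 0 := by rcases hνrel with ⟨h1, h2⟩ | ⟨h1, h2⟩ <;> omega
    have hνC : ν ∉ C := by
      intro hνC
      rcases hνrel with ⟨h1, h2⟩ | ⟨h1, h2⟩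
      · exact hC ν hνC μ hμC h2
      · exact hC μ hμC ν hνC (by omega)
    have hνS : ν ∈ Mset K \ C := Finset.mem_sdiff.2 ⟨mem_Mset.2 hν3, hνC⟩
    -- involution: toggle ν
    refine Finset.sum_involution
      (fun D _ => if ν ∈ D then D.erase ν else insert ν D) ?_ ?_ ?_ ?_
    · intro D hD
      by_cases hmem : ν ∈ D
      · have hc : D.card ≠ 0 := Finset.card_ne_zero_of_mem hmem
        have h2 : D.card - 1 + 1 = D.card := by omega
        have hpow : (-1 : ℂ) ^ D.card = -(-1 : ℂ) ^ (D.card - 1) := by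
          conv_lhs => rw [← h2]
          rw [pow_succ]; ring
        rw [if_pos hmem, Finset.card_erase_of_mem hmem, hpow]; ring
      · rw [if_neg hmem, Finset.card_insert_of_notMem hmem, pow_succ]; ring
    · intro D hD _
      by_cases hmem : ν ∈ D
      · rw [if_pos hmem]
        intro hEq
        have hne := Finset.notMem_erase ν D
        rw [hEq] at hne
        exact hne hmem
      · rw [if_neg hmem]
        intro hEq
        have hin := Finset.mem_insert_self ν D
        rw [hEq] at hin
        exact hmem hin
    · intro D hD
      rw [Finset.mem_filter, Finset.mem_powerset] at hD
      obtain ⟨hDsub, hDI⟩ := hD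
      by_cases hmem : ν ∈ D
      · rw [if_pos hmem, Finset.mem_filter, Finset.mem_powerset]
        exact ⟨(Finset.erase_subset _ _).trans hDsub, ind_mono (Finset.erase_subset _ _) hDI⟩
      · rw [if_neg hmem, Finset.mem_filter, Finset.mem_powerset]
        refine ⟨Finset.insert_subset hνS hDsub, ?_⟩
        intro c hc d hd hcon
        rcases Finset.mem_insert.1 hc with hcν | hcE <;> rcases Finset.mem_insert.1 hd with hdν | hdE
        · have h1 : (c : ℕ) = (ν : ℕ) := congrArg Fin.val hcν
          have h2 : (d : ℕ) = (ν : ℕ) := congrArg Fin.val hdν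
          omega
        · -- c = ν, d ∈ D : ν = d + 1
          have h1 : (c : ℕ) = (ν : ℕ) := congrArg Fin.val hcν
          have hd3 : (d : ℕ) % 3 ≠ 0 := mem_Mset.1 (Finset.mem_sdiff.1 (hDsub hdE)).1
          have hdC : d ∉ C := (Finset.mem_sdiff.1 (hDsub hdE)).2
          rcases hνrel with ⟨ha, hb⟩ | ⟨ha, hb⟩
          · -- ν = μ + 1 : d val = μ, so d = μ ∈ C, contra
            have : d = μ := Fin.ext (by omega)
            exact hdC (this ▸ hμC)
          · -- ν = μ - 1, ν % 3 = 1 : d val = ν - 1 ≡ 0 mod 3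
            omega
        · -- c ∈ D, d = ν : c = ν + 1
          have h2 : (d : ℕ) = (ν : ℕ) := congrArg Fin.val hdν
          have hc3 : (c : ℕ) % 3 ≠ 0 := mem_Mset.1 (Finset.mem_sdiff.1 (hDsub hcE)).1
          have hcC : c ∉ C := (Finset.mem_sdiff.1 (hDsub hcE)).2
          rcases hνrel with ⟨ha, hb⟩ | ⟨ha, hb⟩
          · -- ν = μ + 1, ν % 3 = 2 : c = ν + 1 ≡ 0 mod 3
            omega
          · -- ν + 1 = μ : c = μ ∈ C contra
            have : c = μ := Fin.ext (by omega)
            exact hcC (this ▸ hμC)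
        · exact hDI c hcE d hdE hcon
    · intro D hD
      by_cases hmem : ν ∈ D
      · rw [if_pos hmem]
        rw [if_neg (Finset.notMem_erase ν D)]
        exact Finset.insert_erase hmem
      · rw [if_neg hmem]
        rw [if_pos (Finset.mem_insert_self ν D)]
        exact Finset.erase_insert hmem

noncomputable def Wf (K : ℕ) (lam : ℂ) (D : Finset (Fin K)) : ℂ :=
  if D = ∅ then 1 + (-1) ^ (K / 3) * lam
  else if D ⊆ Sset K then (if D = Sset K then 2 - lam else 1)
  else if D ⊆ Mset K then (-1) ^ (K / 3) * lam
  else 0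

lemma subset_both {K : ℕ} {D : Finset (Fin K)} (h1 : D ⊆ Sset K) (h2 : D ⊆ Mset K) :
    D = ∅ := by
  rw [Finset.eq_empty_iff_forall_notMem]
  intro x hx
  exact (mem_Mset.1 (h2 hx)) (mem_Sset.1 (h1 hx))

lemma key {K : ℕ} (hK : 1 ≤ K) (hK3 : K % 3 = 1) (lam : ℂ) (hlam : lam ^ 2 = lam - 1)
    (C : Finset (Fin K)) (hC : Ind C) :
    ∑ D ∈ ((Finset.univ : Finset (Finset (Fin K))).filter Ind).filter
        (fun D => C ∩ D = ∅), (-1 : ℂ) ^ D.card * Wf K lam D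
      = lam * Wf K lam C := by
  set eps : ℂ := (-1) ^ (K / 3) with heps
  have heps2 : eps * eps = 1 := by rw [heps, ← mul_pow]; norm_num
  set Q := ((Finset.univ : Finset (Finset (Fin K))).filter Ind).filter
      (fun D => C ∩ D = ∅) with hQ
  have hmemQ : ∀ D : Finset (Fin K), D ∈ Q ↔ Ind D ∧ C ∩ D = ∅ := by
    intro D; simp [hQ]
  have hemptyQ : (∅ : Finset (Fin K)) ∈ Q :=
    (hmemQ ∅).2 ⟨ind_empty, Finset.inter_empty C⟩
  have hSne : Sset K ≠ ∅ := Finset.nonempty_iff_ne_empty.1 (Sset_nonempty hK)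
  -- split the weight into three parts
  have hW : ∀ D : Finset (Fin K), (-1 : ℂ) ^ D.card * Wf K lam D =
      (if D = ∅ then 1 + eps * lam else 0)
      + (-1 : ℂ) ^ D.card *
          (if D ≠ ∅ ∧ D ⊆ Sset K then (if D = Sset K then 2 - lam else 1) else 0)
      + (-1 : ℂ) ^ D.card * (if D ≠ ∅ ∧ D ⊆ Mset K then eps * lam else 0) := by
    intro D
    unfold Wf
    by_cases h0 : D = ∅
    · subst h0; simp [heps]
    · by_cases hs : D ⊆ Sset K
      · have hm : ¬ D ⊆ Mset K := fun hm => h0 (subset_both hs hm)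
        simp [h0, hs, hm]
      · by_cases hm : D ⊆ Mset K
        · simp [h0, hs, hm, heps]
        · simp [h0, hs, hm]
  rw [Finset.sum_congr rfl (fun D _ => hW D), Finset.sum_add_distrib,
    Finset.sum_add_distrib]
  -- term 0
  have hS0 : ∑ D ∈ Q, (if D = ∅ then 1 + eps * lam else 0) = 1 + eps * lam := by
    rw [Finset.sum_ite_eq' Q ∅ (fun _ => 1 + eps * lam), if_pos hemptyQ]
  -- term 1 : over powerset of Sset \ C
  set ps := (Sset K \ C).powerset with hps
  have hps_sub : ps ⊆ Q := by
    intro D hD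
    rw [hps, Finset.mem_powerset] at hD
    refine (hmemQ D).2 ⟨ind_of_subset_Sset (hD.trans Finset.sdiff_subset), ?_⟩
    rw [Finset.eq_empty_iff_forall_notMem]
    intro x hx
    rw [Finset.mem_inter] at hx
    exact (Finset.mem_sdiff.1 (hD hx.2)).2 hx.1
  have hvan1 : ∀ D ∈ Q, D ∉ ps → (-1 : ℂ) ^ D.card *
      (if D ≠ ∅ ∧ D ⊆ Sset K then (if D = Sset K then 2 - lam else 1) else 0) = 0 := by
    intro D hD hDps
    have hCD := ((hmemQ D).1 hD).2
    have hns : ¬ D ⊆ Sset K := by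
      intro hsub
      apply hDps
      rw [hps, Finset.mem_powerset]
      intro x hx
      refine Finset.mem_sdiff.2 ⟨hsub hx, fun hxC => ?_⟩
      rw [Finset.eq_empty_iff_forall_notMem] at hCD
      exact hCD x (Finset.mem_inter.2 ⟨hxC, hx⟩)
    rw [if_neg (fun hcon => hns hcon.2), mul_zero]
  have hsum1 : ∑ D ∈ Q, (-1 : ℂ) ^ D.card *
      (if D ≠ ∅ ∧ D ⊆ Sset K then (if D = Sset K then 2 - lam else 1) else 0)
      = ∑ D ∈ ps, (-1 : ℂ) ^ D.card *
      (if D ≠ ∅ ∧ D ⊆ Sset K then (if D = Sset K then 2 - lam else 1) else 0) :=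
    (Finset.sum_subset hps_sub hvan1).symm
  have hstep1 : ∀ D ∈ ps, (-1 : ℂ) ^ D.card *
      (if D ≠ ∅ ∧ D ⊆ Sset K then (if D = Sset K then 2 - lam else 1) else 0)
      = (-1 : ℂ) ^ D.card + (if D = ∅ then (-1 : ℂ) else 0)
        + (if D = Sset K then (-1 : ℂ) ^ D.card * (1 - lam) else 0) := by
    intro D hD
    have hDs : D ⊆ Sset K := (Finset.mem_powerset.1 hD).trans Finset.sdiff_subset
    by_cases h0 : D = ∅
    · subst h0
      have h1 : (∅ : Finset (Fin K)) ≠ Sset K := fun h => hSne h.symm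
      simp [h1]
    · by_cases hS : D = Sset K
      · rw [if_pos ⟨h0, hDs⟩, if_pos hS, if_neg h0, if_pos hS]; ring
      · rw [if_pos ⟨h0, hDs⟩, if_neg hS, if_neg h0, if_neg hS]; ring
  rw [hS0, hsum1, Finset.sum_congr rfl hstep1, Finset.sum_add_distrib,
    Finset.sum_add_distrib]
  have hA1 : ∑ D ∈ ps, (-1 : ℂ) ^ D.card = if Sset K \ C = ∅ then 1 else 0 :=
    sum_pow_card_C _
  have hA2 : ∑ D ∈ ps, (if D = ∅ then (-1 : ℂ) else 0) = -1 := by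
    rw [Finset.sum_ite_eq' ps ∅ (fun _ => (-1 : ℂ)),
      if_pos (Finset.empty_mem_powerset _)]
  have hA3 : ∑ D ∈ ps, (if D = Sset K then (-1 : ℂ) ^ D.card * (1 - lam) else 0)
      = if Sset K ⊆ Sset K \ C then (-1 : ℂ) ^ (Sset K).card * (1 - lam) else 0 := by
    rw [Finset.sum_ite_eq' ps (Sset K) (fun D => (-1 : ℂ) ^ D.card * (1 - lam))]
    congr 1
    simp [hps]
  -- term 2 : over independent subsets of Mset \ C
  set J := (Mset K \ C).powerset.filter (Ind (K := K)) with hJ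
  have hJ_sub : J ⊆ Q := by
    intro D hD
    rw [hJ, Finset.mem_filter, Finset.mem_powerset] at hD
    refine (hmemQ D).2 ⟨hD.2, ?_⟩
    rw [Finset.eq_empty_iff_forall_notMem]
    intro x hx
    rw [Finset.mem_inter] at hx
    exact (Finset.mem_sdiff.1 (hD.1 hx.2)).2 hx.1
  have hvan2 : ∀ D ∈ Q, D ∉ J → (-1 : ℂ) ^ D.card *
      (if D ≠ ∅ ∧ D ⊆ Mset K then eps * lam else 0) = 0 := by
    intro D hD hDJ
    obtain ⟨hDI, hCD⟩ := (hmemQ D).1 hD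
    have hnm : ¬ D ⊆ Mset K := by
      intro hsub
      apply hDJ
      rw [hJ, Finset.mem_filter, Finset.mem_powerset]
      refine ⟨fun x hx => Finset.mem_sdiff.2 ⟨hsub hx, fun hxC => ?_⟩, hDI⟩
      rw [Finset.eq_empty_iff_forall_notMem] at hCD
      exact hCD x (Finset.mem_inter.2 ⟨hxC, hx⟩)
    rw [if_neg (fun hcon => hnm hcon.2), mul_zero]
  have hsum2 : ∑ D ∈ Q, (-1 : ℂ) ^ D.card *
      (if D ≠ ∅ ∧ D ⊆ Mset K then eps * lam else 0)
      = ∑ D ∈ J, (-1 : ℂ) ^ D.card * (if D ≠ ∅ ∧ D ⊆ Mset K then eps * lam else 0) :=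
    (Finset.sum_subset hJ_sub hvan2).symm
  have hstep2 : ∀ D ∈ J, (-1 : ℂ) ^ D.card *
      (if D ≠ ∅ ∧ D ⊆ Mset K then eps * lam else 0)
      = eps * lam * (-1 : ℂ) ^ D.card - (if D = ∅ then eps * lam else 0) := by
    intro D hD
    have hDm : D ⊆ Mset K :=
      ((Finset.mem_powerset.1 (Finset.mem_filter.1 hD).1).trans Finset.sdiff_subset)
    by_cases h0 : D = ∅
    · subst h0; simp
    · rw [if_pos ⟨h0, hDm⟩, if_neg h0]; ring
  have hemptyJ : (∅ : Finset (Fin K)) ∈ J := by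
    rw [hJ, Finset.mem_filter, Finset.mem_powerset]
    exact ⟨Finset.empty_subset _, ind_empty⟩
  have hMS : ∑ D ∈ J, (-1 : ℂ) ^ D.card
      = if C ∩ Mset K = ∅ then eps else 0 := MS_val hK3 C hC
  rw [hsum2, Finset.sum_congr rfl hstep2, Finset.sum_sub_distrib, ← Finset.mul_sum, hMS]
  have hA4 : ∑ D ∈ J, (if D = ∅ then eps * lam else 0) = eps * lam := by
    rw [Finset.sum_ite_eq' J ∅ (fun _ => eps * lam), if_pos hemptyJ]
  rw [hA1, hA2, hA3, hA4]
  have hm1 : (-1 : ℂ) ^ (Sset K).card = -eps := by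
    rw [card_Sset hK3, pow_succ, heps]; ring
  rw [hm1]
  -- now the case analysis on C
  by_cases h0 : C = ∅
  · subst h0
    have e1 : ¬ (Sset K \ (∅ : Finset (Fin K)) = ∅) := by
      rw [Finset.sdiff_empty]; exact hSne
    have e2 : Sset K ⊆ Sset K \ (∅ : Finset (Fin K)) := by
      rw [Finset.sdiff_empty]
    have e3 : (∅ : Finset (Fin K)) ∩ Mset K = ∅ := Finset.empty_inter _
    rw [if_neg e1, if_pos e2, if_pos e3]
    unfold Wf
    rw [if_pos rfl]
    linear_combination lam * heps2 - eps * hlam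
  · by_cases hs : C ⊆ Sset K
    · by_cases hSe : C = Sset K
      · subst hSe
        have e1 : Sset K \ Sset K = ∅ := Finset.sdiff_self (Sset K)
        have e2 : ¬ (Sset K ⊆ Sset K \ Sset K) := by
          rw [e1]
          intro hcon
          exact h0 (Finset.subset_empty.1 hcon)
        have e3 : Sset K ∩ Mset K = ∅ := by
          rw [Finset.eq_empty_iff_forall_notMem]
          intro x hx
          rw [Finset.mem_inter] at hx
          exact (mem_Mset.1 hx.2) (mem_Sset.1 hx.1)
        rw [if_pos e1, if_neg e2, if_pos e3]
        unfold Wf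
        rw [if_neg h0, if_pos Finset.Subset.rfl, if_pos rfl]
        linear_combination lam * heps2 + hlam
      · obtain ⟨x, hx⟩ := Finset.nonempty_iff_ne_empty.2 h0
        have e1 : ¬ (Sset K \ C = ∅) := by
          rw [Finset.sdiff_eq_empty_iff_subset]
          intro hcon
          exact hSe (Finset.Subset.antisymm hs hcon)
        have e2 : ¬ (Sset K ⊆ Sset K \ C) := by
          intro hcon
          exact (Finset.mem_sdiff.1 (hcon (hs hx))).2 hx
        have e3 : C ∩ Mset K = ∅ := by
          rw [Finset.eq_empty_iff_forall_notMem]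
          intro z hz
          rw [Finset.mem_inter] at hz
          exact (mem_Mset.1 hz.2) (mem_Sset.1 (hs hz.1))
        rw [if_neg e1, if_neg e2, if_pos e3]
        unfold Wf
        rw [if_neg h0, if_pos hs, if_neg hSe]
        linear_combination lam * heps2
    · by_cases hm : C ⊆ Mset K
      · obtain ⟨x, hx⟩ := Finset.nonempty_iff_ne_empty.2 h0
        have e2 : Sset K ⊆ Sset K \ C := by
          intro z hz
          refine Finset.mem_sdiff.2 ⟨hz, fun hzC => ?_⟩
          exact (mem_Mset.1 (hm hzC)) (mem_Sset.1 hz)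
        have e1 : ¬ (Sset K \ C = ∅) := by
          intro hcon
          rw [hcon] at e2
          exact hSne (Finset.subset_empty.1 e2)
        have e3 : ¬ (C ∩ Mset K = ∅) := by
          intro hcon
          rw [Finset.eq_empty_iff_forall_notMem] at hcon
          exact hcon x (Finset.mem_inter.2 ⟨hx, hm hx⟩)
        rw [if_neg e1, if_pos e2, if_neg e3]
        unfold Wf
        rw [if_neg h0, if_neg hs, if_pos hm]
        linear_combination (-eps) * hlam
      · -- mixed case
        obtain ⟨μ, hμC, hμS⟩ := Finset.not_subset.1 hs
        obtain ⟨σ, hσC, hσM⟩ := Finset.not_subset.1 hm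
        have hμ3 : (μ : ℕ) % 3 ≠ 0 := fun h => hμS (mem_Sset.2 h)
        have hσ3 : (σ : ℕ) % 3 = 0 := by
          by_contra h
          exact hσM (mem_Mset.2 h)
        have e3 : ¬ (C ∩ Mset K = ∅) := by
          intro hcon
          rw [Finset.eq_empty_iff_forall_notMem] at hcon
          exact hcon μ (Finset.mem_inter.2 ⟨hμC, mem_Mset.2 hμ3⟩)
        have e2 : ¬ (Sset K ⊆ Sset K \ C) := by
          intro hcon
          exact (Finset.mem_sdiff.1 (hcon (mem_Sset.2 hσ3))).2 hσC
        have e1 : ¬ (Sset K \ C = ∅) := by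
          rw [Finset.sdiff_eq_empty_iff_subset]
          intro hSC
          have hμK : (μ : ℕ) < K := μ.isLt
          by_cases h1 : (μ : ℕ) % 3 = 1
          · have hlt : (μ : ℕ) - 1 < K := by omega
            have hxS : (⟨(μ : ℕ) - 1, hlt⟩ : Fin K) ∈ Sset K := mem_Sset.2 (by simp; omega)
            exact hC μ hμC ⟨(μ : ℕ) - 1, hlt⟩ (hSC hxS) (by simp; omega)
          · have h2 : (μ : ℕ) % 3 = 2 := by omega
            have hlt : (μ : ℕ) + 1 < K := by omega
            have hxS : (⟨(μ : ℕ) + 1, hlt⟩ : Fin K) ∈ Sset K := mem_Sset.2 (by simp; omega)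
            exact hC ⟨(μ : ℕ) + 1, hlt⟩ (hSC hxS) μ hμC (by simp)
        rw [if_neg e1, if_neg e2, if_neg e3]
        unfold Wf
        rw [if_neg h0, if_neg hs, if_neg hm]
        ring

lemma master {K : ℕ} (hK : 1 ≤ K) (hK3 : K % 3 = 1) (lam : ℂ) (hlam : lam ^ 2 = lam - 1) :
    IsEigenvalue (Omat K) lam := by
  classical
  refine ⟨fun C => Complex.I ^ C.1.card * Wf K lam C.1, ?_, ?_⟩
  · intro hzero
    have hSind : ∀ c ∈ Sset K, ∀ d ∈ Sset K, (c : ℕ) ≠ (d : ℕ) + 1 :=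
      ind_of_subset_Sset Finset.Subset.rfl
    have hz := congrFun hzero ⟨Sset K, hSind⟩
    simp only [Pi.zero_apply] at hz
    have hWS : Wf K lam (Sset K) = 2 - lam := by
      unfold Wf
      rw [if_neg (Finset.nonempty_iff_ne_empty.1 (Sset_nonempty hK)),
        if_pos Finset.Subset.rfl, if_pos rfl]
    rw [hWS] at hz
    rcases mul_eq_zero.1 hz with h | h
    · exact pow_ne_zero _ Complex.I_ne_zero h
    · have h2 : lam = 2 := by linear_combination -h
      rw [h2] at hlam; norm_num at hlam
  · funext C
    have hCInd : Ind C.1 := C.2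
    simp only [Matrix.mulVec, dotProduct, Omat, Pi.smul_apply, smul_eq_mul]
    have hconv : ∑ D : PathIndep K,
        (if C.1 ∩ D.1 = ∅ then Complex.I ^ (C.1.card + D.1.card) else 0) *
          (Complex.I ^ D.1.card * Wf K lam D.1)
        = ∑ E ∈ (Finset.univ : Finset (Finset (Fin K))).filter (Ind (K := K)),
          (if C.1 ∩ E = ∅ then Complex.I ^ (C.1.card + E.card) else 0) *
            (Complex.I ^ E.card * Wf K lam E) :=
      (Finset.sum_subtype
        (p := fun E : Finset (Fin K) => ∀ c ∈ E, ∀ d ∈ E, (c : ℕ) ≠ (d : ℕ) + 1)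
        ((Finset.univ : Finset (Finset (Fin K))).filter (Ind (K := K)))
        (fun x => by simp [Ind])
        (fun E => (if C.1 ∩ E = ∅ then Complex.I ^ (C.1.card + E.card) else 0) *
          (Complex.I ^ E.card * Wf K lam E))).symm
    rw [hconv]
    have hpt : ∀ E ∈ (Finset.univ : Finset (Finset (Fin K))).filter (Ind (K := K)),
        (if C.1 ∩ E = ∅ then Complex.I ^ (C.1.card + E.card) else 0) *
          (Complex.I ^ E.card * Wf K lam E)
        = Complex.I ^ C.1.card *
          (if C.1 ∩ E = ∅ then (-1 : ℂ) ^ E.card * Wf K lam E else 0) := by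
      intro E _
      by_cases h : C.1 ∩ E = ∅
      · rw [if_pos h, if_pos h, pow_add]
        have hii : (Complex.I : ℂ) ^ E.card * Complex.I ^ E.card = (-1 : ℂ) ^ E.card := by
          rw [← mul_pow, Complex.I_mul_I]
        linear_combination (Complex.I ^ C.1.card * Wf K lam E) * hii
      · rw [if_neg h, if_neg h, zero_mul, mul_zero]
    rw [Finset.sum_congr rfl hpt, ← Finset.mul_sum, ← Finset.sum_filter,
      key hK hK3 lam hlam C.1 hCInd]
    ring

end OmatAux

/-- For `K ≡ 1 (mod 3)`, both `e^(iπ/3)` and `e^(-iπ/3)` are eigenvalues of `𝕆_K`. -/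
theorem Omat_eigenvalues_K1 (K : ℕ) (hK : 1 ≤ K) (hK3 : K % 3 = 1) :
    IsEigenvalue (Omat K) (Complex.exp (Real.pi * Complex.I / 3)) ∧
    IsEigenvalue (Omat K) (Complex.exp (-(Real.pi * Complex.I) / 3)) := by
  have hsin : 0 < Real.sin (Real.pi / 3) :=
    Real.sin_pos_of_pos_of_lt_pi (by positivity) (by linarith [Real.pi_pos])
  have hfac : ∀ lam : ℂ, lam ^ 3 = -1 → lam ≠ -1 → lam ^ 2 = lam - 1 := by
    intro lam h3 hne
    have hf : (lam + 1) * (lam ^ 2 - lam + 1) = 0 := by linear_combination h3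
    rcases mul_eq_zero.1 hf with h | h
    · exact absurd (by linear_combination h) hne
    · linear_combination h
  constructor
  · apply OmatAux.master hK hK3
    apply hfac
    · rw [← Complex.exp_nat_mul,
        show ((3 : ℕ) : ℂ) * (Real.pi * Complex.I / 3) = Real.pi * Complex.I by
          push_cast; ring,
        Complex.exp_pi_mul_I]
    · intro h
      have h1 : (Real.pi : ℂ) * Complex.I / 3 = ((Real.pi / 3 : ℝ) : ℂ) * Complex.I := by
        push_cast; ring
      have h2 := congrArg Complex.im h
      have him : (-1 : ℂ).im = 0 := by simp
      rw [h1, Complex.exp_ofReal_mul_I_im, him] at h2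
      linarith
  · apply OmatAux.master hK hK3
    apply hfac
    · rw [← Complex.exp_nat_mul,
        show ((3 : ℕ) : ℂ) * (-(Real.pi * Complex.I) / 3) = -(Real.pi * Complex.I) by
          push_cast; ring,
        Complex.exp_neg, Complex.exp_pi_mul_I]
      norm_num
    · intro h
      have h1 : -((Real.pi : ℂ) * Complex.I) / 3 = ((-(Real.pi / 3) : ℝ) : ℂ) * Complex.I := by
        push_cast; ring
      have h2 := congrArg Complex.im h
      have him : (-1 : ℂ).im = 0 := by simp
      rw [h1, Complex.exp_ofReal_mul_I_im, Real.sin_neg, him] at h2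
      linarith
end

section
/- Let K ≥ 1 with K ≡ 2 (mod 3). Then every 2K-th root of unity ζ with ζ ≠ −1 is an eigenvalue of the complex transfer matrix 𝕆_K. -/
def IndP {K : ℕ} (C : Finset (Fin K)) : Prop := ∀ c ∈ C, ∀ d ∈ C, (c : ℕ) ≠ (d : ℕ) + 1

instance {K : ℕ} (C : Finset (Fin K)) : Decidable (IndP C) := by
  unfold IndP; infer_instance

lemma IndP.mono {K : ℕ} {C D : Finset (Fin K)} (h : C ⊆ D) (hD : IndP D) : IndP C :=
  fun c hc d hd => hD c (h hc) d (h hd)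

lemma IndP_empty {K : ℕ} : IndP (∅ : Finset (Fin K)) := by
  intro c hc; simp at hc

lemma IndP_insert_iff {K : ℕ} {a : Fin K} {t : Finset (Fin K)}
    (hiso : ∀ b ∈ t, (b : ℕ) ≠ (a : ℕ) + 1 ∧ (a : ℕ) ≠ (b : ℕ) + 1) :
    IndP (insert a t) ↔ IndP t := by
  constructor
  · exact fun h => h.mono (Finset.subset_insert a t)
  · intro h c hc d hd
    rcases Finset.mem_insert.1 hc with h1 | h1
    · rcases Finset.mem_insert.1 hd with h2 | h2
      · rw [h1, h2]; omega
      · rw [h1]; exact (hiso d h2).2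
    · rcases Finset.mem_insert.1 hd with h2 | h2
      · rw [h2]; exact (hiso c h1).1
      · exact h c h1 d h2

noncomputable def zsum {K : ℕ} (X : Finset (Fin K)) : ℂ :=
  ∑ S ∈ X.powerset.filter IndP, (-1 : ℂ) ^ S.card

lemma zsum_as_sum {K : ℕ} (X : Finset (Fin K)) :
    zsum X = ∑ S ∈ X.powerset, (if IndP S then (-1 : ℂ) ^ S.card else 0) := by
  rw [zsum, Finset.sum_filter]

lemma zsum_empty {K : ℕ} : zsum (∅ : Finset (Fin K)) = 1 := by
  rw [zsum_as_sum]
  simp [IndP_empty]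

lemma zsum_insert_iso {K : ℕ} {a : Fin K} {X : Finset (Fin K)} (ha : a ∉ X)
    (hiso : ∀ b ∈ X, (b : ℕ) ≠ (a : ℕ) + 1 ∧ (a : ℕ) ≠ (b : ℕ) + 1) :
    zsum (insert a X) = 0 := by
  rw [zsum_as_sum, Finset.sum_powerset_insert ha]
  have h1 : ∀ t ∈ X.powerset, (if IndP (insert a t) then (-1 : ℂ) ^ (insert a t).card else 0)
      = -(if IndP t then (-1 : ℂ) ^ t.card else 0) := by
    intro t ht
    have htX := Finset.mem_powerset.1 ht
    have hat : a ∉ t := fun h => ha (htX h)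
    rw [if_congr (IndP_insert_iff (fun b hb => hiso b (htX hb))) rfl rfl,
        Finset.card_insert_of_notMem hat]
    split_ifs <;> ring
  rw [Finset.sum_congr rfl h1, ← zsum_as_sum]
  have : ∑ t ∈ X.powerset, -(if IndP t then (-1 : ℂ) ^ t.card else 0)
      = -∑ t ∈ X.powerset, (if IndP t then (-1 : ℂ) ^ t.card else 0) := by
    rw [Finset.sum_neg_distrib]
  rw [this, ← zsum_as_sum]
  ring

lemma zsum_insert_pair {K : ℕ} {p q : Fin K} {X : Finset (Fin K)}
    (hq : (q : ℕ) = (p : ℕ) + 1) (hpX : p ∉ X) (hqX : q ∉ X)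
    (hisoP : ∀ b ∈ X, (b : ℕ) ≠ (p : ℕ) + 1 ∧ (p : ℕ) ≠ (b : ℕ) + 1)
    (hisoQ : ∀ b ∈ X, (b : ℕ) ≠ (q : ℕ) + 1 ∧ (q : ℕ) ≠ (b : ℕ) + 1) :
    zsum (insert p (insert q X)) = - zsum X := by
  have hpq : p ≠ q := by
    intro h; rw [h] at hq; omega
  have hpiq : p ∉ insert q X := by
    simp only [Finset.mem_insert]
    rintro (h | h)
    · exact hpq h
    · exact hpX h
  rw [zsum_as_sum, Finset.sum_powerset_insert hpiq, Finset.sum_powerset_insert hqX,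
      Finset.sum_powerset_insert hqX]
  have e1 : ∀ t ∈ X.powerset, (if IndP (insert q t) then (-1 : ℂ) ^ (insert q t).card else 0)
      = -(if IndP t then (-1 : ℂ) ^ t.card else 0) := by
    intro t ht
    have htX := Finset.mem_powerset.1 ht
    have hat : q ∉ t := fun h => hqX (htX h)
    rw [if_congr (IndP_insert_iff (fun b hb => hisoQ b (htX hb))) rfl rfl,
        Finset.card_insert_of_notMem hat]
    split_ifs <;> ring
  have e2 : ∀ t ∈ X.powerset, (if IndP (insert p t) then (-1 : ℂ) ^ (insert p t).card else 0)
      = -(if IndP t then (-1 : ℂ) ^ t.card else 0) := by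
    intro t ht
    have htX := Finset.mem_powerset.1 ht
    have hat : p ∉ t := fun h => hpX (htX h)
    rw [if_congr (IndP_insert_iff (fun b hb => hisoP b (htX hb))) rfl rfl,
        Finset.card_insert_of_notMem hat]
    split_ifs <;> ring
  have e3 : ∀ t ∈ X.powerset,
      (if IndP (insert p (insert q t)) then (-1 : ℂ) ^ (insert p (insert q t)).card else 0)
        = 0 := by
    intro t ht
    have : ¬ IndP (insert p (insert q t)) := by
      intro h
      exact h q (Finset.mem_insert_of_mem (Finset.mem_insert_self q t))
        p (Finset.mem_insert_self p _) hq
    rw [if_neg this]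
  rw [Finset.sum_congr rfl e1, Finset.sum_congr rfl e2, Finset.sum_congr rfl e3,
      ← zsum_as_sum, Finset.sum_const_zero]
  have hneg : ∑ t ∈ X.powerset, -(if IndP t then (-1 : ℂ) ^ t.card else 0) = - zsum X := by
    rw [Finset.sum_neg_distrib, ← zsum_as_sum]
  rw [hneg]
  ring

def ppf {K : ℕ} : Fin K → Fin K := fun p => if h : (p : ℕ) + 1 < K then ⟨(p : ℕ) + 1, h⟩ else p

lemma ppf_val {K : ℕ} {p : Fin K} (h : (p : ℕ) + 1 < K) : ((ppf p : Fin K) : ℕ) = (p : ℕ) + 1 := by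
  simp [ppf, h]

lemma mem_ppimage {K : ℕ} {P : Finset (Fin K)} (hP : ∀ p ∈ P, (p : ℕ) + 1 < K) {c : Fin K} :
    c ∈ P.image ppf ↔ ∃ p ∈ P, (c : ℕ) = (p : ℕ) + 1 := by
  rw [Finset.mem_image]
  constructor
  · rintro ⟨p, hp, rfl⟩
    exact ⟨p, hp, ppf_val (hP p hp)⟩
  · rintro ⟨p, hp, hc⟩
    refine ⟨p, hp, ?_⟩
    apply Fin.ext
    rw [ppf_val (hP p hp), hc]

lemma Zpairs {K : ℕ} (P : Finset (Fin K)) (C : Finset (Fin K)) (hC : IndP C)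
    (hP : ∀ p ∈ P, (p : ℕ) + 1 < K)
    (hPP : ∀ p ∈ P, ∀ q ∈ P, p ≠ q →
      (q : ℕ) ≠ (p : ℕ) ∧ (q : ℕ) ≠ (p : ℕ) + 1 ∧ (q : ℕ) ≠ (p : ℕ) + 2 ∧
      (p : ℕ) ≠ (q : ℕ) + 1 ∧ (p : ℕ) ≠ (q : ℕ) + 2) :
    zsum ((P ∪ P.image ppf) \ C) =
      if (P ∪ P.image ppf) ∩ C = ∅ then (-1 : ℂ) ^ P.card else 0 := by
  induction P using Finset.induction with
  | empty => simp [zsum_empty]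
  | @insert p P' hpP' ih =>
    have hp1 : (p : ℕ) + 1 < K := hP p (Finset.mem_insert_self p P')
    set q : Fin K := ppf p with hqdef
    have hqv : (q : ℕ) = (p : ℕ) + 1 := ppf_val hp1
    have hP' : ∀ r ∈ P', (r : ℕ) + 1 < K := fun r hr => hP r (Finset.mem_insert_of_mem hr)
    have hPP' : ∀ r ∈ P', ∀ s ∈ P', r ≠ s →
        (s : ℕ) ≠ (r : ℕ) ∧ (s : ℕ) ≠ (r : ℕ) + 1 ∧ (s : ℕ) ≠ (r : ℕ) + 2 ∧
        (r : ℕ) ≠ (s : ℕ) + 1 ∧ (r : ℕ) ≠ (s : ℕ) + 2 :=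
      fun r hr s hs h => hPP r (Finset.mem_insert_of_mem hr) s (Finset.mem_insert_of_mem hs) h
    -- separation of p, q from B' := P' ∪ P'.image ppf
    have hsep : ∀ b ∈ P' ∪ P'.image ppf,
        (b : ℕ) ≠ (p : ℕ) ∧ (b : ℕ) ≠ (p : ℕ) + 1 ∧ (b : ℕ) ≠ (p : ℕ) + 2 ∧
        (p : ℕ) ≠ (b : ℕ) + 1 ∧ (p : ℕ) + 1 ≠ (b : ℕ) + 1 ∧ (p : ℕ) + 2 ≠ (b : ℕ) + 1 := by
      intro b hb
      rcases Finset.mem_union.1 hb with hb | hb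
      · have hne : p ≠ b := by rintro rfl; exact hpP' hb
        have := hPP p (Finset.mem_insert_self p P') b (Finset.mem_insert_of_mem hb)
          hne
        omega
      · rw [mem_ppimage hP'] at hb
        obtain ⟨r, hr, hbr⟩ := hb
        have hne : p ≠ r := by rintro rfl; exact hpP' hr
        have := hPP p (Finset.mem_insert_self p P') r (Finset.mem_insert_of_mem hr) hne
        omega
    have hpB' : p ∉ P' ∪ P'.image ppf := by
      intro hmem
      exact absurd rfl (hsep p hmem).1
    have hqB' : q ∉ P' ∪ P'.image ppf := by
      intro hmem
      have := (hsep q hmem).2.1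
      omega
    have hBins : (insert p P' ∪ (insert p P').image ppf)
        = insert p (insert q (P' ∪ P'.image ppf)) := by
      rw [Finset.image_insert, Finset.insert_union, Finset.union_insert, ← hqdef]
    rw [hBins]
    by_cases hpC : p ∈ C
    · -- q ∉ C since C independent
      have hqC : q ∉ C := by
        intro hqC
        exact hC q hqC p hpC hqv
      -- set equality : (insert p (insert q B')) \ C = insert q (B' \ C)
      have hset : (insert p (insert q (P' ∪ P'.image ppf))) \ C
          = insert q ((P' ∪ P'.image ppf) \ C) := by
        ext x
        simp only [Finset.mem_sdiff, Finset.mem_insert]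
        constructor
        · rintro ⟨(rfl | rfl | hx), hxc⟩
          · exact absurd hpC hxc
          · exact Or.inl rfl
          · exact Or.inr ⟨hx, hxc⟩
        · rintro (rfl | ⟨hx, hxc⟩)
          · exact ⟨Or.inr (Or.inl rfl), hqC⟩
          · exact ⟨Or.inr (Or.inr hx), hxc⟩
      rw [hset, zsum_insert_iso]
      · rw [if_neg]
        intro hemp
        have : p ∈ (insert p (insert q (P' ∪ P'.image ppf))) ∩ C :=
          Finset.mem_inter.2 ⟨Finset.mem_insert_self p _, hpC⟩
        rw [hemp] at this
        exact absurd this (Finset.notMem_empty p)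
      · intro hmem
        exact hqB' (Finset.mem_sdiff.1 hmem).1
      · intro b hb
        have := hsep b (Finset.mem_sdiff.1 hb).1
        omega
    · by_cases hqC : q ∈ C
      · have hset : (insert p (insert q (P' ∪ P'.image ppf))) \ C
            = insert p ((P' ∪ P'.image ppf) \ C) := by
          ext x
          simp only [Finset.mem_sdiff, Finset.mem_insert]
          constructor
          · rintro ⟨(rfl | rfl | hx), hxc⟩
            · exact Or.inl rfl
            · exact absurd hqC hxc
            · exact Or.inr ⟨hx, hxc⟩
          · rintro (rfl | ⟨hx, hxc⟩)
            · exact ⟨Or.inl rfl, hpC⟩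
            · exact ⟨Or.inr (Or.inr hx), hxc⟩
        rw [hset, zsum_insert_iso]
        · rw [if_neg]
          intro hemp
          have : q ∈ (insert p (insert q (P' ∪ P'.image ppf))) ∩ C :=
            Finset.mem_inter.2 ⟨Finset.mem_insert_of_mem (Finset.mem_insert_self q _), hqC⟩
          rw [hemp] at this
          exact absurd this (Finset.notMem_empty q)
        · intro hmem
          exact hpB' (Finset.mem_sdiff.1 hmem).1
        · intro b hb
          have := hsep b (Finset.mem_sdiff.1 hb).1
          omega
      · -- neither p nor q in C
        have hset : (insert p (insert q (P' ∪ P'.image ppf))) \ C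
            = insert p (insert q ((P' ∪ P'.image ppf) \ C)) := by
          ext x
          simp only [Finset.mem_sdiff, Finset.mem_insert]
          constructor
          · rintro ⟨(rfl | rfl | hx), hxc⟩
            · exact Or.inl rfl
            · exact Or.inr (Or.inl rfl)
            · exact Or.inr (Or.inr ⟨hx, hxc⟩)
          · rintro (rfl | rfl | ⟨hx, hxc⟩)
            · exact ⟨Or.inl rfl, hpC⟩
            · exact ⟨Or.inr (Or.inl rfl), hqC⟩
            · exact ⟨Or.inr (Or.inr hx), hxc⟩
        rw [hset, zsum_insert_pair hqv]
        · rw [ih hP' hPP', Finset.card_insert_of_notMem hpP']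
          have hiff : (insert p (insert q (P' ∪ P'.image ppf))) ∩ C = ∅ ↔
              (P' ∪ P'.image ppf) ∩ C = ∅ := by
            constructor
            · intro h
              ext x
              simp only [Finset.mem_inter, Finset.notMem_empty, iff_false, not_and]
              intro hx hxc
              have : x ∈ (insert p (insert q (P' ∪ P'.image ppf))) ∩ C :=
                Finset.mem_inter.2 ⟨Finset.mem_insert_of_mem (Finset.mem_insert_of_mem hx), hxc⟩
              rw [h] at this
              exact absurd this (Finset.notMem_empty x)
            · intro h
              ext x
              simp only [Finset.mem_inter, Finset.notMem_empty, iff_false, not_and]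
              intro hx hxc
              rcases Finset.mem_insert.1 hx with rfl | hx
              · exact hpC hxc
              rcases Finset.mem_insert.1 hx with rfl | hx
              · exact hqC hxc
              have : x ∈ (P' ∪ P'.image ppf) ∩ C := Finset.mem_inter.2 ⟨hx, hxc⟩
              rw [h] at this
              exact absurd this (Finset.notMem_empty x)
          rw [if_congr hiff rfl rfl]
          split_ifs <;> ring
        · intro hmem
          exact hpB' (Finset.mem_sdiff.1 hmem).1
        · intro hmem
          exact hqB' (Finset.mem_sdiff.1 hmem).1
        · intro b hb
          have := hsep b (Finset.mem_sdiff.1 hb).1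
          omega
        · intro b hb
          have := hsep b (Finset.mem_sdiff.1 hb).1
          omega

noncomputable def Wv {K : ℕ} (ψ : ℂ) (R A : Finset (Fin K)) : PathIndep K → ℂ :=
  fun C => if R ⊆ C.1 ∧ C.1 ⊆ R ∪ A
    then ψ * Complex.I ^ C.1.card * (-Complex.I) ^ R.card else 0

lemma step_main {K : ℕ} (ψ : ℂ) (R A1 P A' : Finset (Fin K))
    (hR : IndP R)
    (hRA : ∀ a ∈ A1 ∪ (P ∪ P.image ppf), ∀ r ∈ R,
      (a : ℕ) ≠ (r : ℕ) ∧ (a : ℕ) ≠ (r : ℕ) + 1 ∧ (r : ℕ) ≠ (a : ℕ) + 1)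
    (hA1 : ∀ a ∈ A1, ∀ b ∈ A1 ∪ (P ∪ P.image ppf),
      (b : ℕ) ≠ (a : ℕ) + 1 ∧ (a : ℕ) ≠ (b : ℕ) + 1)
    (hA1B : ∀ a ∈ A1, a ∉ P ∪ P.image ppf)
    (hP : ∀ p ∈ P, (p : ℕ) + 1 < K)
    (hPP : ∀ p ∈ P, ∀ q ∈ P, p ≠ q →
      (q : ℕ) ≠ (p : ℕ) ∧ (q : ℕ) ≠ (p : ℕ) + 1 ∧ (q : ℕ) ≠ (p : ℕ) + 2 ∧
      (p : ℕ) ≠ (q : ℕ) + 1 ∧ (p : ℕ) ≠ (q : ℕ) + 2)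
    (hA'R : ∀ c ∈ A', c ∉ R)
    (hA'B : ∀ c ∈ A', c ∉ P ∪ P.image ppf)
    (hA'c : ∀ c : Fin K, c ∉ R → c ∉ A1 → c ∉ P ∪ P.image ppf →
      (∀ a ∈ A1, (c : ℕ) ≠ (a : ℕ) + 1 ∧ (a : ℕ) ≠ (c : ℕ) + 1) → c ∈ A') :
    (Omat K).mulVec (Wv ψ R (A1 ∪ (P ∪ P.image ppf))) =
      Wv (ψ * Complex.I ^ (R.card + A1.card) * (-1 : ℂ) ^ P.card) A1 A' := by
  set B : Finset (Fin K) := P ∪ P.image ppf with hBdef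
  set A : Finset (Fin K) := A1 ∪ B with hAdef
  funext C
  have hCind : IndP C.1 := C.2
  rw [Matrix.mulVec]
  show (∑ D : PathIndep K, Omat K C D * Wv ψ R A D) = _
  have hFD : ∀ D : PathIndep K, Omat K C D * Wv ψ R A D
      = (if C.1 ∩ D.1 = ∅ ∧ R ⊆ D.1 ∧ D.1 ⊆ R ∪ A
          then ψ * (-Complex.I) ^ R.card * Complex.I ^ C.1.card * (-1 : ℂ) ^ D.1.card
          else 0) := by
    intro D
    rw [Omat, Wv]
    by_cases h1 : C.1 ∩ D.1 = ∅
    · by_cases h2 : R ⊆ D.1 ∧ D.1 ⊆ R ∪ A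
      · rw [if_pos h1, if_pos h2, if_pos ⟨h1, h2⟩, pow_add]
        have hI2 : (Complex.I : ℂ) ^ D.1.card * Complex.I ^ D.1.card = (-1 : ℂ) ^ D.1.card := by
          rw [← pow_add, ← two_mul, pow_mul, Complex.I_sq]
        calc Complex.I ^ C.1.card * Complex.I ^ D.1.card
            * (ψ * Complex.I ^ D.1.card * (-Complex.I) ^ R.card)
            = ψ * (-Complex.I) ^ R.card * Complex.I ^ C.1.card
              * (Complex.I ^ D.1.card * Complex.I ^ D.1.card) := by ring
          _ = _ := by rw [hI2]
      · rw [if_pos h1, if_neg h2, if_neg (fun h => h2 h.2), mul_zero]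
    · rw [if_neg h1, zero_mul, if_neg (fun h : _ ∧ _ => h1 h.1)]
  have hmem : ∀ E : Finset (Fin K),
      E ∈ Finset.univ.filter (fun E : Finset (Fin K) => IndP E) ↔
        (∀ c ∈ E, ∀ d ∈ E, (c : ℕ) ≠ (d : ℕ) + 1) := by
    intro E
    rw [Finset.mem_filter]; exact ⟨fun h => h.2, fun h => ⟨Finset.mem_univ _, h⟩⟩
  have hsub : (∑ D : PathIndep K, Omat K C D * Wv ψ R A D)
      = ∑ E ∈ Finset.univ.filter (fun E : Finset (Fin K) => IndP E),
          (if C.1 ∩ E = ∅ ∧ R ⊆ E ∧ E ⊆ R ∪ A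
            then ψ * (-Complex.I) ^ R.card * Complex.I ^ C.1.card * (-1 : ℂ) ^ E.card
            else 0) := by
    rw [Finset.sum_subtype (p := fun E : Finset (Fin K) => ∀ c ∈ E, ∀ d ∈ E,
      (c : ℕ) ≠ (d : ℕ) + 1) (Finset.univ.filter (fun E : Finset (Fin K) => IndP E)) hmem]
    exact Fintype.sum_congr _ _ hFD
  rw [hsub, Finset.sum_ite, Finset.sum_const_zero, add_zero, Finset.filter_filter]
  by_cases hRC : R ∩ C.1 = ∅
  · have hRdisjA : ∀ a ∈ A, a ∉ R := by
      intro a ha har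
      exact absurd rfl (hRA a ha a har).1
    have hbij : ∑ E ∈ Finset.univ.filter
          (fun E : Finset (Fin K) => IndP E ∧ (C.1 ∩ E = ∅ ∧ R ⊆ E ∧ E ⊆ R ∪ A)),
          (ψ * (-Complex.I) ^ R.card * Complex.I ^ C.1.card * (-1 : ℂ) ^ E.card)
        = ∑ S ∈ (A \ C.1).powerset.filter IndP,
          (ψ * (-Complex.I) ^ R.card * Complex.I ^ C.1.card * (-1 : ℂ) ^ (R ∪ S).card) := by
      apply Finset.sum_bij' (i := fun E _ => E \ R) (j := fun S _ => R ∪ S)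
      · intro E hE
        simp only [Finset.mem_filter, Finset.mem_univ, true_and] at hE
        obtain ⟨hInd, hCE, hRE, hERA⟩ := hE
        simp only [Finset.mem_filter, Finset.mem_powerset]
        constructor
        · intro x hx
          have hxE := Finset.mem_sdiff.1 hx
          have : x ∈ R ∪ A := hERA hxE.1
          rcases Finset.mem_union.1 this with h | h
          · exact absurd h hxE.2
          · refine Finset.mem_sdiff.2 ⟨h, ?_⟩
            intro hxC
            have : x ∈ C.1 ∩ E := Finset.mem_inter.2 ⟨hxC, hxE.1⟩
            rw [hCE] at this
            exact absurd this (Finset.notMem_empty x)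
        · exact hInd.mono (Finset.sdiff_subset)
      · intro S hS
        simp only [Finset.mem_filter, Finset.mem_powerset] at hS
        obtain ⟨hSsub, hSind⟩ := hS
        have hSA : S ⊆ A := fun x hx => (Finset.mem_sdiff.1 (hSsub hx)).1
        have hSC : ∀ x ∈ S, x ∉ C.1 := fun x hx => (Finset.mem_sdiff.1 (hSsub hx)).2
        simp only [Finset.mem_filter, Finset.mem_univ, true_and]
        refine ⟨?_, ?_, Finset.subset_union_left, Finset.union_subset_union_right hSA⟩
        · intro c hc d hd
          rcases Finset.mem_union.1 hc with hc' | hc'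
          · rcases Finset.mem_union.1 hd with hd' | hd'
            · exact hR c hc' d hd'
            · exact (hRA d (hSA hd') c hc').2.2
          · rcases Finset.mem_union.1 hd with hd' | hd'
            · exact (hRA c (hSA hc') d hd').2.1
            · exact hSind c hc' d hd'
        · ext x
          simp only [Finset.mem_inter, Finset.mem_union, Finset.notMem_empty, iff_false,
            not_and]
          intro hxC
          rintro (hxR | hxS)
          · have : x ∈ R ∩ C.1 := Finset.mem_inter.2 ⟨hxR, hxC⟩
            rw [hRC] at this
            exact absurd this (Finset.notMem_empty x)
          · exact hSC x hxS hxC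
      · intro E hE
        simp only [Finset.mem_filter, Finset.mem_univ, true_and] at hE
        exact Finset.union_sdiff_of_subset hE.2.2.1
      · intro S hS
        simp only [Finset.mem_filter, Finset.mem_powerset] at hS
        have hSA : S ⊆ A := fun x hx => (Finset.mem_sdiff.1 (hS.1 hx)).1
        rw [Finset.union_sdiff_cancel_left]
        rw [Finset.disjoint_left]
        intro x hxR hxS
        exact hRdisjA x (hSA hxS) hxR
      · intro E hE
        simp only [Finset.mem_filter, Finset.mem_univ, true_and] at hE
        have h5 : R ∪ (E \ R) = E := Finset.union_sdiff_of_subset hE.2.2.1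
        rw [h5]
    rw [hbij]
    have hcard : ∀ S ∈ (A \ C.1).powerset.filter IndP,
        ψ * (-Complex.I) ^ R.card * Complex.I ^ C.1.card * (-1 : ℂ) ^ (R ∪ S).card
        = (ψ * (-Complex.I) ^ R.card * Complex.I ^ C.1.card * (-1 : ℂ) ^ R.card)
            * (-1 : ℂ) ^ S.card := by
      intro S hS
      simp only [Finset.mem_filter, Finset.mem_powerset] at hS
      have hSA : S ⊆ A := fun x hx => (Finset.mem_sdiff.1 (hS.1 hx)).1
      have hdisj : Disjoint R S := by
        rw [Finset.disjoint_left]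
        intro x hxR hxS
        exact hRdisjA x (hSA hxS) hxR
      rw [Finset.card_union_of_disjoint hdisj, pow_add]
      ring
    rw [Finset.sum_congr rfl hcard, ← Finset.mul_sum, ← zsum]
    -- now : c0 * zsum (A \ C.1) = Wv ψ' A1 A' C
    by_cases hA1C : A1 ⊆ C.1
    · have hACBC : A \ C.1 = B \ C.1 := by
        ext x
        simp only [Finset.mem_sdiff, hAdef, Finset.mem_union]
        constructor
        · rintro ⟨h | h, hxc⟩
          · exact absurd (hA1C h) hxc
          · exact ⟨h, hxc⟩
        · rintro ⟨h, hxc⟩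
          exact ⟨Or.inr h, hxc⟩
      rw [hACBC, hBdef, Zpairs P C.1 hCind hP hPP]
      by_cases hBC : (P ∪ P.image ppf) ∩ C.1 = ∅
      · rw [if_pos hBC, Wv, if_pos]
        · -- algebra
          have h1 : (-Complex.I : ℂ) ^ R.card * (-1 : ℂ) ^ R.card = Complex.I ^ R.card := by
            rw [← mul_pow]; norm_num
          have h2 : (Complex.I : ℂ) ^ A1.card * (-Complex.I) ^ A1.card = 1 := by
            rw [← mul_pow, mul_neg, Complex.I_mul_I]; norm_num
          rw [pow_add]
          calc ψ * (-Complex.I) ^ R.card * Complex.I ^ C.1.card * (-1 : ℂ) ^ R.card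
              * (-1 : ℂ) ^ P.card
              = ψ * ((-Complex.I) ^ R.card * (-1 : ℂ) ^ R.card) * Complex.I ^ C.1.card
                * (-1 : ℂ) ^ P.card := by ring
            _ = ψ * Complex.I ^ R.card * Complex.I ^ C.1.card * (-1 : ℂ) ^ P.card := by
                rw [h1]
            _ = ψ * Complex.I ^ R.card * (Complex.I ^ A1.card * (-Complex.I) ^ A1.card)
                * Complex.I ^ C.1.card * (-1 : ℂ) ^ P.card := by rw [h2]; ring
            _ = _ := by ring
        · refine ⟨hA1C, ?_⟩
          intro c hc
          rw [Finset.mem_union]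
          by_cases hcA1 : c ∈ A1
          · exact Or.inl hcA1
          · refine Or.inr (hA'c c ?_ hcA1 ?_ ?_)
            · intro hcR
              have : c ∈ R ∩ C.1 := Finset.mem_inter.2 ⟨hcR, hc⟩
              rw [hRC] at this
              exact absurd this (Finset.notMem_empty c)
            · intro hcB
              have : c ∈ (P ∪ P.image ppf) ∩ C.1 := Finset.mem_inter.2 ⟨hcB, hc⟩
              rw [hBC] at this
              exact absurd this (Finset.notMem_empty c)
            · intro a ha
              exact ⟨hCind c hc a (hA1C ha), hCind a (hA1C ha) c hc⟩
      · rw [if_neg hBC, mul_zero, Wv, if_neg]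
        rintro ⟨h1, h2⟩
        obtain ⟨x, hx⟩ := Finset.nonempty_iff_ne_empty.2 hBC
        have hxB := (Finset.mem_inter.1 hx).1
        have hxC := (Finset.mem_inter.1 hx).2
        rcases Finset.mem_union.1 (h2 hxC) with h | h
        · exact hA1B x h hxB
        · exact hA'B x h hxB
    · -- A1 not subset of C : both sides zero
      obtain ⟨a, haA1, haC⟩ := Finset.not_subset.1 hA1C
      have haX : a ∈ A \ C.1 := Finset.mem_sdiff.2 ⟨Finset.mem_union_left B haA1, haC⟩
      have hzero : zsum (A \ C.1) = 0 := by
        rw [← Finset.insert_erase haX]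
        apply zsum_insert_iso (Finset.notMem_erase a _)
        intro b hb
        have hbA : b ∈ A := (Finset.mem_sdiff.1 (Finset.erase_subset _ _ hb)).1
        exact hA1 a haA1 b hbA
      rw [hzero, mul_zero, Wv, if_neg]
      rintro ⟨h1, _⟩
      exact haC (h1 haA1)
  · -- R meets C : both sides zero
    rw [Finset.sum_eq_zero, Wv, if_neg]
    · rintro ⟨h1, h2⟩
      obtain ⟨r, hr⟩ := Finset.nonempty_iff_ne_empty.2 hRC
      have hrR := (Finset.mem_inter.1 hr).1
      have hrC := (Finset.mem_inter.1 hr).2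
      rcases Finset.mem_union.1 (h2 hrC) with h | h
      · exact absurd rfl (hRA r (Finset.mem_union_left B h) r hrR).1
      · exact hA'R r h hrR
    · intro E hE
      simp only [Finset.mem_filter, Finset.mem_univ, true_and] at hE
      exfalso
      obtain ⟨r, hr⟩ := Finset.nonempty_iff_ne_empty.2 hRC
      have hrR := (Finset.mem_inter.1 hr).1
      have hrC := (Finset.mem_inter.1 hr).2
      have : r ∈ C.1 ∩ E := Finset.mem_inter.2 ⟨hrC, hE.2.2.1 hrR⟩
      rw [hE.2.1] at this
      exact absurd this (Finset.notMem_empty r)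

def RIs (K k : ℕ) : Finset (Fin K) :=
  Finset.univ.filter (fun c => (c : ℕ) % 3 = 0 ∧ (c : ℕ) ≤ 3 * k)

def PIs (K m k : ℕ) : Finset (Fin K) :=
  Finset.univ.filter (fun c => (c : ℕ) % 3 = 2 ∧ 3 * k + 2 ≤ (c : ℕ) ∧ (c : ℕ) + 1 ≤ 3 * m)

def AIIs (K k : ℕ) : Finset (Fin K) :=
  Finset.univ.filter (fun c => (c : ℕ) % 3 = 1 ∧ 3 * k + 1 ≤ (c : ℕ))

def PIIs (K k : ℕ) : Finset (Fin K) :=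
  Finset.univ.filter (fun c => (c : ℕ) % 3 = 1 ∧ (c : ℕ) + 3 ≤ 3 * k + 1)

def AIIIs (K k : ℕ) : Finset (Fin K) :=
  Finset.univ.filter (fun c => (c : ℕ) % 3 = 0 ∧ (c : ℕ) + 3 ≤ 3 * k)

lemma mem_RIs {K k : ℕ} {c : Fin K} : c ∈ RIs K k ↔ (c : ℕ) % 3 = 0 ∧ (c : ℕ) ≤ 3 * k := by
  simp [RIs]

lemma mem_PIs {K m k : ℕ} {c : Fin K} :
    c ∈ PIs K m k ↔ (c : ℕ) % 3 = 2 ∧ 3 * k + 2 ≤ (c : ℕ) ∧ (c : ℕ) + 1 ≤ 3 * m := by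
  simp [PIs]

lemma mem_AIIs {K k : ℕ} {c : Fin K} :
    c ∈ AIIs K k ↔ (c : ℕ) % 3 = 1 ∧ 3 * k + 1 ≤ (c : ℕ) := by
  simp [AIIs]

lemma mem_PIIs {K k : ℕ} {c : Fin K} :
    c ∈ PIIs K k ↔ (c : ℕ) % 3 = 1 ∧ (c : ℕ) + 3 ≤ 3 * k + 1 := by
  simp [PIIs]

lemma mem_AIIIs {K k : ℕ} {c : Fin K} :
    c ∈ AIIIs K k ↔ (c : ℕ) % 3 = 0 ∧ (c : ℕ) + 3 ≤ 3 * k := by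
  simp [AIIIs]

lemma hP_PIs {K m k : ℕ} (hm : K = 3 * m + 2) : ∀ p ∈ PIs K m k, (p : ℕ) + 1 < K := by
  intro p hp
  rw [mem_PIs] at hp
  omega

lemma hP_PIIs {K m k : ℕ} (hm : K = 3 * m + 2) (hk : k ≤ m) :
    ∀ p ∈ PIIs K k, (p : ℕ) + 1 < K := by
  intro p hp
  rw [mem_PIIs] at hp
  omega

lemma mem_PIs_image {K m k : ℕ} (hm : K = 3 * m + 2) {c : Fin K} :
    c ∈ (PIs K m k).image ppf ↔
      (c : ℕ) % 3 = 0 ∧ 3 * k + 3 ≤ (c : ℕ) ∧ (c : ℕ) ≤ 3 * m := by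
  rw [mem_ppimage (hP_PIs hm)]
  constructor
  · rintro ⟨p, hp, hc⟩
    rw [mem_PIs] at hp
    omega
  · intro hc
    refine ⟨⟨(c : ℕ) - 1, by omega⟩, ?_, by simp; omega⟩
    rw [mem_PIs]
    simp
    omega

lemma mem_PIIs_image {K m k : ℕ} (hm : K = 3 * m + 2) (hk : k ≤ m) {c : Fin K} :
    c ∈ (PIIs K k).image ppf ↔
      (c : ℕ) % 3 = 2 ∧ (c : ℕ) + 2 ≤ 3 * k + 1 := by
  rw [mem_ppimage (hP_PIIs hm hk)]
  constructor
  · rintro ⟨p, hp, hc⟩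
    rw [mem_PIIs] at hp
    omega
  · intro hc
    refine ⟨⟨(c : ℕ) - 1, by omega⟩, ?_, by simp; omega⟩
    rw [mem_PIIs]
    simp
    omega

-- cardinality lemmas
lemma card_RIs {K m k : ℕ} (hm : K = 3 * m + 2) (hk : k ≤ m) : (RIs K k).card = k + 1 := by
  conv_rhs => rw [show k + 1 = (Finset.range (k+1)).card from (Finset.card_range (k+1)).symm]
  apply Finset.card_bij' (i := fun (a : Fin K) _ => (a : ℕ) / 3)
    (j := fun (t : ℕ) ht => (⟨3 * t, by simp at ht; omega⟩ : Fin K))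
  case hi =>
    intro a ha
    rw [mem_RIs] at ha
    simp
    omega
  case hj =>
    intro t ht
    simp at ht
    rw [mem_RIs]
    simp
    omega
  case left_inv =>
    intro a ha
    rw [mem_RIs] at ha
    apply Fin.ext
    simp
    omega
  case right_inv =>
    intro t ht
    simp

lemma card_PIs {K m k : ℕ} (hm : K = 3 * m + 2) (hk : k ≤ m) : (PIs K m k).card = m - k := by
  conv_rhs => rw [show m - k = (Finset.range (m-k)).card from (Finset.card_range _).symm]
  apply Finset.card_bij' (i := fun (a : Fin K) _ => ((a : ℕ) - (3 * k + 2)) / 3)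
    (j := fun (t : ℕ) ht => (⟨3 * t + 3 * k + 2, by simp at ht; omega⟩ : Fin K))
  case hi =>
    intro a ha
    rw [mem_PIs] at ha
    simp
    omega
  case hj =>
    intro t ht
    simp at ht
    rw [mem_PIs]
    simp
    omega
  case left_inv =>
    intro a ha
    rw [mem_PIs] at ha
    apply Fin.ext
    simp
    omega
  case right_inv =>
    intro t ht
    simp at ht ⊢
    try omega

lemma card_AIIs {K m k : ℕ} (hm : K = 3 * m + 2) (hk : k ≤ m) :
    (AIIs K k).card = m - k + 1 := by
  conv_rhs => rw [show m - k + 1 = (Finset.range (m-k+1)).card from (Finset.card_range _).symm]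
  apply Finset.card_bij' (i := fun (a : Fin K) _ => ((a : ℕ) - (3 * k + 1)) / 3)
    (j := fun (t : ℕ) ht => (⟨3 * t + 3 * k + 1, by simp at ht; omega⟩ : Fin K))
  case hi =>
    intro a ha
    rw [mem_AIIs] at ha
    simp
    omega
  case hj =>
    intro t ht
    simp at ht
    rw [mem_AIIs]
    simp
    omega
  case left_inv =>
    intro a ha
    rw [mem_AIIs] at ha
    apply Fin.ext
    simp
    omega
  case right_inv =>
    intro t ht
    simp at ht ⊢
    try omega

lemma card_PIIs {K m k : ℕ} (hm : K = 3 * m + 2) (hk : k ≤ m) : (PIIs K k).card = k := by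
  conv_rhs => rw [show k = (Finset.range k).card from (Finset.card_range _).symm]
  apply Finset.card_bij' (i := fun (a : Fin K) _ => ((a : ℕ) - 1) / 3)
    (j := fun (t : ℕ) ht => (⟨3 * t + 1, by simp at ht; omega⟩ : Fin K))
  case hi =>
    intro a ha
    rw [mem_PIIs] at ha
    simp
    omega
  case hj =>
    intro t ht
    simp at ht
    rw [mem_PIIs]
    simp
    omega
  case left_inv =>
    intro a ha
    rw [mem_PIIs] at ha
    apply Fin.ext
    simp
    omega
  case right_inv =>
    intro t ht
    simp at ht ⊢
    try omega

lemma AIIIs_eq_RIs {K k : ℕ} (hk : 1 ≤ k) : AIIIs K k = RIs K (k - 1) := by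
  ext c
  rw [mem_AIIIs, mem_RIs]
  omega

lemma card_AIIIs {K m k : ℕ} (hm : K = 3 * m + 2) (hk : 1 ≤ k) (hk2 : k ≤ m) :
    (AIIIs K k).card = k := by
  rw [AIIIs_eq_RIs hk, card_RIs hm (by omega)]
  omega

lemma step1 {K m : ℕ} (hm : K = 3 * m + 2) (k : ℕ) (hk : k ≤ m) (ψ : ℂ) :
    (Omat K).mulVec (Wv ψ (RIs K k) (∅ ∪ (PIs K m k ∪ (PIs K m k).image ppf)))
      = Wv (ψ * Complex.I ^ (k + 1) * (-1 : ℂ) ^ (m - k)) ∅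
          (AIIs K k ∪ (PIIs K k ∪ (PIIs K k).image ppf)) := by
  have h := step_main ψ (RIs K k) ∅ (PIs K m k)
    (AIIs K k ∪ (PIIs K k ∪ (PIIs K k).image ppf))
    (by intro c hc d hd; rw [mem_RIs] at hc hd; omega)
    (by intro a ha r hr
        rw [mem_RIs] at hr
        have hcK := a.isLt
        simp only [Finset.empty_union, Finset.mem_union, mem_PIs, mem_PIs_image hm] at ha
        rcases ha with ha | ha <;> omega)
    (by intro a ha; simp at ha)
    (by intro a ha; simp at ha)
    (hP_PIs hm)
    (by intro p hp q hq hne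
        rw [mem_PIs] at hp hq
        have : (p : ℕ) ≠ (q : ℕ) := fun h => hne (Fin.ext h)
        omega)
    (by intro c hc hcR
        rw [mem_RIs] at hcR
        simp only [Finset.mem_union, mem_AIIs, mem_PIIs, mem_PIIs_image hm hk] at hc
        rcases hc with h | h | h <;> omega)
    (by intro c hc hcB
        simp only [Finset.mem_union, mem_AIIs, mem_PIIs, mem_PIIs_image hm hk] at hc
        simp only [Finset.mem_union, mem_PIs, mem_PIs_image hm] at hcB
        rcases hc with h | h | h <;> omega)
    (by intro c hcR hcA1 hcB hadj
        have hcK := c.isLt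
        rw [mem_RIs] at hcR
        rw [Finset.mem_union, mem_PIs, mem_PIs_image hm] at hcB
        have h3 : (c : ℕ) % 3 = 0 ∨ (c : ℕ) % 3 = 1 ∨ (c : ℕ) % 3 = 2 := by omega
        rcases h3 with h | h | h
        · exfalso; omega
        · by_cases hc5 : 3 * k + 1 ≤ (c : ℕ)
          · exact Finset.mem_union_left _ (mem_AIIs.2 ⟨h, hc5⟩)
          · exact Finset.mem_union_right _
              (Finset.mem_union_left _ (mem_PIIs.2 ⟨h, by omega⟩))
        · refine Finset.mem_union_right _ (Finset.mem_union_right _ ?_)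
          rw [mem_PIIs_image hm hk]
          exact ⟨h, by omega⟩)
  rw [card_RIs hm hk, card_PIs hm hk, Finset.card_empty, Nat.add_zero] at h
  exact h

lemma step2 {K m : ℕ} (hm : K = 3 * m + 2) (k : ℕ) (hk : k ≤ m) (ψ : ℂ) :
    (Omat K).mulVec (Wv ψ ∅ (AIIs K k ∪ (PIIs K k ∪ (PIIs K k).image ppf)))
      = Wv (ψ * Complex.I ^ (m - k + 1) * (-1 : ℂ) ^ k) (AIIs K k)
          (AIIIs K k ∪ ((∅ : Finset (Fin K)) ∪ (∅ : Finset (Fin K)).image ppf)) := by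
  have h := step_main ψ ∅ (AIIs K k) (PIIs K k)
    (AIIIs K k ∪ ((∅ : Finset (Fin K)) ∪ (∅ : Finset (Fin K)).image ppf))
    IndP_empty
    (by intro a ha r hr; simp at hr)
    (by intro a ha b hb
        rw [mem_AIIs] at ha
        simp only [Finset.mem_union, mem_AIIs, mem_PIIs, mem_PIIs_image hm hk] at hb
        rcases hb with h | h | h <;> omega)
    (by intro a ha hB
        rw [mem_AIIs] at ha
        simp only [Finset.mem_union, mem_PIIs, mem_PIIs_image hm hk] at hB
        rcases hB with h | h <;> omega)
    (hP_PIIs hm hk)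
    (by intro p hp q hq hne
        rw [mem_PIIs] at hp hq
        have : (p : ℕ) ≠ (q : ℕ) := fun h => hne (Fin.ext h)
        omega)
    (by intro c hc hcR; simp at hcR)
    (by intro c hc hcB
        simp only [Finset.image_empty, Finset.union_empty, mem_AIIIs] at hc
        simp only [Finset.mem_union, mem_PIIs, mem_PIIs_image hm hk] at hcB
        omega)
    (by intro c hcR hcA1 hcB hadj
        have hcK := c.isLt
        rw [mem_AIIs] at hcA1
        rw [Finset.mem_union, mem_PIIs, mem_PIIs_image hm hk] at hcB
        have h3 : (c : ℕ) % 3 = 0 ∨ (c : ℕ) % 3 = 1 ∨ (c : ℕ) % 3 = 2 := by omega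
        apply Finset.mem_union_left
        rw [mem_AIIIs]
        rcases h3 with h | h | h
        · refine ⟨h, ?_⟩
          by_contra hno
          have ha : (⟨(c : ℕ) + 1, by omega⟩ : Fin K) ∈ AIIs K k := by
            rw [mem_AIIs]; simp; omega
          have := (hadj _ ha).2
          simp at this
        · exfalso; omega
        · exfalso
          have ha : (⟨(c : ℕ) - 1, by omega⟩ : Fin K) ∈ AIIs K k := by
            rw [mem_AIIs]; simp; omega
          have := (hadj _ ha).1
          simp at this
          omega)
  rw [card_AIIs hm hk, card_PIIs hm hk, Finset.card_empty, Nat.zero_add] at h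
  exact h

lemma step3 {K m : ℕ} (hm : K = 3 * m + 2) (k : ℕ) (hk1 : 1 ≤ k) (hk : k ≤ m) (ψ : ℂ) :
    (Omat K).mulVec (Wv ψ (AIIs K k)
        (AIIIs K k ∪ ((∅ : Finset (Fin K)) ∪ (∅ : Finset (Fin K)).image ppf)))
      = Wv (ψ * Complex.I ^ (m + 1)) (RIs K (k - 1))
          (∅ ∪ (PIs K m (k - 1) ∪ (PIs K m (k - 1)).image ppf)) := by
  have h := step_main ψ (AIIs K k) (AIIIs K k) (∅ : Finset (Fin K))
    (∅ ∪ (PIs K m (k - 1) ∪ (PIs K m (k - 1)).image ppf))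
    (by intro c hc d hd; rw [mem_AIIs] at hc hd; omega)
    (by intro a ha r hr
        rw [mem_AIIs] at hr
        simp only [Finset.image_empty, Finset.union_empty, mem_AIIIs] at ha
        omega)
    (by intro a ha b hb
        rw [mem_AIIIs] at ha
        simp only [Finset.image_empty, Finset.union_empty, mem_AIIIs] at hb
        omega)
    (by intro a ha; simp)
    (by intro p hp; simp at hp)
    (by intro p hp; simp at hp)
    (by intro c hc hcR
        rw [mem_AIIs] at hcR
        simp only [Finset.empty_union, Finset.mem_union, mem_PIs, mem_PIs_image hm] at hc
        rcases hc with h | h <;> omega)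
    (by intro c hc hcB; simp at hcB)
    (by intro c hcR hcA1 hcB hadj
        have hcK := c.isLt
        rw [mem_AIIs] at hcR
        rw [mem_AIIIs] at hcA1
        have h3 : (c : ℕ) % 3 = 0 ∨ (c : ℕ) % 3 = 1 ∨ (c : ℕ) % 3 = 2 := by omega
        apply Finset.mem_union_right
        rcases h3 with h | h | h
        · apply Finset.mem_union_right
          rw [mem_PIs_image hm]
          refine ⟨h, by omega, by omega⟩
        · exfalso
          have ha : (⟨(c : ℕ) - 1, by omega⟩ : Fin K) ∈ AIIIs K k := by
            rw [mem_AIIIs]; simp; omega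
          have := (hadj _ ha).1
          simp at this
          omega
        · apply Finset.mem_union_left
          rw [mem_PIs]
          refine ⟨h, ?_, by omega⟩
          by_contra hno
          have ha : (⟨(c : ℕ) + 1, by omega⟩ : Fin K) ∈ AIIIs K k := by
            rw [mem_AIIIs]; simp; omega
          have := (hadj _ ha).2
          simp at this)
  rw [card_AIIs hm hk, card_AIIIs hm hk1 hk, Finset.card_empty, pow_zero, mul_one] at h
  rw [show m - k + 1 + k = m + 1 by omega] at h
  rw [AIIIs_eq_RIs hk1] at h ⊢
  exact h

section Mirror

variable {K : ℕ}

def sigf (hK : 1 ≤ K) : Fin K → Fin K := fun c => ⟨K - 1 - (c : ℕ), by omega⟩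

lemma sigf_val (hK : 1 ≤ K) (c : Fin K) : ((sigf hK c : Fin K) : ℕ) = K - 1 - (c : ℕ) := rfl

lemma sigf_invol (hK : 1 ≤ K) (c : Fin K) : sigf hK (sigf hK c) = c := by
  apply Fin.ext
  have := c.isLt
  simp [sigf]
  omega

lemma sigf_inj (hK : 1 ≤ K) : Function.Injective (sigf hK) := by
  intro a b h
  have := congrArg (sigf hK) h
  rwa [sigf_invol, sigf_invol] at this

def sigS (hK : 1 ≤ K) (C : Finset (Fin K)) : Finset (Fin K) := C.image (sigf hK)

lemma mem_sigS (hK : 1 ≤ K) {C : Finset (Fin K)} {c : Fin K} :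
    c ∈ sigS hK C ↔ sigf hK c ∈ C := by
  rw [sigS, Finset.mem_image]
  constructor
  · rintro ⟨a, ha, rfl⟩
    rwa [sigf_invol]
  · intro h
    exact ⟨sigf hK c, h, sigf_invol hK c⟩

lemma sigS_invol (hK : 1 ≤ K) (C : Finset (Fin K)) : sigS hK (sigS hK C) = C := by
  ext c
  rw [mem_sigS, mem_sigS, sigf_invol]

lemma sigS_card (hK : 1 ≤ K) (C : Finset (Fin K)) : (sigS hK C).card = C.card :=
  Finset.card_image_of_injective C (sigf_inj hK)

lemma sigS_ind (hK : 1 ≤ K) {C : Finset (Fin K)} (hC : IndP C) : IndP (sigS hK C) := by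
  intro c hc d hd
  rw [mem_sigS] at hc hd
  have h1 := hC _ hd _ hc
  have h2 : (sigf hK c : ℕ) = K - 1 - (c : ℕ) := rfl
  have h3 : (sigf hK d : ℕ) = K - 1 - (d : ℕ) := rfl
  have := c.isLt
  have := d.isLt
  omega

def sigP (hK : 1 ≤ K) : PathIndep K → PathIndep K :=
  fun C => ⟨sigS hK C.1, sigS_ind hK C.2⟩

lemma sigP_invol (hK : 1 ≤ K) (C : PathIndep K) : sigP hK (sigP hK C) = C := by
  apply Subtype.ext
  exact sigS_invol hK C.1

def sigE (hK : 1 ≤ K) : PathIndep K ≃ PathIndep K where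
  toFun := sigP hK
  invFun := sigP hK
  left_inv := sigP_invol hK
  right_inv := sigP_invol hK

lemma Omat_sig (hK : 1 ≤ K) (C D : PathIndep K) :
    Omat K (sigP hK C) (sigP hK D) = Omat K C D := by
  rw [Omat, Omat]
  have hfst : (sigP hK C).1 = sigS hK C.1 := rfl
  have hsnd : (sigP hK D).1 = sigS hK D.1 := rfl
  rw [hfst, hsnd]
  have hcap : (sigS hK C.1) ∩ (sigS hK D.1) = sigS hK (C.1 ∩ D.1) := by
    ext x
    rw [Finset.mem_inter, mem_sigS, mem_sigS, mem_sigS, Finset.mem_inter]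
  have hiff : (sigS hK C.1) ∩ (sigS hK D.1) = ∅ ↔ C.1 ∩ D.1 = ∅ := by
    rw [hcap]
    constructor
    · intro h
      have := congrArg (sigS hK) h
      rwa [sigS_invol, show sigS hK ∅ = ∅ by simp [sigS]] at this
    · intro h
      rw [h]
      simp [sigS]
  rw [if_congr hiff rfl rfl, sigS_card hK C.1, sigS_card hK D.1]

lemma mulVec_sig (hK : 1 ≤ K) (v : PathIndep K → ℂ) :
    (Omat K).mulVec (fun C => v (sigP hK C)) = fun C => (Omat K).mulVec v (sigP hK C) := by
  funext C
  rw [Matrix.mulVec, Matrix.mulVec]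
  show (∑ D : PathIndep K, Omat K C D * v (sigP hK D))
      = ∑ D : PathIndep K, Omat K (sigP hK C) D * v D
  apply Fintype.sum_equiv (sigE hK)
  intro D
  show Omat K C D * v (sigP hK D) = Omat K (sigP hK C) (sigP hK D) * v (sigP hK D)
  rw [Omat_sig hK C D]

end Mirror

lemma I_pow_four : (Complex.I : ℂ) ^ 4 = 1 := by
  rw [show (4 : ℕ) = 2 * 2 from rfl, pow_mul, Complex.I_sq]
  norm_num

lemma negI_eq : (-Complex.I : ℂ) = Complex.I ^ 3 := by
  rw [pow_succ, Complex.I_sq]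
  ring

lemma negone_eq : (-1 : ℂ) = Complex.I ^ 2 := Complex.I_sq.symm

lemma I_pow_reduce (a b : ℕ) (h : a = b + 4 * ((a - b) / 4)) :
    (Complex.I : ℂ) ^ a = Complex.I ^ b := by
  rw [h, pow_add, pow_mul, I_pow_four, one_pow, mul_one]

lemma phase_key (s t : ℕ) :
    (-Complex.I) ^ s * Complex.I ^ (t + 1) * (-1 : ℂ) ^ s * Complex.I ^ (s + 1)
        * (-1 : ℂ) ^ t * Complex.I ^ (s + t + 1) = (-Complex.I) ^ (s + 1) := by
  rw [negI_eq, negone_eq, ← pow_mul, ← pow_mul, ← pow_mul, ← pow_mul,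
      ← pow_add, ← pow_add, ← pow_add, ← pow_add, ← pow_add]
  apply I_pow_reduce
  omega

lemma phase_K (m : ℕ) :
    (-Complex.I) ^ m * Complex.I ^ (0 + 1) * (-1 : ℂ) ^ (m - 0) * Complex.I ^ (m - 0 + 1)
        * (-1 : ℂ) ^ 0 = (-1 : ℂ) ^ (m + 1) := by
  rw [Nat.sub_zero, negI_eq, negone_eq, ← pow_mul, ← pow_mul, ← pow_mul, ← pow_mul,
      ← pow_add, ← pow_add, ← pow_add, ← pow_add]
  apply I_pow_reduce
  omega

section Chain

variable {K m : ℕ}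

noncomputable def worb (K m : ℕ) (j : ℕ) : PathIndep K → ℂ :=
  (fun v => (Omat K).mulVec v)^[j]
    (Wv 1 (RIs K m) (∅ ∪ (PIs K m m ∪ (PIs K m m).image ppf)))

lemma worb_succ (j : ℕ) : worb K m (j + 1) = (Omat K).mulVec (worb K m j) := by
  rw [worb, worb, Function.iterate_succ_apply']

lemma chain1 (hm : K = 3 * m + 2) : ∀ s, s ≤ m →
    worb K m (3 * s) = Wv ((-Complex.I) ^ s) (RIs K (m - s))
      (∅ ∪ (PIs K m (m - s) ∪ (PIs K m (m - s)).image ppf)) := by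
  intro s
  induction s with
  | zero =>
    intro _
    rw [show 3 * 0 = 0 from rfl, worb, Function.iterate_zero_apply, pow_zero, Nat.sub_zero]
  | succ s ih =>
    intro hs1
    have hs : s ≤ m := by omega
    have hsm : s < m := by omega
    have h1 := ih hs
    rw [show 3 * (s + 1) = ((3 * s + 1) + 1) + 1 by ring, worb_succ, worb_succ, worb_succ,
        h1, step1 hm (m - s) (by omega), step2 hm (m - s) (by omega),
        step3 hm (m - s) (by omega) (by omega)]
    rw [show m - (m - s) = s by omega, show m - s - 1 = m - (s + 1) by omega]
    have hpk := phase_key s (m - s)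
    rw [show s + (m - s) + 1 = m + 1 by omega] at hpk
    rw [hpk]

end Chain

section Half

variable {K m : ℕ}

lemma PIs_mm_empty : PIs K m m = ∅ := by
  ext c
  rw [mem_PIs]
  simp only [Finset.notMem_empty, iff_false]
  omega

lemma AIIIs0_empty : AIIIs K 0 = ∅ := by
  ext c
  rw [mem_AIIIs]
  simp only [Finset.notMem_empty, iff_false]
  omega

lemma wKform (hm : K = 3 * m + 2) :
    worb K m K = Wv ((-1 : ℂ) ^ (m + 1)) (AIIs K 0)
      (AIIIs K 0 ∪ ((∅ : Finset (Fin K)) ∪ (∅ : Finset (Fin K)).image ppf)) := by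
  rw [congrArg (worb K m) (show K = 3 * m + 1 + 1 from by omega), worb_succ,
      worb_succ, chain1 hm m le_rfl, Nat.sub_self,
      step1 hm 0 (by omega), step2 hm 0 (by omega), phase_K m]

lemma sig_AIIs0 (hm : K = 3 * m + 2) (hK : 1 ≤ K) : sigS hK (AIIs K 0) = RIs K m := by
  ext c
  rw [mem_sigS, mem_RIs]
  have h1 : ((sigf hK c : Fin K) : ℕ) = K - 1 - (c : ℕ) := rfl
  rw [mem_AIIs, h1]
  have := c.isLt
  omega

lemma wK_sig (hm : K = 3 * m + 2) (hK : 1 ≤ K) :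
    worb K m K = fun C => (-1 : ℂ) ^ (m + 1) * worb K m 0 (sigP hK C) := by
  rw [wKform hm]
  funext C
  rw [worb, Function.iterate_zero_apply]
  rw [Wv, Wv]
  rw [AIIIs0_empty, PIs_mm_empty]
  simp only [Finset.image_empty, Finset.union_empty, Finset.empty_union, Finset.union_self]
  have hcond : (AIIs K 0 ⊆ C.1 ∧ C.1 ⊆ AIIs K 0)
      ↔ (RIs K m ⊆ (sigP hK C).1 ∧ (sigP hK C).1 ⊆ RIs K m) := by
    have h1 : ∀ X Y : Finset (Fin K), (X ⊆ Y ∧ Y ⊆ X) ↔ Y = X := fun X Y =>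
      ⟨fun h => Finset.Subset.antisymm h.2 h.1,
       fun h => by rw [h]; exact ⟨Finset.Subset.refl X, Finset.Subset.refl X⟩⟩
    have hs : (sigP hK C).1 = sigS hK C.1 := rfl
    rw [h1, h1, hs]
    constructor
    · intro h
      rw [h]
      exact sig_AIIs0 hm hK
    · intro h
      have := congrArg (sigS hK) h
      rw [sigS_invol, ← sig_AIIs0 hm hK] at this
      rw [this, sigS_invol]
  rw [if_congr hcond.symm rfl rfl]
  split_ifs with hcase
  · have hc1 : ((sigP hK C).1).card = C.1.card := sigS_card hK C.1
    rw [hc1, card_AIIs hm (by omega), card_RIs hm le_rfl, Nat.sub_zero]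
    ring
  · ring

lemma mulVec_constmul (a : ℂ) (v : PathIndep K → ℂ) :
    (Omat K).mulVec (fun C => a * v C) = fun C => a * (Omat K).mulVec v C := by
  funext C
  rw [Matrix.mulVec, Matrix.mulVec]
  show (∑ D : PathIndep K, Omat K C D * (a * v D)) = a * ∑ D : PathIndep K, Omat K C D * v D
  rw [Finset.mul_sum]
  apply Finset.sum_congr rfl
  intro D _
  ring

lemma whalf (hm : K = 3 * m + 2) (hK : 1 ≤ K) : ∀ j, j ≤ K →
    worb K m (K + j) = fun C => (-1 : ℂ) ^ (m + 1) * worb K m j (sigP hK C) := by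
  intro j
  induction j with
  | zero =>
    intro _
    rw [Nat.add_zero]
    exact wK_sig hm hK
  | succ j ih =>
    intro hj
    have hj' : j ≤ K := by omega
    rw [show K + (j + 1) = (K + j) + 1 from rfl, worb_succ, ih hj']
    have h1 : (fun C => (-1 : ℂ) ^ (m + 1) * worb K m j (sigP hK C))
        = fun C => (-1 : ℂ) ^ (m + 1) * (fun D => worb K m j (sigP hK D)) C := rfl
    rw [h1, mulVec_constmul, mulVec_sig hK (worb K m j)]
    funext C
    rw [← worb_succ]

lemma w2K (hm : K = 3 * m + 2) (hK : 1 ≤ K) : worb K m (2 * K) = worb K m 0 := by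
  rw [show 2 * K = K + K by ring, whalf hm hK K le_rfl]
  funext C
  rw [wK_sig hm hK]
  show (-1 : ℂ) ^ (m + 1) * ((-1 : ℂ) ^ (m + 1) * worb K m 0 (sigP hK (sigP hK C))) = _
  rw [sigP_invol, ← mul_assoc, ← pow_add, show m + 1 + (m + 1) = 2 * (m + 1) by ring,
      pow_mul, neg_one_sq, one_pow, one_mul]

end Half

section Evals

variable {K m : ℕ}

def Cstar (K m : ℕ) : PathIndep K :=
  ⟨RIs K m, by intro c hc d hd; rw [mem_RIs] at hc hd; omega⟩

lemma phase_E0 (s t : ℕ) :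
    (-Complex.I) ^ s * Complex.I ^ (s + t + 1) * (-Complex.I) ^ (t + 1) = 1 := by
  rw [negI_eq, ← pow_mul, ← pow_mul, ← pow_add, ← pow_add]
  rw [I_pow_reduce (3 * s + (s + t + 1) + 3 * (t + 1)) 0 (by omega), pow_zero]

lemma phase_F1 (s t : ℕ) :
    (-Complex.I) ^ s * Complex.I ^ (t + 1) * (-1 : ℂ) ^ s * Complex.I ^ (s + t + 1)
        * (-Complex.I) ^ 0 = (-1 : ℂ) ^ (s + t + 1) := by
  rw [negI_eq, negone_eq, ← pow_mul, ← pow_mul, ← pow_mul,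
      ← pow_add, ← pow_add, ← pow_add]
  rw [pow_zero, mul_one]
  rw [I_pow_reduce (3 * s + (t + 1) + 2 * s + (s + t + 1)) (2 * (s + t + 1)) (by omega)]
  rw [pow_mul, Complex.I_sq]

lemma E0 (hm : K = 3 * m + 2) (s : ℕ) (hs : s ≤ m) :
    worb K m (3 * s) (Cstar K m) = 1 := by
  rw [chain1 hm s hs]
  rw [Wv, if_pos]
  · have hc1 : (Cstar K m).1.card = m + 1 := card_RIs hm le_rfl
    rw [hc1, card_RIs hm (by omega)]
    have := phase_E0 s (m - s)
    rw [show s + (m - s) + 1 = m + 1 by omega, show (m - s) + 1 = m - s + 1 from rfl] at this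
    exact this
  · constructor
    · intro c hc
      rw [mem_RIs] at hc
      show c ∈ RIs K m
      rw [mem_RIs]
      omega
    · intro c hc
      have hcK := c.isLt
      rw [show (Cstar K m).1 = RIs K m from rfl, mem_RIs] at hc
      by_cases h : (c : ℕ) ≤ 3 * (m - s)
      · exact Finset.mem_union_left _ (mem_RIs.2 ⟨hc.1, h⟩)
      · refine Finset.mem_union_right _ (Finset.mem_union_right _
          (Finset.mem_union_right _ ?_))
        rw [mem_PIs_image hm]
        exact ⟨hc.1, by omega, by omega⟩

lemma E1 (hm : K = 3 * m + 2) (s : ℕ) (hs : s ≤ m) :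
    worb K m (3 * s + 1) (Cstar K m) = 0 := by
  rw [worb_succ, chain1 hm s hs, step1 hm (m - s) (by omega)]
  rw [Wv, if_neg]
  rintro ⟨-, h2⟩
  have h0K : 0 < K := by omega
  have h0 : (⟨0, h0K⟩ : Fin K) ∈ (Cstar K m).1 := by
    rw [show (Cstar K m).1 = RIs K m from rfl, mem_RIs]
    simp
  have := h2 h0
  simp only [Finset.mem_union, mem_AIIs, mem_PIIs, mem_PIIs_image hm (by omega : m - s ≤ m),
    Finset.notMem_empty] at this
  rcases this with h | h | h | h <;> simp at h <;> omega

lemma E2 (hm : K = 3 * m + 2) (s : ℕ) (hs : s ≤ m) :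
    worb K m (3 * s + 2) (Cstar K m) = 0 := by
  rw [show 3 * s + 2 = (3 * s + 1) + 1 from rfl, worb_succ, worb_succ, chain1 hm s hs,
      step1 hm (m - s) (by omega), step2 hm (m - s) (by omega)]
  rw [Wv, if_neg]
  rintro ⟨h1, -⟩
  have haK : 3 * (m - s) + 1 < K := by omega
  have ha : (⟨3 * (m - s) + 1, haK⟩ : Fin K) ∈ AIIs K (m - s) := by
    rw [mem_AIIs]; simp
  have := h1 ha
  rw [show (Cstar K m).1 = RIs K m from rfl, mem_RIs] at this
  simp at this

lemma sig_Cstar (hm : K = 3 * m + 2) (hK : 1 ≤ K) :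
    (sigP hK (Cstar K m)).1 = AIIs K 0 := by
  have h := congrArg (sigS hK) (sig_AIIs0 hm hK)
  rw [sigS_invol] at h
  exact h.symm

lemma F0 (hm : K = 3 * m + 2) (hK : 1 ≤ K) (s : ℕ) (hs : s ≤ m) :
    worb K m (3 * s) (sigP hK (Cstar K m)) = 0 := by
  rw [chain1 hm s hs, Wv, if_neg]
  rintro ⟨h1, -⟩
  have h0K : 0 < K := by omega
  have h0 : (⟨0, h0K⟩ : Fin K) ∈ RIs K (m - s) := by rw [mem_RIs]; simp
  have := h1 h0
  rw [sig_Cstar hm hK, mem_AIIs] at this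
  simp at this

lemma F1 (hm : K = 3 * m + 2) (hK : 1 ≤ K) (s : ℕ) (hs : s ≤ m) :
    worb K m (3 * s + 1) (sigP hK (Cstar K m)) = (-1 : ℂ) ^ (m + 1) := by
  rw [worb_succ, chain1 hm s hs, step1 hm (m - s) (by omega)]
  rw [Wv, if_pos]
  · have hc1 : (sigP hK (Cstar K m)).1.card = m + 1 := by
      rw [show (sigP hK (Cstar K m)).1 = sigS hK (Cstar K m).1 from rfl, sigS_card]
      exact card_RIs hm le_rfl
    rw [hc1, Finset.card_empty, show m - (m - s) = s by omega]
    have := phase_F1 s (m - s)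
    rw [show s + (m - s) + 1 = m + 1 by omega] at this
    exact this
  · constructor
    · exact Finset.empty_subset _
    · intro c hc
      have hcK := c.isLt
      rw [sig_Cstar hm hK, mem_AIIs] at hc
      apply Finset.mem_union_right
      by_cases h : 3 * (m - s) + 1 ≤ (c : ℕ)
      · exact Finset.mem_union_left _ (mem_AIIs.2 ⟨hc.1, h⟩)
      · refine Finset.mem_union_right _ (Finset.mem_union_left _ (mem_PIIs.2 ⟨hc.1, by omega⟩))

lemma F2 (hm : K = 3 * m + 2) (hK : 1 ≤ K) (s : ℕ) (hs : s + 1 ≤ m) :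
    worb K m (3 * s + 2) (sigP hK (Cstar K m)) = 0 := by
  rw [show 3 * s + 2 = (3 * s + 1) + 1 from rfl, worb_succ, worb_succ, chain1 hm s (by omega),
      step1 hm (m - s) (by omega), step2 hm (m - s) (by omega)]
  rw [Wv, if_neg]
  rintro ⟨-, h2⟩
  have h1K : 1 < K := by omega
  have h1 : (⟨1, h1K⟩ : Fin K) ∈ (sigP hK (Cstar K m)).1 := by
    rw [sig_Cstar hm hK, mem_AIIs]
    simp
  have := h2 h1
  simp only [Finset.image_empty, Finset.union_empty, Finset.mem_union, mem_AIIs,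
    mem_AIIIs] at this
  rcases this with h | h <;> simp at h <;> omega

lemma evalAll (hm : K = 3 * m + 2) (hK : 1 ≤ K) : ∀ j, j < 2 * K →
    worb K m j (Cstar K m) = if j % 3 = 0 then 1 else 0 := by
  intro j hj
  by_cases hjK : j < K
  · have hr : j % 3 = 0 ∨ j % 3 = 1 ∨ j % 3 = 2 := by omega
    rcases hr with h | h | h
    · rw [if_pos h]
      have := E0 hm (j / 3) (by omega)
      rwa [show 3 * (j / 3) = j by omega] at this
    · rw [if_neg (by omega)]
      have := E1 hm (j / 3) (by omega)
      rwa [show 3 * (j / 3) + 1 = j by omega] at this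
    · rw [if_neg (by omega)]
      have := E2 hm (j / 3) (by omega)
      rwa [show 3 * (j / 3) + 2 = j by omega] at this
  · have hjK' : j - K ≤ K := by omega
    have hw := whalf hm hK (j - K) hjK'
    have hj' : j = K + (j - K) := by omega
    rw [hj', congrFun (hw) (Cstar K m)]
    set j' := j - K with hj'def
    have hr : j' % 3 = 0 ∨ j' % 3 = 1 ∨ j' % 3 = 2 := by omega
    rcases hr with h | h | h
    · rw [if_neg (by omega)]
      have := F0 hm hK (j' / 3) (by omega)
      rw [show 3 * (j' / 3) = j' by omega] at this
      rw [this, mul_zero]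
    · rw [if_pos (by omega)]
      have := F1 hm hK (j' / 3) (by omega)
      rw [show 3 * (j' / 3) + 1 = j' by omega] at this
      rw [this, ← pow_add, show m + 1 + (m + 1) = 2 * (m + 1) by ring, pow_mul,
          neg_one_sq, one_pow]
    · rw [if_neg (by omega)]
      have := F2 hm hK (j' / 3) (by omega)
      rw [show 3 * (j' / 3) + 2 = j' by omega] at this
      rw [this, mul_zero]

end Evals

lemma mulVec_sumfun {K : ℕ} (n : ℕ) (f : ℕ → PathIndep K → ℂ) :
    (Omat K).mulVec (fun C => ∑ j ∈ Finset.range n, f j C)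
      = fun C => ∑ j ∈ Finset.range n, (Omat K).mulVec (f j) C := by
  funext C
  rw [Matrix.mulVec]
  show (∑ D : PathIndep K, Omat K C D * ∑ j ∈ Finset.range n, f j D) = _
  have h : ∀ D : PathIndep K, Omat K C D * ∑ j ∈ Finset.range n, f j D
      = ∑ j ∈ Finset.range n, Omat K C D * f j D := fun D => Finset.mul_sum _ _ _
  rw [Fintype.sum_congr _ _ h, Finset.sum_comm]
  rfl

theorem Omat_eigenvalues_K2' (K : ℕ) (hK : 1 ≤ K) (hK3 : K % 3 = 2)
    (ζ : ℂ) (hζ : ζ ^ (2 * K) = 1) (hζ1 : ζ ≠ -1) :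
    ∃ v : PathIndep K → ℂ, v ≠ 0 ∧ (Omat K).mulVec v = ζ • v := by
  set m : ℕ := K / 3 with hmdef
  have hm : K = 3 * m + 2 := by omega
  have hζ0 : ζ ≠ 0 := by
    intro h
    rw [h, zero_pow (by omega : 2 * K ≠ 0)] at hζ
    exact zero_ne_one hζ
  refine ⟨fun C => ∑ j ∈ Finset.range (2 * K), ζ ^ (2 * K - j) * worb K m j C, ?_, ?_⟩
  · -- nonzero
    intro hzero
    have hC := congrFun hzero (Cstar K m)
    simp only [Pi.zero_apply] at hC
    rw [Finset.sum_congr rfl (fun j hj => by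
      rw [evalAll hm hK j (Finset.mem_range.1 hj)])] at hC
    have hC2 : ∑ j ∈ Finset.range (2 * K),
        (if j % 3 = 0 then ζ ^ (2 * K - j) else 0) = 0 := by
      rw [show (∑ j ∈ Finset.range (2 * K), (if j % 3 = 0 then ζ ^ (2 * K - j) else 0))
          = ∑ j ∈ Finset.range (2 * K), ζ ^ (2 * K - j) * (if j % 3 = 0 then 1 else 0) from
        Finset.sum_congr rfl (fun j _ => by split_ifs <;> simp)]
      exact hC
    rw [Finset.sum_ite, Finset.sum_const_zero, add_zero] at hC2
    have hbij : ∑ j ∈ Finset.filter (fun j => j % 3 = 0) (Finset.range (2 * K)),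
        ζ ^ (2 * K - j) = ∑ s ∈ Finset.range (2 * m + 2), ζ ^ (2 * K - 3 * s) := by
      apply Finset.sum_bij' (i := fun j _ => j / 3) (j := fun s _ => 3 * s)
      case hi =>
        intro j hj
        simp only [Finset.mem_filter, Finset.mem_range] at hj
        simp only [Finset.mem_range]
        omega
      case hj =>
        intro s hs
        simp only [Finset.mem_range] at hs
        simp only [Finset.mem_filter, Finset.mem_range]
        omega
      case left_neg =>
        intro j hj
        simp only [Finset.mem_filter, Finset.mem_range] at hj
        omega
      case right_neg =>
        intro s hs
        omega
      case h =>
        intro j hj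
        simp only [Finset.mem_filter, Finset.mem_range] at hj
        rw [show 3 * (j / 3) = j by omega]
    rw [hbij] at hC2
    -- reflect the sum
    have hrefl := Finset.sum_range_reflect (fun u => ζ ^ (3 * u + 1)) (2 * m + 2)
    have hterm : ∀ s ∈ Finset.range (2 * m + 2),
        ζ ^ (3 * (2 * m + 2 - 1 - s) + 1) = ζ ^ (2 * K - 3 * s) := by
      intro s hs
      simp only [Finset.mem_range] at hs
      congr 1
      omega
    rw [Finset.sum_congr rfl hterm] at hrefl
    rw [hrefl] at hC2
    have hgeom : ∑ u ∈ Finset.range (2 * m + 2), ζ ^ (3 * u + 1)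
        = (∑ u ∈ Finset.range (2 * m + 2), (ζ ^ 3) ^ u) * ζ := by
      rw [Finset.sum_mul]
      apply Finset.sum_congr rfl
      intro u _
      rw [← pow_mul, ← pow_succ]
    rw [hgeom] at hC2
    rcases mul_eq_zero.1 hC2 with h | h
    · by_cases hξ : (ζ ^ 3 : ℂ) = 1
      · rw [hξ] at h
        simp only [one_pow, Finset.sum_const, Finset.card_range, nsmul_eq_mul,
          mul_one] at h
        have : ((2 * m + 2 : ℕ) : ℂ) ≠ 0 := by
          rw [Nat.cast_ne_zero]
          omega
        exact this h
      · rw [geom_sum_eq hξ] at h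
        have hnum : (ζ ^ 3) ^ (2 * m + 2) - 1 = ζ ^ 2 - 1 := by
          rw [← pow_mul]
          have : ζ ^ (3 * (2 * m + 2)) = ζ ^ (2 * K) * ζ ^ 2 := by
            rw [← pow_add]
            congr 1
            omega
          rw [this, hζ, one_mul]
        rw [hnum] at h
        have hden : (ζ ^ 3 - 1 : ℂ) ≠ 0 := sub_ne_zero.2 hξ
        have hnum0 : (ζ ^ 2 - 1 : ℂ) ≠ 0 := by
          intro h0
          have : (ζ - 1) * (ζ + 1) = 0 := by ring_nf; linear_combination h0
          rcases mul_eq_zero.1 this with h1 | h1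
          · have hζeq : ζ = 1 := by linear_combination h1
            rw [hζeq] at hξ
            simp at hξ
          · exact hζ1 (by linear_combination h1)
        exact absurd h (div_ne_zero hnum0 hden)
    · exact hζ0 h
  · -- eigen equation
    rw [mulVec_sumfun (2 * K) (fun j C => ζ ^ (2 * K - j) * worb K m j C)]
    funext C
    have hstep : ∀ j ∈ Finset.range (2 * K),
        (Omat K).mulVec (fun C => ζ ^ (2 * K - j) * worb K m j C) C
          = ζ ^ (2 * K + 1 - (j + 1)) * worb K m (j + 1) C := by
      intro j hj
      simp only [Finset.mem_range] at hj
      rw [congrFun (mulVec_constmul (ζ ^ (2 * K - j)) (worb K m j)) C, ← worb_succ]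
      congr 2
      omega
    rw [Finset.sum_congr rfl hstep]
    show _ = ζ * ∑ j ∈ Finset.range (2 * K), ζ ^ (2 * K - j) * worb K m j C
    set f : ℕ → ℂ := fun k => ζ ^ (2 * K + 1 - k) * worb K m k C with hfdef
    have hL : ∑ j ∈ Finset.range (2 * K), ζ ^ (2 * K + 1 - (j + 1)) * worb K m (j + 1) C
        = ∑ j ∈ Finset.range (2 * K), f (j + 1) := rfl
    have hR : ζ * ∑ j ∈ Finset.range (2 * K), ζ ^ (2 * K - j) * worb K m j C
        = ∑ j ∈ Finset.range (2 * K), f j := by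
      rw [Finset.mul_sum]
      apply Finset.sum_congr rfl
      intro j hj
      simp only [Finset.mem_range] at hj
      rw [hfdef]
      show ζ * (ζ ^ (2 * K - j) * worb K m j C) = ζ ^ (2 * K + 1 - j) * worb K m j C
      rw [← mul_assoc, ← pow_succ']
      congr 2
      omega
    rw [hL, hR]
    have h1 := Finset.sum_range_succ' f (2 * K)
    have h2 := Finset.sum_range_succ f (2 * K)
    have hf : f (2 * K) = f 0 := by
      rw [hfdef]
      show ζ ^ (2 * K + 1 - 2 * K) * worb K m (2 * K) C = ζ ^ (2 * K + 1 - 0) * worb K m 0 C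
      rw [congrFun (w2K hm hK) C, show 2 * K + 1 - 2 * K = 1 by omega,
          show 2 * K + 1 - 0 = 2 * K + 1 from rfl]
      have hz : ζ ^ (2 * K + 1) = ζ := by rw [pow_succ, hζ, one_mul]
      rw [hz, pow_one]
    linear_combination h2 - h1 + hf


/-- For `K ≡ 2 (mod 3)`, every `2K`-th root of unity other than `-1` is an
eigenvalue of `𝕆_K`. -/
theorem Omat_eigenvalues_K2 (K : ℕ) (hK : 1 ≤ K) (hK3 : K % 3 = 2)
    (ζ : ℂ) (hζ : ζ ^ (2 * K) = 1) (hζ1 : ζ ≠ -1) :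
    IsEigenvalue (Omat K) ζ := by
  exact Omat_eigenvalues_K2' K hK hK3 ζ hζ hζ1
end

section
/- Let M, N ≥ 1, and set m = ⌈M/5⌉ and n = ⌈N/5⌉. If (M ≡ 0 (mod 5) and N ≠ 3), or M ≡ 1 (mod 5), or N ≡ 1 or 2 (mod 5), then the alternating number of independent sets of the quadrangle 𝓖(M,N) is Z_𝓖(M,N) = 0; otherwise Z_𝓖(M,N) = (−1)^{mn}. -/
/-- The alternating number of independent sets of the subgraph of `ℤ²`
induced by the finite vertex set `V`: `Z = Σ_I (-1)^|I|` over independent sets `I ⊆ V`. -/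
def altZ (V : Finset (ℤ × ℤ)) : ℤ :=
  ∑ I ∈ V.powerset.filter (fun I => ∀ p ∈ I, ∀ q ∈ I, ¬ GridAdj p q),
    (-1 : ℤ) ^ I.card

/-- The quadrangle `𝓖(M,N)`: points `(x,y)` with `2y ≤ x ≤ 2y+M-1` and
`-2x ≤ y ≤ -2x+N-1` (cut out of a bounding box that contains all such points). -/
noncomputable def quadG (M N : ℕ) : Finset (ℤ × ℤ) :=
  ((Finset.Icc (-(2 * M + 4 * N + 2 : ℤ)) (2 * M + 4 * N + 2))
      ×ˢ (Finset.Icc (-(2 * M + 4 * N + 2 : ℤ)) (2 * M + 4 * N + 2))).filter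
    (fun p => 2 * p.2 ≤ p.1 ∧ p.1 ≤ 2 * p.2 + M - 1
      ∧ -(2 * p.1) ≤ p.2 ∧ p.2 ≤ -(2 * p.1) + N - 1)

lemma gridAdj_iff {p q : ℤ × ℤ} : GridAdj p q ↔
    ((p.1 = q.1+1 ∨ p.1 = q.1-1) ∧ p.2 = q.2) ∨ (p.1 = q.1 ∧ (p.2 = q.2+1 ∨ p.2 = q.2-1)) := by
  unfold GridAdj; simp only [Int.abs_eq_natAbs]; omega

lemma gridAdj_symm {p q : ℤ × ℤ} (h : GridAdj p q) : GridAdj q p := by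
  rw [gridAdj_iff] at *; omega

lemma gridAdj_irrefl (p : ℤ × ℤ) : ¬ GridAdj p p := by
  rw [gridAdj_iff]; omega

lemma altZ_empty : altZ ∅ = 1 := by
  rw [altZ, Finset.powerset_empty, Finset.filter_singleton]
  simp

lemma altZ_delete (V : Finset (ℤ × ℤ)) (v : ℤ × ℤ) (hv : v ∈ V) :
    altZ V = altZ (V.erase v) - altZ (V.filter (fun p => p ≠ v ∧ ¬ GridAdj p v)) := by
  unfold altZ
  rw [← Finset.sum_filter_add_sum_filter_not
    (V.powerset.filter (fun I => ∀ p ∈ I, ∀ q ∈ I, ¬ GridAdj p q)) (fun I => v ∈ I)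
    (fun I => (-1 : ℤ) ^ I.card)]
  have h2 : ((V.powerset.filter (fun I => ∀ p ∈ I, ∀ q ∈ I, ¬ GridAdj p q)).filter
      (fun I => ¬ v ∈ I)) =
      (V.erase v).powerset.filter (fun I => ∀ p ∈ I, ∀ q ∈ I, ¬ GridAdj p q) := by
    ext I
    simp only [Finset.mem_filter, Finset.mem_powerset, Finset.subset_erase]
    tauto
  have h1 : (∑ I ∈ (V.powerset.filter (fun I => ∀ p ∈ I, ∀ q ∈ I, ¬ GridAdj p q)).filter
        (fun I => v ∈ I), (-1 : ℤ) ^ I.card) =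
      -∑ J ∈ (V.filter (fun p => p ≠ v ∧ ¬ GridAdj p v)).powerset.filter
        (fun I => ∀ p ∈ I, ∀ q ∈ I, ¬ GridAdj p q), (-1 : ℤ) ^ J.card := by
    rw [← Finset.sum_neg_distrib]
    apply Finset.sum_nbij' (fun I => I.erase v) (fun J => insert v J)
    · intro I hI
      simp only [Finset.mem_filter, Finset.mem_powerset] at hI ⊢
      obtain ⟨⟨hIV, hind⟩, hvI⟩ := hI
      refine ⟨?_, ?_⟩
      · intro p hp
        rw [Finset.mem_erase] at hp
        simp only [Finset.mem_filter]
        exact ⟨hIV hp.2, hp.1, hind p hp.2 v hvI⟩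
      · intro p hp q hq
        exact hind p (Finset.mem_of_mem_erase hp) q (Finset.mem_of_mem_erase hq)
    · intro J hJ
      simp only [Finset.mem_filter, Finset.mem_powerset] at hJ ⊢
      obtain ⟨hJV, hind⟩ := hJ
      have hvJ : v ∉ J := by
        intro h
        exact ((Finset.mem_filter.mp (hJV h)).2.1) rfl
      refine ⟨⟨?_, ?_⟩, Finset.mem_insert_self v J⟩
      · intro p hp
        rcases Finset.mem_insert.mp hp with h | h
        · exact h ▸ hv
        · exact Finset.mem_of_mem_filter p (hJV h)
      · intro p hp q hq
        rcases Finset.mem_insert.mp hp with h | h <;> rcases Finset.mem_insert.mp hq with h' | h'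
        · subst h; subst h'; exact gridAdj_irrefl _
        · subst h
          intro hadj
          exact (Finset.mem_filter.mp (hJV h')).2.2 (gridAdj_symm hadj)
        · subst h'
          exact (Finset.mem_filter.mp (hJV h)).2.2
        · exact hind p h q h'
    · intro I hI
      simp only [Finset.mem_filter] at hI
      exact Finset.insert_erase hI.2
    · intro J hJ
      simp only [Finset.mem_filter, Finset.mem_powerset] at hJ
      apply Finset.erase_insert
      intro h
      exact ((Finset.mem_filter.mp (hJ.1 h)).2.1) rfl
    · intro I hI
      simp only [Finset.mem_filter] at hI
      have : I.card = (I.erase v).card + 1 := by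
        rw [Finset.card_erase_of_mem hI.2]
        have : 0 < I.card := Finset.card_pos.mpr ⟨v, hI.2⟩
        omega
      rw [this, pow_succ]
      ring
  rw [h1, h2]
  ring

lemma altZ_isolated (V : Finset (ℤ × ℤ)) (v : ℤ × ℤ) (hv : v ∈ V)
    (h : ∀ p ∈ V, ¬ GridAdj p v) : altZ V = 0 := by
  rw [altZ_delete V v hv]
  have : V.filter (fun p => p ≠ v ∧ ¬ GridAdj p v) = V.erase v := by
    ext p
    simp only [Finset.mem_filter, Finset.mem_erase]
    exact ⟨fun ⟨h1, h2, _⟩ => ⟨h2, h1⟩, fun ⟨h1, h2⟩ => ⟨h2, h1, h p h2⟩⟩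
  rw [this]; ring

lemma altZ_leaf (V : Finset (ℤ × ℤ)) (v u : ℤ × ℤ) (hv : v ∈ V) (hu : u ∈ V)
    (hadj : GridAdj u v) (huniq : ∀ p ∈ V, GridAdj p v → p = u) :
    altZ V = - altZ (V.filter (fun p => p ≠ u ∧ ¬ GridAdj p u)) := by
  have hvu : v ≠ u := by
    intro h
    exact gridAdj_irrefl v (h ▸ hadj)
  rw [altZ_delete V v hv]
  have e1 : V.filter (fun p => p ≠ v ∧ ¬ GridAdj p v) = (V.erase v).erase u := by
    ext p
    simp only [Finset.mem_filter, Finset.mem_erase]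
    constructor
    · rintro ⟨h1, h2, h3⟩
      exact ⟨fun h => h3 (h ▸ hadj), h2, h1⟩
    · rintro ⟨h1, h2, h3⟩
      exact ⟨h3, h2, fun hadj' => h1 (huniq p h3 hadj')⟩
  have hu' : u ∈ V.erase v := Finset.mem_erase.mpr ⟨fun h => hvu h.symm, hu⟩
  rw [altZ_delete (V.erase v) u hu']
  have e2 : (V.erase v).filter (fun p => p ≠ u ∧ ¬ GridAdj p u) =
      V.filter (fun p => p ≠ u ∧ ¬ GridAdj p u) := by
    ext p
    simp only [Finset.mem_filter, Finset.mem_erase]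
    constructor
    · rintro ⟨⟨_, h2⟩, h3⟩
      exact ⟨h2, h3⟩
    · rintro ⟨h1, h2, h3⟩
      refine ⟨⟨fun h => ?_, h1⟩, h2, h3⟩
      subst h
      exact h3 (gridAdj_symm hadj)
  rw [e1, e2]
  ring

lemma mem_quadG {M N : ℕ} {x y : ℤ} : (x, y) ∈ quadG M N ↔
    2 * y ≤ x ∧ x ≤ 2 * y + M - 1 ∧ -(2 * x) ≤ y ∧ y ≤ -(2 * x) + N - 1 := by
  simp only [quadG, Finset.mem_filter, Finset.mem_product, Finset.mem_Icc]
  constructor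
  · rintro ⟨_, h⟩; exact h
  · intro h; refine ⟨⟨⟨?_, ?_⟩, ?_, ?_⟩, h⟩ <;> omega

/-- Quadrangle with the staircase prefix (cells `< a` in band `b`, all bands `< b`) removed. -/
noncomputable def S (M N a b : ℕ) : Finset (ℤ × ℤ) := (quadG M N).filter (fun p =>
  5*(b:ℤ)+5 ≤ 2*p.1+p.2 ∨
  (2*p.1+p.2 = 5*(b:ℤ) ∧ 5*(a:ℤ) ≤ p.1-2*p.2) ∨
  (2*p.1+p.2 = 5*(b:ℤ)+1 ∧ 5*(a:ℤ)+3 ≤ p.1-2*p.2) ∨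
  (2*p.1+p.2 = 5*(b:ℤ)+2 ∧ 5*(a:ℤ)+1 ≤ p.1-2*p.2) ∨
  (2*p.1+p.2 = 5*(b:ℤ)+3 ∧ 5*(a:ℤ)-1 ≤ p.1-2*p.2) ∨
  (2*p.1+p.2 = 5*(b:ℤ)+4 ∧ 5*(a:ℤ)+2 ≤ p.1-2*p.2))

lemma mem_S {M N a b : ℕ} {x y : ℤ} : (x, y) ∈ S M N a b ↔
    (2 * y ≤ x ∧ x ≤ 2 * y + M - 1 ∧ -(2 * x) ≤ y ∧ y ≤ -(2 * x) + N - 1) ∧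
    (5*(b:ℤ)+5 ≤ 2*x+y ∨
      (2*x+y = 5*(b:ℤ) ∧ 5*(a:ℤ) ≤ x-2*y) ∨
      (2*x+y = 5*(b:ℤ)+1 ∧ 5*(a:ℤ)+3 ≤ x-2*y) ∨
      (2*x+y = 5*(b:ℤ)+2 ∧ 5*(a:ℤ)+1 ≤ x-2*y) ∨
      (2*x+y = 5*(b:ℤ)+3 ∧ 5*(a:ℤ)-1 ≤ x-2*y) ∨
      (2*x+y = 5*(b:ℤ)+4 ∧ 5*(a:ℤ)+2 ≤ x-2*y)) := by
  rw [S, Finset.mem_filter, mem_quadG]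

lemma S_zero (M N : ℕ) : S M N 0 0 = quadG M N := by
  ext ⟨x, y⟩
  rw [mem_S, mem_quadG]
  omega

lemma S_empty (M N a b : ℕ) (h : N ≤ 5*b) : S M N a b = ∅ := by
  ext ⟨x, y⟩
  rw [mem_S]
  simp only [Finset.notMem_empty, iff_false]
  omega

lemma S_trans (M N a b : ℕ) (h1 : M ≤ 5*a) (h2 : M+1 ≤ 5*a ∨ N ≤ 5*b+3) :
    S M N a b = S M N 0 (b+1) := by
  ext ⟨x, y⟩
  rw [mem_S, mem_S]
  push_cast
  omega


set_option maxHeartbeats 1000000 in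
lemma S_step_filter (M N a b : ℕ) (h1 : 5*a+2 ≤ M) (h2 : 5*b+3 ≤ N) :
    (S M N a b).filter
      (fun p => p ≠ ((a:ℤ)+2*b+1, (b:ℤ)-2*a) ∧ ¬ GridAdj p ((a:ℤ)+2*b+1, (b:ℤ)-2*a)) =
    S M N (a+1) b := by
  ext ⟨x, y⟩
  simp only [Finset.mem_filter, mem_S, gridAdj_iff, ne_eq, Prod.mk.injEq, not_and]
  push_cast
  omega

lemma altZ_S_step (M N a b : ℕ) (h1 : 5*a+2 ≤ M) (h2 : 5*b+3 ≤ N) :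
    altZ (S M N a b) = - altZ (S M N (a+1) b) := by
  have hL : ((a:ℤ)+2*b, (b:ℤ)-2*a) ∈ S M N a b := by
    rw [mem_S]; push_cast; omega
  have hH : ((a:ℤ)+2*b+1, (b:ℤ)-2*a) ∈ S M N a b := by
    rw [mem_S]; push_cast; omega
  have hadj : GridAdj ((a:ℤ)+2*b+1, (b:ℤ)-2*a) ((a:ℤ)+2*b, (b:ℤ)-2*a) := by
    rw [gridAdj_iff]; simp
  have huniq : ∀ p ∈ S M N a b, GridAdj p ((a:ℤ)+2*b, (b:ℤ)-2*a) →
      p = ((a:ℤ)+2*b+1, (b:ℤ)-2*a) := by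
    rintro ⟨x, y⟩ hp hadj'
    rw [mem_S] at hp
    rw [gridAdj_iff] at hadj'
    simp only at hadj'
    rw [Prod.mk.injEq]
    push_cast at hp ⊢
    omega
  rw [altZ_leaf (S M N a b) _ _ hL hH hadj huniq, S_step_filter M N a b h1 h2]

lemma altZ_S_iso1 (M N a b : ℕ) (h1 : 5*a+1 ≤ M) (h2 : 5*b+1 ≤ N)
    (h3 : M ≤ 5*a+1 ∨ N ≤ 5*b+2) : altZ (S M N a b) = 0 := by
  have hL : ((a:ℤ)+2*b, (b:ℤ)-2*a) ∈ S M N a b := by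
    rw [mem_S]; push_cast; omega
  apply altZ_isolated _ _ hL
  rintro ⟨x, y⟩ hp hadj'
  rw [mem_S] at hp
  rw [gridAdj_iff] at hadj'
  simp only at hadj'
  push_cast at hp
  omega

lemma altZ_S_iso2 (M N a b : ℕ) (h1 : M = 5*a) (hM : 1 ≤ M) (h2 : 5*b+4 ≤ N) :
    altZ (S M N a b) = 0 := by
  have hR : ((a:ℤ)+2*b+1, (b:ℤ)-2*a+1) ∈ S M N a b := by
    rw [mem_S]; push_cast; omega
  apply altZ_isolated _ _ hR
  rintro ⟨x, y⟩ hp hadj'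
  rw [mem_S] at hp
  rw [gridAdj_iff] at hadj'
  simp only at hadj'
  push_cast at hp
  omega

lemma stepsEnd (M N j a : ℕ) (hM : 1 ≤ M) (hMa : M = 5*a) :
    altZ (S M N a j) =
      if M % 5 = 1 then 0
      else if M % 5 = 0 ∧ 5*j+4 ≤ N then 0
      else (-1 : ℤ)^((M+4)/5 - a) * altZ (S M N 0 (j+1)) := by
  by_cases h : 5*j+4 ≤ N
  · rw [altZ_S_iso2 M N a j hMa hM h, if_neg (by omega), if_pos ⟨by omega, h⟩]
  · rw [S_trans M N a j (by omega) (by omega), if_neg (by omega),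
      if_neg (fun hh => h hh.2)]
    have h0 : (M+4)/5 - a = 0 := by omega
    rw [h0, pow_zero, one_mul]

lemma stepsTo (M N j : ℕ) (hM : 1 ≤ M) (h3 : 5*j+3 ≤ N) :
    ∀ k a, 5*a ≤ M → M ≤ 5*a + 5*k →
    altZ (S M N a j) =
      if M % 5 = 1 then 0
      else if M % 5 = 0 ∧ 5*j+4 ≤ N then 0
      else (-1 : ℤ)^((M+4)/5 - a) * altZ (S M N 0 (j+1)) := by
  intro k
  induction k with
  | zero =>
    intro a ha1 ha2
    exact stepsEnd M N j a hM (by omega)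
  | succ k IH =>
    intro a ha1 ha2
    by_cases hc : 5*a+2 ≤ M
    · rw [altZ_S_step M N a j hc h3]
      by_cases hc2 : 5*(a+1) ≤ M
      · rw [IH (a+1) hc2 (by omega)]
        by_cases hM1 : M % 5 = 1
        · rw [if_pos hM1, if_pos hM1]; ring
        · rw [if_neg hM1, if_neg hM1]
          by_cases hM0 : M % 5 = 0 ∧ 5*j+4 ≤ N
          · rw [if_pos hM0, if_pos hM0]; ring
          · rw [if_neg hM0, if_neg hM0]
            have h5 : (M+4)/5 - a = ((M+4)/5 - (a+1)) + 1 := by omega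
            rw [h5, pow_succ]; ring
      · have he : S M N (a+1) j = S M N 0 (j+1) :=
          S_trans M N (a+1) j (by omega) (by omega)
        rw [he, if_neg (by omega), if_neg (by omega)]
        have h5 : (M+4)/5 - a = 1 := by omega
        rw [h5, pow_one]; ring
    · by_cases hc2 : M = 5*a+1
      · rw [altZ_S_iso1 M N a j (by omega) (by omega) (by omega), if_pos (by omega)]
      · exact stepsEnd M N j a hM (by omega)

lemma bandsTo (M N : ℕ) (hM : 1 ≤ M) :
    ∀ k j, N ≤ 5*j + 5*k →
    (N ≤ 5*j → altZ (S M N 0 j) = 1) ∧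
    (5*j < N →
      ((M % 5 = 1 ∨ N % 5 = 1 ∨ N % 5 = 2 ∨ (M % 5 = 0 ∧ 5*j+4 ≤ N)) →
        altZ (S M N 0 j) = 0) ∧
      (¬(M % 5 = 1 ∨ N % 5 = 1 ∨ N % 5 = 2 ∨ (M % 5 = 0 ∧ 5*j+4 ≤ N)) →
        altZ (S M N 0 j) = (-1 : ℤ)^(((M+4)/5) * ((N+4)/5 - j)))) := by
  intro k
  induction k with
  | zero =>
    intro j hk
    refine ⟨fun h => ?_, fun h => absurd h (by omega)⟩
    rw [S_empty M N 0 j h, altZ_empty]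
  | succ k IH =>
    intro j hk
    refine ⟨fun h => ?_, fun hj => ?_⟩
    · rw [S_empty M N 0 j h, altZ_empty]
    · by_cases hN2 : N ≤ 5*j+2
      · have h0 : altZ (S M N 0 j) = 0 :=
          altZ_S_iso1 M N 0 j (by omega) (by omega) (by omega)
        exact ⟨fun _ => h0, fun hc => (hc (by omega)).elim⟩
      · have h3 : 5*j+3 ≤ N := by omega
        have hst := stepsTo M N j hM h3 M 0 (by omega) (by omega)
        have IH' := IH (j+1) (by omega)
        by_cases hM1 : M % 5 = 1
        · rw [hst, if_pos hM1]
          exact ⟨fun _ => rfl, fun hc => absurd (Or.inl hM1) hc⟩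
        · by_cases hM0 : M % 5 = 0 ∧ 5*j+4 ≤ N
          · rw [hst, if_neg hM1, if_pos hM0]
            exact ⟨fun _ => rfl, fun hc => absurd (Or.inr (Or.inr (Or.inr hM0))) hc⟩
          · rw [hst, if_neg hM1, if_neg hM0]
            by_cases hend : N ≤ 5*(j+1)
            · have h1 : altZ (S M N 0 (j+1)) = 1 := IH'.1 (by omega)
              rw [h1]
              constructor
              · intro hc; exfalso; omega
              · intro _
                have hq : (N+4)/5 - j = 1 := by omega
                rw [hq, mul_one, Nat.sub_zero, mul_one]
            · obtain ⟨IH1, IH2⟩ := IH'.2 (by omega)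
              constructor
              · intro hc
                have h0 : altZ (S M N 0 (j+1)) = 0 := IH1 (by omega)
                rw [h0, mul_zero]
              · intro hc
                have hne : ¬(M % 5 = 1 ∨ N % 5 = 1 ∨ N % 5 = 2 ∨
                    (M % 5 = 0 ∧ 5*(j+1)+4 ≤ N)) := by omega
                rw [IH2 hne]
                have hq : (N+4)/5 - j = ((N+4)/5 - (j+1)) + 1 := by omega
                rw [hq, Nat.sub_zero, Nat.mul_succ, pow_add]
                ring


/-- If `M ≡ 0 (mod 5)` and `N ≠ 3`, or `M ≡ 1 (mod 5)`, or `N ≡ 1, 2 (mod 5)`, then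
`Z_𝓖(M,N) = 0`; otherwise `Z_𝓖(M,N) = (-1)^(mn)` with `m = ⌈M/5⌉`, `n = ⌈N/5⌉`. -/
theorem altZ_quadG (M N : ℕ) (hM : 1 ≤ M) (hN : 1 ≤ N) :
    (((M % 5 = 0 ∧ N ≠ 3) ∨ M % 5 = 1 ∨ N % 5 = 1 ∨ N % 5 = 2) →
      altZ (quadG M N) = 0) ∧
    (¬ ((M % 5 = 0 ∧ N ≠ 3) ∨ M % 5 = 1 ∨ N % 5 = 1 ∨ N % 5 = 2) →
      altZ (quadG M N) = (-1) ^ (((M + 4) / 5) * ((N + 4) / 5))) := by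
  have hb := bandsTo M N hM N 0 (by omega)
  rw [S_zero] at hb
  obtain ⟨hz, hnz⟩ := hb.2 (by omega)
  constructor
  · intro hcond
    exact hz (by omega)
  · intro hcond
    rw [hnz (by omega), Nat.sub_zero]
end

section
/- Let V be a finite set and let Δ = Δ₁ ⊎ Δ₂ be a finite collection of subsets of V, ordered by inclusion, partitioned into two disjoint subcollections Δ₁ and Δ₂ such that for all σ ∈ Δ₁ and τ ∈ Δ₂ one has τ ⊄ σ (τ is not a subset of σ). If M₁ is an acyclic matching on Δ₁ and M₂ is an acyclic matching on Δ₂, then M₁ ∪ M₂ is an acyclic matching on Δ. -/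
variable {V : Type*} [DecidableEq V]

/-- `M` is a matching on the collection `Δ` of subsets of `V` (ordered by inclusion):
a set of pairs `(σ, τ)` of elements of `Δ` with `σ ⊆ τ` and `|τ| = |σ| + 1`, such
that every element of `Δ` occurs in at most one pair. -/
def IsMatching (Δ : Finset (Finset V)) (M : Finset (Finset V × Finset V)) : Prop :=
  (∀ p ∈ M, p.1 ∈ Δ ∧ p.2 ∈ Δ ∧ p.1 ⊆ p.2 ∧ p.2.card = p.1.card + 1) ∧
  (∀ p ∈ M, ∀ q ∈ M, p ≠ q →
    p.1 ≠ q.1 ∧ p.1 ≠ q.2 ∧ p.2 ≠ q.1 ∧ p.2 ≠ q.2)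

/-- One step of the directed graph on `Δ` associated with the matching `M`: an edge
from `τ` down to `σ` for every covering pair `σ ⊆ τ`, `|τ| = |σ| + 1` in `Δ` that is
not in `M`, and an edge from `σ` up to `τ` for every pair `(σ, τ) ∈ M`. -/
def MatchStep (Δ : Finset (Finset V)) (M : Finset (Finset V × Finset V))
    (x y : Finset V) : Prop :=
  x ∈ Δ ∧ y ∈ Δ ∧
    ((y ⊆ x ∧ x.card = y.card + 1 ∧ (y, x) ∉ M) ∨ (x, y) ∈ M)

/-- A matching `M` on `Δ` is acyclic (Morse) if the associated directed graph
contains no directed cycle. -/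
def IsAcyclicMatching (Δ : Finset (Finset V)) (M : Finset (Finset V × Finset V)) :
    Prop :=
  IsMatching Δ M ∧ ∀ x : Finset V, ¬ Relation.TransGen (MatchStep Δ M) x x

/-- If `Δ = Δ₁ ⊎ Δ₂` with `τ ⊄ σ` for all `σ ∈ Δ₁`, `τ ∈ Δ₂`, then the union of
acyclic matchings on `Δ₁` and on `Δ₂` is an acyclic matching on `Δ`. -/
theorem union_acyclicMatching [Fintype V]
    (Δ Δ₁ Δ₂ : Finset (Finset V)) (hunion : Δ = Δ₁ ∪ Δ₂) (hdisj : Disjoint Δ₁ Δ₂)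
    (hns : ∀ σ ∈ Δ₁, ∀ τ ∈ Δ₂, ¬ τ ⊆ σ)
    (M₁ M₂ : Finset (Finset V × Finset V))
    (h₁ : IsAcyclicMatching Δ₁ M₁) (h₂ : IsAcyclicMatching Δ₂ M₂) :
    IsAcyclicMatching Δ (M₁ ∪ M₂) := by
  obtain ⟨⟨hm₁, hd₁⟩, hc₁⟩ := h₁
  obtain ⟨⟨hm₂, hd₂⟩, hc₂⟩ := h₂
  have hdis : ∀ a, a ∈ Δ₁ → a ∈ Δ₂ → False := fun a ha hb =>
    (Finset.disjoint_left.mp hdisj ha) hb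
  -- forward step lemma: steps out of Δ₁ stay in Δ₁ and are Δ₁-steps
  have fwd : ∀ x y, MatchStep Δ (M₁ ∪ M₂) x y → x ∈ Δ₁ →
      y ∈ Δ₁ ∧ MatchStep Δ₁ M₁ x y := by
    intro x y ⟨hx, hy, h⟩ hx1
    rcases h with ⟨hsub, hcard, hnm⟩ | hm
    · have hy1 : y ∈ Δ₁ := by
        rcases Finset.mem_union.mp (hunion ▸ hy) with h | h
        · exact h
        · exact absurd hsub (hns x hx1 y h)
      exact ⟨hy1, hx1, hy1, Or.inl ⟨hsub, hcard,
        fun h => hnm (Finset.mem_union_left _ h)⟩⟩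
    · rcases Finset.mem_union.mp hm with hm | hm
      · exact ⟨(hm₁ _ hm).2.1, hx1, (hm₁ _ hm).2.1, Or.inr hm⟩
      · exact absurd hx1 (fun h => hdis x h (hm₂ _ hm).1)
  -- backward step lemma: steps into Δ₂ come from Δ₂ and are Δ₂-steps
  have bwd : ∀ x y, MatchStep Δ (M₁ ∪ M₂) x y → y ∈ Δ₂ →
      x ∈ Δ₂ ∧ MatchStep Δ₂ M₂ x y := by
    intro x y ⟨hx, hy, h⟩ hy2
    rcases h with ⟨hsub, hcard, hnm⟩ | hm
    · have hx2 : x ∈ Δ₂ := by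
        rcases Finset.mem_union.mp (hunion ▸ hx) with h | h
        · exact absurd hsub (hns x h y hy2)
        · exact h
      exact ⟨hx2, hx2, hy2, Or.inl ⟨hsub, hcard,
        fun h => hnm (Finset.mem_union_right _ h)⟩⟩
    · rcases Finset.mem_union.mp hm with hm | hm
      · exact absurd hy2 (fun h => hdis y (hm₁ _ hm).2.1 h)
      · exact ⟨(hm₂ _ hm).1, (hm₂ _ hm).1, (hm₂ _ hm).2.1, Or.inr hm⟩
  constructor
  · constructor
    · intro p hp
      rcases Finset.mem_union.mp hp with hp | hp
      · obtain ⟨a, b, c, d⟩ := hm₁ p hp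
        exact ⟨hunion ▸ Finset.mem_union_left _ a, hunion ▸ Finset.mem_union_left _ b, c, d⟩
      · obtain ⟨a, b, c, d⟩ := hm₂ p hp
        exact ⟨hunion ▸ Finset.mem_union_right _ a, hunion ▸ Finset.mem_union_right _ b, c, d⟩
    · intro p hp q hq hpq
      rcases Finset.mem_union.mp hp with hp | hp <;>
        rcases Finset.mem_union.mp hq with hq | hq
      · exact hd₁ p hp q hq hpq
      · obtain ⟨a1, a2, -, -⟩ := hm₁ p hp
        obtain ⟨b1, b2, -, -⟩ := hm₂ q hq
        exact ⟨fun h => hdis _ (h ▸ a1) b1, fun h => hdis _ (h ▸ a1) b2,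
          fun h => hdis _ (h ▸ a2) b1, fun h => hdis _ (h ▸ a2) b2⟩
      · obtain ⟨a1, a2, -, -⟩ := hm₂ p hp
        obtain ⟨b1, b2, -, -⟩ := hm₁ q hq
        exact ⟨fun h => hdis _ b1 (h ▸ a1), fun h => hdis _ b2 (h ▸ a1),
          fun h => hdis _ b1 (h ▸ a2), fun h => hdis _ b2 (h ▸ a2)⟩
      · exact hd₂ p hp q hq hpq
  · intro x hcyc
    have hx : x ∈ Δ := by
      rcases hcyc with h | ⟨_, h⟩
      · exact h.1
      · exact h.2.1
    rcases Finset.mem_union.mp (hunion ▸ hx) with hx1 | hx2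
    · -- path starting in Δ₁ stays in Δ₁
      have key : ∀ y, Relation.TransGen (MatchStep Δ (M₁ ∪ M₂)) x y →
          y ∈ Δ₁ ∧ Relation.TransGen (MatchStep Δ₁ M₁) x y := by
        intro y hy
        induction hy with
        | single h => exact ⟨(fwd _ _ h hx1).1, Relation.TransGen.single (fwd _ _ h hx1).2⟩
        | tail _ h ih =>
            exact ⟨(fwd _ _ h ih.1).1, ih.2.tail (fwd _ _ h ih.1).2⟩
      exact hc₁ x (key x hcyc).2
    · -- path ending in Δ₂ stays in Δ₂
      have key : ∀ y, Relation.TransGen (MatchStep Δ (M₁ ∪ M₂)) y x →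
          y ∈ Δ₂ ∧ Relation.TransGen (MatchStep Δ₂ M₂) y x := by
        intro y hy
        induction hy using Relation.TransGen.head_induction_on with
        | single h => exact ⟨(bwd _ _ h hx2).1, Relation.TransGen.single (bwd _ _ h hx2).2⟩
        | head h _ ih =>
            exact ⟨(bwd _ _ h ih.1).1, (Relation.TransGen.single (bwd _ _ h ih.1).2).trans ih.2⟩
      exact hc₂ x (key x hcyc).2
end
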